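/- arXiv:2103.00724 — 7 statements merged into one kernel-verified Lean document; each statement's English description precedes it below -/
import Mathlib

section
/- Let H be a graph with δ(H) ≥ 1 having a d-sequence {H = ℋ₁,…,ℋ_s} with partial sums z_i(H) = Σ_{j=2}^i (m_j + 1 − d_j), and set Z = min{z_i(H) : 2 ≤ i ≤ s}; suppose Z ≤ 0. Let G = H + K_{1,k} be the disjoint union of H with a star K_{1,k}. If k ≥ d_H − Z, then str(G) = |V(G)| + 1. -/
/-!
Every vertex of `G = H + K_{1,k}` has a neighbour, so the vertex numbered `p = |V(G)|` forces
`str(G) ≥ p + 1`. For the converse the d-sequence is read as a numbering. The centre of the star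
gets label `1` and its leaves the `k` largest labels. Then, at step `i`, the neighbours of the
deleted vertex `uᵢ` receive the next small labels, while the isolated vertices of `𝒢ᵢ` and then
`uᵢ` receive the next large labels, counting downwards; the terminal clique is one more such
step, around any of its vertices. The large labels form an independent set, and an edge from a
small label handed out at step `t` to a large label has sum at most `p + 1` as long as
`d₁ + ⋯ + d_t ≤ k + m₁ + ⋯ + m_t + t - 1`, which follows from `z_t ≥ Z ≥ d_H - k`.
-/

open Finset

/-- A numbering of a graph of order `Fintype.card V` is a bijection onto `{1, …, card V}`. -/
def IsNumbering {V : Type*} [Fintype V] (f : V → ℕ) : Prop :=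
  Set.BijOn f Set.univ (Set.Icc 1 (Fintype.card V))

/-- The strength `str_f` of a numbering `f` of `G`: the maximum of `f u + f v` over edges. -/
noncomputable def strOf {V : Type*} [Fintype V] (G : SimpleGraph V) (f : V → ℕ) : ℕ :=
  sSup {n | ∃ u v, G.Adj u v ∧ n = f u + f v}

/-- The strength of a graph: the minimum over all numberings `f` of `str_f`. -/
noncomputable def strength {V : Type*} [Fintype V] (G : SimpleGraph V) : ℕ :=
  sInf {n | ∃ f : V → ℕ, IsNumbering f ∧ strOf G f = n}

open scoped Classical

/-- Degree of `v` inside the induced subgraph on `S`. -/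
noncomputable def degIn {V : Type*} (G : SimpleGraph V) (S : Finset V) (v : V) : ℕ :=
  (S.filter fun w => G.Adj v w).card

/-- The isolated vertices of the induced subgraph on `S`. -/
noncomputable def isolSet {V : Type*} (G : SimpleGraph V) (S : Finset V) : Finset V :=
  S.filter fun v => ∀ w ∈ S, ¬ G.Adj v w

/-- The non-isolated part of the induced subgraph on `S`. -/
noncomputable def core {V : Type*} (G : SimpleGraph V) (S : Finset V) : Finset V :=
  S \ isolSet G S

/-- The induced subgraph on `S` is terminal iff it is of the form `mK₁` with `m ≥ 1`, or
`mK₁ + K_r` with `m ≥ 0`, `r ≥ 2`. -/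
def Terminal {V : Type*} (G : SimpleGraph V) (S : Finset V) : Prop :=
  (core G S = ∅ ∧ S.Nonempty) ∨
    (2 ≤ (core G S).card ∧ ∀ v ∈ core G S, ∀ w ∈ core G S, v ≠ w → G.Adj v w)

/-- A d-sequence `𝒢₁, …, 𝒢ₛ` of `G`: `𝒢ᵢ` is the induced subgraph of `G` on `S i`
(so `𝒢ᵢ = mᵢK₁ + Gᵢ` where `Gᵢ` is induced on `core G (S i)`), `𝒢₁ = G`, and as long as
`𝒢ᵢ` is not terminal, `𝒢_{i+1}` is obtained from `Gᵢ` by deleting the chosen vertex `u i`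
together with all of its neighbors. -/
structure DSeq {V : Type*} [Fintype V] (G : SimpleGraph V) where
  s : ℕ
  hs : 1 ≤ s
  S : ℕ → Finset V
  u : ℕ → V
  first : S 1 = Finset.univ
  mem_u : ∀ i, 1 ≤ i → i < s → u i ∈ core G (S i)
  not_terminal : ∀ i, 1 ≤ i → i < s → ¬ Terminal G (S i)
  step : ∀ i, 1 ≤ i → i < s →
    S (i + 1) = (core G (S i)).filter fun w => w ≠ u i ∧ ¬ G.Adj (u i) w
  terminal : Terminal G (S s)

namespace DSeq

variable {V : Type*} [Fintype V] {G : SimpleGraph V}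

/-- `mᵢ`, the number of isolated vertices of `𝒢ᵢ`. -/
noncomputable def m (D : DSeq G) (i : ℕ) : ℕ := (isolSet G (D.S i)).card

/-- `dᵢ`, the degree in `Gᵢ` of the deleted vertex `u i` (for `i < s`); at the terminal
index it is the minimum degree of `Gₛ` (so `0` if `𝒢ₛ = mₛK₁`, and `r - 1` if `Gₛ = K_r`). -/
noncomputable def d (D : DSeq G) (i : ℕ) : ℕ :=
  if i < D.s then degIn G (D.S i) (D.u i)
  else if h : (core G (D.S i)).Nonempty then (core G (D.S i)).inf' h (degIn G (D.S i)) else 0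

/-- The partial sums `z_i = Σ_{j=2}^i (m_j + 1 - d_j)`. -/
noncomputable def z (D : DSeq G) (i : ℕ) : ℤ :=
  ∑ j ∈ Finset.Icc 2 i, ((D.m j : ℤ) + 1 - (D.d j : ℤ))

/-- A δ-sequence is a d-sequence in which every chosen vertex has minimum degree in `Gᵢ`. -/
def IsDeltaSeq (D : DSeq G) : Prop :=
  ∀ i, 1 ≤ i → i < D.s → ∀ w ∈ core G (D.S i), degIn G (D.S i) (D.u i) ≤ degIn G (D.S i) w

end DSeq

/-- The star `K_{1,k}`: its centre (`none`) is joined to each of the `k` leaves. -/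
def starGraph (k : ℕ) : SimpleGraph (Option (Fin k)) where
  Adj x y :=
    match x, y with
    | none, none => False
    | none, some _ => True
    | some _, none => True
    | some _, some _ => False
  symm := by
    constructor
    rintro (_ | a) (_ | b) h
    · exact h
    · trivial
    · trivial
    · exact h
  loopless := by
    constructor
    rintro (_ | a) h <;> exact h

namespace List

theorem idxOf_map_of_injective {β γ : Type*} [DecidableEq β] [DecidableEq γ] {f : β → γ}
    (hf : Function.Injective f) (l : List β) (x : β) :
    (l.map f).idxOf (f x) = l.idxOf x := by
  induction l with
  | nil => rfl
  | cons y l ih => by_cases h : y = x <;> simp [hf.eq_iff, h, ih]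

section FlatMapRange

variable {β : Type*} (B : ℕ → List β)

theorem flatMap_range'_one_succ (n : ℕ) :
    (range' 1 (n + 1)).flatMap B = (range' 1 n).flatMap B ++ B (n + 1) := by
  rw [range'_1_concat, flatMap_append, Nat.add_comm]
  simp

theorem length_flatMap_range'_one (n : ℕ) :
    ((range' 1 n).flatMap B).length = ∑ i ∈ Finset.Icc 1 n, (B i).length := by
  induction n with
  | zero => simp
  | succ n ih =>
    rw [flatMap_range'_one_succ, length_append, ih, Finset.sum_Icc_succ_top (by omega)]

theorem flatMap_range'_one_prefix {m n : ℕ} (h : m ≤ n) :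
    (range' 1 m).flatMap B <+: (range' 1 n).flatMap B := by
  induction n, h using Nat.le_induction with
  | base => exact prefix_refl _
  | succ n _ ih => exact ih.trans (flatMap_range'_one_succ B n ▸ prefix_append _ _)

variable {B} [DecidableEq β]

theorem idxOf_flatMap_range'_one_lt {t n : ℕ} (ht : 1 ≤ t) (htn : t ≤ n) {x : β}
    (hx : x ∈ B t) :
    ((range' 1 n).flatMap B).idxOf x < ∑ i ∈ Finset.Icc 1 t, (B i).length := by
  obtain ⟨r, hr⟩ := flatMap_range'_one_prefix B htn
  have hmem : x ∈ (range' 1 t).flatMap B := mem_flatMap.mpr ⟨t, by simp; omega, hx⟩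
  rw [← hr, idxOf_append_of_mem hmem, ← length_flatMap_range'_one]
  exact idxOf_lt_length_iff.mpr hmem

theorem sum_add_idxOf_le_idxOf_flatMap_range'_one {j n : ℕ} (hjn : j + 1 ≤ n) {x : β}
    (hx : x ∉ (range' 1 j).flatMap B) :
    ∑ i ∈ Finset.Icc 1 j, (B i).length + (B (j + 1)).idxOf x
      ≤ ((range' 1 n).flatMap B).idxOf x := by
  have h := (flatMap_range'_one_prefix B hjn).idxOf_le x
  rw [flatMap_range'_one_succ, idxOf_append_of_notMem hx, length_flatMap_range'_one] at h
  exact h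

end FlatMapRange

theorem nodup_of_forall_mem_of_length_le {V : Type*} [Fintype V] {l : List V}
    (hmem : ∀ v, v ∈ l) (hlen : l.length ≤ Fintype.card V) : l.Nodup :=
  ((subperm_of_subset (Finset.nodup_toList _) fun v _ => hmem v).perm_of_length_le
    (by rwa [Finset.length_toList, Finset.card_univ])).nodup (Finset.nodup_toList _)

end List

section Strength

variable {V : Type*} [Fintype V] {G : SimpleGraph V} {f : V → ℕ}

theorem strOf_le {n : ℕ} (h : ∀ u v, G.Adj u v → f u + f v ≤ n) : strOf G f ≤ n :=
  csSup_le' fun _ ⟨u, v, huv, he⟩ => he ▸ h u v huv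

theorem card_add_one_le_strOf [Nonempty V] (hG : ∀ v, ∃ w, G.Adj v w) (hf : IsNumbering f) :
    Fintype.card V + 1 ≤ strOf G f := by
  obtain ⟨v, -, hv⟩ := hf.2.2 (Set.mem_Icc.mpr ⟨Fintype.card_pos, le_rfl⟩)
  obtain ⟨w, hvw⟩ := hG v
  have hw := (hf.1 (Set.mem_univ w)).1
  have hbdd : BddAbove {n | ∃ u v, G.Adj u v ∧ n = f u + f v} :=
    ((Set.finite_range fun x : V × V => f x.1 + f x.2).subset <| by
      rintro _ ⟨u, v, -, rfl⟩
      exact ⟨(u, v), rfl⟩).bddAbove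
  calc Fintype.card V + 1 ≤ f v + f w := by omega
    _ ≤ strOf G f := le_csSup hbdd ⟨v, w, hvw, rfl⟩

theorem strength_eq_card_add_one [Nonempty V] (hG : ∀ v, ∃ w, G.Adj v w) (hf : IsNumbering f)
    (hle : ∀ u v, G.Adj u v → f u + f v ≤ Fintype.card V + 1) :
    strength G = Fintype.card V + 1 :=
  IsLeast.csInf_eq ⟨⟨f, hf, le_antisymm (strOf_le hle) (card_add_one_le_strOf hG hf)⟩,
    fun _ ⟨_, hg, he⟩ => he ▸ card_add_one_le_strOf hG hg⟩

end Strength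

section Split

variable {V : Type*} [Fintype V] [DecidableEq V]

/-- The lists `L` and `Hi` encode the numbering `splitNumbering L Hi`: the vertices of `L` get
`1, 2, …` in this order and those of `Hi` get `card V, card V - 1, …`. The slack `c` is the
number of high vertices that may still be put in front of `Hi` (see `IsLowHighSplit.sumStar`). -/
structure IsLowHighSplit (G : SimpleGraph V) (c : ℕ) (L Hi : List V) : Prop where
  nodup : (L ++ Hi).Nodup
  mem : ∀ v, v ∈ L ++ Hi
  high_indep : ∀ a ∈ Hi, ∀ b ∈ Hi, ¬ G.Adj a b
  idxOf_le : ∀ a ∈ L, ∀ b ∈ Hi, G.Adj a b → L.idxOf a ≤ c + Hi.idxOf b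
  length_le : L.length ≤ c + Hi.length + 2

noncomputable def splitNumbering (L Hi : List V) (v : V) : ℕ :=
  if v ∈ L then L.idxOf v + 1 else Fintype.card V - Hi.idxOf v

namespace IsLowHighSplit

variable {G : SimpleGraph V} {c : ℕ} {L Hi : List V}

theorem length_add (h : IsLowHighSplit G c L Hi) : L.length + Hi.length = Fintype.card V := by
  rw [← List.length_append, ← Fintype.card_fin (L ++ Hi).length]
  exact Fintype.card_congr (h.nodup.getEquivOfForallMemList _ h.mem)

theorem splitNumbering_of_mem_low {v : V} (hv : v ∈ L) :
    splitNumbering L Hi v = L.idxOf v + 1 :=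
  if_pos hv

theorem splitNumbering_of_mem_high (h : IsLowHighSplit G c L Hi) {v : V} (hv : v ∈ Hi) :
    splitNumbering L Hi v = Fintype.card V - Hi.idxOf v :=
  if_neg fun hL => List.disjoint_of_nodup_append h.nodup hL hv

theorem splitNumbering_cases (h : IsLowHighSplit G c L Hi) (v : V) :
    (v ∈ L ∧ splitNumbering L Hi v = L.idxOf v + 1 ∧ L.idxOf v < L.length) ∨
      (v ∈ Hi ∧ splitNumbering L Hi v = Fintype.card V - Hi.idxOf v ∧
        Hi.idxOf v < Hi.length) := by
  rcases List.mem_append.mp (h.mem v) with hv | hv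
  · exact .inl ⟨hv, splitNumbering_of_mem_low hv, List.idxOf_lt_length_iff.mpr hv⟩
  · exact .inr ⟨hv, h.splitNumbering_of_mem_high hv, List.idxOf_lt_length_iff.mpr hv⟩

theorem isNumbering (h : IsLowHighSplit G c L Hi) : IsNumbering (splitNumbering L Hi) := by
  have hlen := h.length_add
  have hmaps : Set.MapsTo (splitNumbering L Hi) Set.univ (Set.Icc 1 (Fintype.card V)) := by
    intro v _
    rcases h.splitNumbering_cases v with ⟨-, hf, hi⟩ | ⟨-, hf, hi⟩ <;>
      exact Set.mem_Icc.mpr ⟨by omega, by omega⟩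
  have hinj : Set.InjOn (splitNumbering L Hi) Set.univ := by
    intro x _ y _ hxy
    rcases h.splitNumbering_cases x with ⟨hx, hfx, hix⟩ | ⟨hx, hfx, hix⟩ <;>
      rcases h.splitNumbering_cases y with ⟨-, hfy, hiy⟩ | ⟨-, hfy, hiy⟩
    · exact (List.idxOf_inj hx).mp (by omega)
    · omega
    · omega
    · exact (List.idxOf_inj hx).mp (by omega)
  refine ⟨hmaps, hinj, ?_⟩
  have hsurj := Finset.surjOn_of_injOn_of_card_le (s := Finset.univ)
    (t := Finset.Icc 1 (Fintype.card V)) (splitNumbering L Hi) (by simpa using hmaps)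
    (by simpa using hinj) (by simp)
  simpa using hsurj

theorem splitNumbering_add_le (h : IsLowHighSplit G 0 L Hi) {u v : V} (huv : G.Adj u v) :
    splitNumbering L Hi u + splitNumbering L Hi v ≤ Fintype.card V + 1 := by
  have hlen := h.length_add
  have hlow := h.length_le
  rcases h.splitNumbering_cases u with ⟨hu, hfu, hiu⟩ | ⟨hu, hfu, hiu⟩ <;>
    rcases h.splitNumbering_cases v with ⟨hv, hfv, hiv⟩ | ⟨hv, hfv, hiv⟩
  · have hne : L.idxOf u ≠ L.idxOf v := fun he => huv.ne ((List.idxOf_inj hu).mp he)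
    omega
  · have := h.idxOf_le u hu v hv huv
    omega
  · have := h.idxOf_le v hv u hu huv.symm
    omega
  · exact absurd huv (h.high_indep u hu v hv)

end IsLowHighSplit

end Split

theorem IsLowHighSplit.sumStar {α : Type*} [Fintype α] [DecidableEq α] {H : SimpleGraph α}
    {c : ℕ} {L Hi : List α} (h : IsLowHighSplit H c L Hi) :
    IsLowHighSplit (H ⊕g starGraph (c + 1)) 0 (.inr none :: L.map .inl)
      ((List.finRange (c + 1)).map (.inr ∘ some) ++ Hi.map .inl) := by
  -- The `BEq` instance derived for sums is not known to be lawful; use the one of `DecidableEq`.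
  let _ : BEq (α ⊕ Option (Fin (c + 1))) := instBEqOfDecidableEq
  have hlen := h.length_add
  have hmem : ∀ v : α ⊕ Option (Fin (c + 1)), v ∈ (.inr none :: L.map .inl) ++
      ((List.finRange (c + 1)).map (.inr ∘ some) ++ Hi.map .inl) := by
    rintro (a | _ | i)
    · rcases List.mem_append.mp (h.mem a) with ha | ha <;> simp [ha]
    · simp
    · simp
  refine ⟨List.nodup_of_forall_mem_of_length_le hmem (by
    simp only [List.cons_append, List.length_cons, List.length_append, List.length_map,
      List.length_finRange, Fintype.card_sum, Fintype.card_option, Fintype.card_fin]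
    omega), hmem, ?_, ?_, ?_⟩
  · rintro (a | _ | i) ha (b | _ | j) hb hab
    · exact h.high_indep a (by simpa using ha) b (by simpa using hb)
        (SimpleGraph.sum_adj_inl.mp hab)
    all_goals simp_all [starGraph]
  · rintro (a | _ | i) ha (b | _ | j) hb hab
    · rw [SimpleGraph.sum_adj_inl] at hab
      have ha' : a ∈ L := by simpa using ha
      have hb' : b ∈ Hi := by simpa using hb
      rw [List.idxOf_cons_ne _ (by simp), List.idxOf_append_of_notMem (by simp),
        List.idxOf_map_of_injective Sum.inl_injective,
        List.idxOf_map_of_injective Sum.inl_injective, List.length_map, List.length_finRange]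
      have := h.idxOf_le a ha' b hb' hab
      omega
    all_goals simp_all
  · have := h.length_le
    simp only [List.length_cons, List.length_map, List.length_append, List.length_finRange]
    omega

theorem exists_adj_sum_starGraph {α : Type*} {H : SimpleGraph α} (hH : ∀ a, ∃ b, H.Adj a b)
    (c : ℕ) (v : α ⊕ Option (Fin (c + 1))) : ∃ w, (H ⊕g starGraph (c + 1)).Adj v w := by
  rcases v with a | _ | i
  · obtain ⟨b, hb⟩ := hH a
    exact ⟨.inl b, SimpleGraph.sum_adj_inl.mpr hb⟩
  · exact ⟨.inr (some 0), trivial⟩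
  · exact ⟨.inr none, trivial⟩

section InducedParts

variable {α : Type*} {H : SimpleGraph α} {S : Finset α} {v : α}

theorem mem_isolSet : v ∈ isolSet H S ↔ v ∈ S ∧ ∀ w ∈ S, ¬ H.Adj v w := by
  simp [isolSet]

theorem mem_core : v ∈ core H S ↔ v ∈ S ∧ ∃ w ∈ S, H.Adj v w := by
  simp only [core, Finset.mem_sdiff, mem_isolSet, not_and, not_forall, not_not]
  tauto

end InducedParts

namespace DSeq

variable {α : Type*} [Fintype α] {H : SimpleGraph α} (D : DSeq H)

/-- The vertex deleted at step `i`; at the last step, some vertex of the final clique (if any). -/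
noncomputable def pivot (i : ℕ) : Option α :=
  if i < D.s then some (D.u i) else (core H (D.S i)).toList.head?

noncomputable def lowBlock (i : ℕ) : List α :=
  ((D.S i).filter fun w => ∃ c ∈ D.pivot i, H.Adj c w).toList

noncomputable def highBlock (i : ℕ) : List α :=
  (isolSet H (D.S i)).toList ++ (D.pivot i).toList

noncomputable def lowList : List α := (List.range' 1 D.s).flatMap D.lowBlock

noncomputable def highList : List α := (List.range' 1 D.s).flatMap D.highBlock

def LeavesAt (x : α) (i : ℕ) : Prop := x ∈ D.S i ∧ (i < D.s → x ∉ D.S (i + 1))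

variable {D} {i j t : ℕ} {a b x : α}

theorem mem_S_succ (hi1 : 1 ≤ i) (hi : i < D.s) :
    x ∈ D.S (i + 1) ↔ x ∈ core H (D.S i) ∧ x ≠ D.u i ∧ ¬ H.Adj (D.u i) x := by
  rw [D.step i hi1 hi, Finset.mem_filter]

theorem S_antitone (hi1 : 1 ≤ i) (hij : i ≤ j) (hj : j ≤ D.s) : D.S j ⊆ D.S i := by
  induction j, hij using Nat.le_induction with
  | base => exact subset_rfl
  | succ j hij ih =>
    have hsucc : D.S (j + 1) ⊆ D.S j := fun x hx =>
      (mem_core.mp ((mem_S_succ (by omega) hj).mp hx).1).1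
    exact hsucc.trans (ih (by omega))

theorem pivot_of_lt (hi : i < D.s) : D.pivot i = some (D.u i) := if_pos hi

theorem pivot_mem_core (hi1 : 1 ≤ i) (hi : i ≤ D.s) {c : α} (hc : c ∈ D.pivot i) :
    c ∈ core H (D.S i) := by
  rcases hi.lt_or_eq with hi | rfl
  · rw [pivot_of_lt hi, Option.mem_some_iff] at hc
    exact hc ▸ D.mem_u i hi1 hi
  · rw [pivot, if_neg (lt_irrefl _)] at hc
    exact Finset.mem_toList.mp (List.mem_of_mem_head? hc)

theorem exists_mem_pivot (hi : i ≤ D.s) (hx : x ∈ core H (D.S i)) : ∃ c, c ∈ D.pivot i := by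
  rcases hi.lt_or_eq with hi | rfl
  · exact ⟨D.u i, by rw [pivot_of_lt hi]; rfl⟩
  · rw [pivot, if_neg (lt_irrefl _)]
    have hne : (core H (D.S D.s)).toList ≠ [] := by
      rw [Ne, Finset.toList_eq_nil]
      exact Finset.ne_empty_of_mem hx
    exact ⟨_, List.head?_eq_some_head hne⟩

theorem adj_of_mem_core_terminal {v w : α} (hv : v ∈ core H (D.S D.s))
    (hw : w ∈ core H (D.S D.s)) (hvw : v ≠ w) : H.Adj v w := by
  rcases D.terminal with ⟨he, -⟩ | ⟨-, hclique⟩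
  · simp [he] at hv
  · exact hclique v hv w hw hvw

theorem degIn_terminal {c : α} (hc : c ∈ core H (D.S D.s)) :
    degIn H (D.S D.s) c = (core H (D.S D.s)).card - 1 := by
  rw [degIn, ← Finset.card_erase_of_mem hc]
  congr 1
  ext w
  simp only [Finset.mem_filter, Finset.mem_erase]
  constructor
  · rintro ⟨hw, hcw⟩
    exact ⟨hcw.ne', mem_core.mpr ⟨hw, c, (mem_core.mp hc).1, hcw.symm⟩⟩
  · rintro ⟨hwc, hw⟩
    exact ⟨(mem_core.mp hw).1, adj_of_mem_core_terminal hc hw hwc.symm⟩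

theorem d_eq_degIn_of_mem_pivot (hi1 : 1 ≤ i) (hi : i ≤ D.s) {c : α} (hc : c ∈ D.pivot i) :
    D.d i = degIn H (D.S i) c := by
  rcases hi.lt_or_eq with hi | rfl
  · rw [pivot_of_lt hi, Option.mem_some_iff] at hc
    rw [d, if_pos hi, hc]
  · have hcore := pivot_mem_core hi1 le_rfl hc
    rw [d, if_neg (lt_irrefl _), dif_pos ⟨c, hcore⟩, degIn_terminal hcore]
    exact le_antisymm (Finset.inf'_le_of_le _ hcore (degIn_terminal hcore).le)
      (Finset.le_inf' _ _ fun w hw => (degIn_terminal hw).ge)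

theorem d_eq_zero_of_pivot_eq_none (hi : i ≤ D.s) (h : D.pivot i = none) : D.d i = 0 := by
  rcases hi.lt_or_eq with hi | rfl
  · simp [pivot_of_lt hi] at h
  · rw [d, if_neg (lt_irrefl _), dif_neg]
    rintro ⟨x, hx⟩
    obtain ⟨c, hc⟩ := exists_mem_pivot le_rfl hx
    simp [h] at hc

theorem mem_lowBlock : x ∈ D.lowBlock i ↔ x ∈ D.S i ∧ ∃ c ∈ D.pivot i, H.Adj c x := by
  simp [lowBlock]

theorem mem_highBlock : x ∈ D.highBlock i ↔ x ∈ isolSet H (D.S i) ∨ x ∈ D.pivot i := by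
  simp [highBlock]

theorem length_lowBlock (hi1 : 1 ≤ i) (hi : i ≤ D.s) : (D.lowBlock i).length = D.d i := by
  rw [lowBlock, Finset.length_toList]
  cases hp : D.pivot i with
  | none => simp [d_eq_zero_of_pivot_eq_none hi hp]
  | some c =>
    rw [d_eq_degIn_of_mem_pivot hi1 hi hp, degIn]
    simp

theorem length_highBlock_of_lt (hi : i < D.s) : (D.highBlock i).length = D.m i + 1 := by
  simp [highBlock, pivot_of_lt hi, m]

theorem m_le_length_highBlock : D.m i ≤ (D.highBlock i).length := by
  simp [highBlock, m]

theorem leavesAt_of_mem_lowBlock (hi1 : 1 ≤ i) (hx : x ∈ D.lowBlock i) : D.LeavesAt x i := by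
  obtain ⟨hxS, c, hc, hcx⟩ := mem_lowBlock.mp hx
  refine ⟨hxS, fun hi hx' => ?_⟩
  rw [pivot_of_lt hi, Option.mem_some_iff] at hc
  exact ((mem_S_succ hi1 hi).mp hx').2.2 (hc ▸ hcx)

theorem leavesAt_of_mem_highBlock (hi1 : 1 ≤ i) (hi : i ≤ D.s) (hx : x ∈ D.highBlock i) :
    D.LeavesAt x i := by
  rcases mem_highBlock.mp hx with hx | hx
  · exact ⟨(mem_isolSet.mp hx).1, fun hi hx' =>
      Finset.notMem_sdiff_of_mem_right hx ((mem_S_succ hi1 hi).mp hx').1⟩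
  · refine ⟨(mem_core.mp (pivot_mem_core hi1 hi hx)).1, fun hi hx' => ?_⟩
    rw [pivot_of_lt hi, Option.mem_some_iff] at hx
    exact ((mem_S_succ hi1 hi).mp hx').2.1 hx.symm

theorem LeavesAt.eq (hxi : D.LeavesAt x i) (hxj : D.LeavesAt x j) (hi1 : 1 ≤ i) (hj1 : 1 ≤ j)
    (hi : i ≤ D.s) (hj : j ≤ D.s) : i = j := by
  by_contra hne
  wlog hij : i < j generalizing i j
  · exact this hxj hxi hj1 hi1 hj hi (Ne.symm hne) (by omega)
  exact hxi.2 (by omega) (S_antitone (by omega) hij hj hxj.1)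

variable (D) in
theorem exists_leavesAt (x : α) : ∃ i, 1 ≤ i ∧ i ≤ D.s ∧ D.LeavesAt x i := by
  classical
  have h1 : x ∈ D.S 1 := D.first ▸ Finset.mem_univ x
  let P : ℕ → Prop := fun i => x ∈ D.S i
  exact ⟨Nat.findGreatest P D.s, Nat.le_findGreatest D.hs h1, Nat.findGreatest_le _,
    Nat.findGreatest_spec (P := P) D.hs h1, Nat.findGreatest_is_greatest (Nat.lt_succ_self _)⟩

theorem mem_lowBlock_or_highBlock (hi1 : 1 ≤ i) (hi : i ≤ D.s) (hx : D.LeavesAt x i) :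
    x ∈ D.lowBlock i ∨ x ∈ D.highBlock i := by
  rw [mem_lowBlock, mem_highBlock]
  by_cases hiso : x ∈ isolSet H (D.S i)
  · exact .inr (.inl hiso)
  have hcore : x ∈ core H (D.S i) := Finset.mem_sdiff.mpr ⟨hx.1, hiso⟩
  obtain ⟨c, hc⟩ := exists_mem_pivot hi hcore
  by_cases hxc : x = c
  · exact .inr (.inr (hxc ▸ hc))
  refine .inl ⟨hx.1, c, hc, ?_⟩
  rcases hi.lt_or_eq with hi | rfl
  · rw [pivot_of_lt hi, Option.mem_some_iff] at hc
    subst hc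
    by_contra hadj
    exact hx.2 hi ((mem_S_succ hi1 hi).mpr ⟨hcore, hxc, hadj⟩)
  · exact adj_of_mem_core_terminal (pivot_mem_core hi1 le_rfl hc) hcore (Ne.symm hxc)

theorem mem_lowList : x ∈ D.lowList ↔ ∃ i, 1 ≤ i ∧ i ≤ D.s ∧ x ∈ D.lowBlock i := by
  simp only [lowList, List.mem_flatMap, List.mem_range'_1]
  exact ⟨fun ⟨i, hi, hx⟩ => ⟨i, hi.1, by omega, hx⟩,
    fun ⟨i, hi1, hi, hx⟩ => ⟨i, ⟨hi1, by omega⟩, hx⟩⟩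

theorem mem_highList : x ∈ D.highList ↔ ∃ i, 1 ≤ i ∧ i ≤ D.s ∧ x ∈ D.highBlock i := by
  simp only [highList, List.mem_flatMap, List.mem_range'_1]
  exact ⟨fun ⟨i, hi, hx⟩ => ⟨i, hi.1, by omega, hx⟩,
    fun ⟨i, hi1, hi, hx⟩ => ⟨i, ⟨hi1, by omega⟩, hx⟩⟩

variable (D) in
theorem mem_lowList_append_highList (x : α) : x ∈ D.lowList ++ D.highList := by
  obtain ⟨i, hi1, hi, hx⟩ := D.exists_leavesAt x
  rcases mem_lowBlock_or_highBlock hi1 hi hx with h | h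
  · exact List.mem_append_left _ (mem_lowList.mpr ⟨i, hi1, hi, h⟩)
  · exact List.mem_append_right _ (mem_highList.mpr ⟨i, hi1, hi, h⟩)

theorem notMem_highBlock_of_mem_lowBlock (hi1 : 1 ≤ i) (hi : i ≤ D.s)
    (hx : x ∈ D.lowBlock i) : x ∉ D.highBlock i := by
  obtain ⟨-, c, hc, hcx⟩ := mem_lowBlock.mp hx
  rw [mem_highBlock, not_or]
  exact ⟨fun hiso => (mem_isolSet.mp hiso).2 c (mem_core.mp (pivot_mem_core hi1 hi hc)).1
    hcx.symm, fun hxc => hcx.ne (Option.mem_unique hc hxc)⟩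

theorem nodup_highBlock (hi1 : 1 ≤ i) (hi : i ≤ D.s) : (D.highBlock i).Nodup := by
  refine List.nodup_append.mpr ⟨Finset.nodup_toList _, by cases D.pivot i <;> simp, ?_⟩
  rintro x hx _ hc rfl
  exact Finset.notMem_sdiff_of_mem_right (Finset.mem_toList.mp hx)
    (pivot_mem_core hi1 hi (Option.mem_toList.mp hc))

theorem pairwise_disjoint_of_leavesAt {B : ℕ → List α}
    (hB : ∀ i, 1 ≤ i → i ≤ D.s → ∀ x ∈ B i, D.LeavesAt x i) :
    (List.range' 1 D.s).Pairwise fun i j => (B i).Disjoint (B j) := by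
  refine (List.pairwise_lt_range' (s := 1) (n := D.s)).imp_of_mem
    fun hi hj hij x hxi hxj => ?_
  simp only [List.mem_range'_1] at hi hj
  exact hij.ne ((hB _ hi.1 (by omega) x hxi).eq (hB _ hj.1 (by omega) x hxj) hi.1 hj.1
    (by omega) (by omega))

variable (D) in
theorem nodup_lowList_append_highList : (D.lowList ++ D.highList).Nodup := by
  refine List.nodup_append.mpr ⟨List.nodup_flatMap.mpr ⟨fun _ _ => Finset.nodup_toList _,
    pairwise_disjoint_of_leavesAt fun _ hi1 _ _ hx => leavesAt_of_mem_lowBlock hi1 hx⟩,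
    List.nodup_flatMap.mpr ⟨fun i hi => ?_,
    pairwise_disjoint_of_leavesAt fun _ hi1 hi _ hx => leavesAt_of_mem_highBlock hi1 hi hx⟩, ?_⟩
  · simp only [List.mem_range'_1] at hi
    exact nodup_highBlock hi.1 (by omega)
  rintro x hx _ hx' rfl
  obtain ⟨i, hi1, hi, hxi⟩ := mem_lowList.mp hx
  obtain ⟨j, hj1, hj, hxj⟩ := mem_highList.mp hx'
  obtain rfl := (leavesAt_of_mem_lowBlock hi1 hxi).eq (leavesAt_of_mem_highBlock hj1 hj hxj)
    hi1 hj1 hi hj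
  exact notMem_highBlock_of_mem_lowBlock hi1 hi hxi hxj

theorem le_of_adj_mem_highBlock (hts : t ≤ D.s) (ha : a ∈ D.S t) (hj1 : 1 ≤ j)
    (hj : j ≤ D.s) (hb : b ∈ D.highBlock j) (hab : H.Adj a b) :
    t ≤ j ∧ (b ∈ isolSet H (D.S j) → t < j) := by
  rcases mem_highBlock.mp hb with hiso | hpiv
  · have htj : t < j := by
      by_contra hjt
      exact (mem_isolSet.mp hiso).2 a (S_antitone hj1 (by omega) hts ha) hab.symm
    exact ⟨htj.le, fun _ => htj⟩
  refine ⟨?_, fun hiso =>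
    absurd (pivot_mem_core hj1 hj hpiv) (Finset.notMem_sdiff_of_mem_right hiso)⟩
  by_contra hjt
  rw [pivot_of_lt (by omega), Option.mem_some_iff] at hpiv
  exact ((mem_S_succ hj1 (by omega)).mp (S_antitone (by omega) (by omega) hts ha)).2.2
    (hpiv ▸ hab.symm)

theorem not_adj_of_mem_highList (ha : a ∈ D.highList) (hb : b ∈ D.highList) : ¬ H.Adj a b := by
  intro hab
  obtain ⟨i, hi1, hi, hai⟩ := mem_highList.mp ha
  obtain ⟨j, hj1, hj, hbj⟩ := mem_highList.mp hb
  have hij :=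
    le_of_adj_mem_highBlock hi (leavesAt_of_mem_highBlock hi1 hi hai).1 hj1 hj hbj hab
  have hji :=
    le_of_adj_mem_highBlock hj (leavesAt_of_mem_highBlock hj1 hj hbj).1 hi1 hi hai hab.symm
  rcases mem_highBlock.mp hbj with hb' | hb'
  · exact absurd (hij.2 hb') (by omega)
  rcases mem_highBlock.mp hai with ha' | ha'
  · exact absurd (hji.2 ha') (by omega)
  obtain rfl : i = j := le_antisymm hij.1 hji.1
  exact hab.ne (Option.mem_unique ha' hb')

theorem idxOf_lowList_lt (ht1 : 1 ≤ t) (hts : t ≤ D.s) (hx : x ∈ D.lowBlock t) :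
    D.lowList.idxOf x < ∑ i ∈ Icc 1 t, D.d i := by
  rw [← Finset.sum_congr rfl fun i hi => length_lowBlock (Finset.mem_Icc.mp hi).1
    ((Finset.mem_Icc.mp hi).2.trans hts)]
  exact List.idxOf_flatMap_range'_one_lt ht1 hts hx

theorem sum_length_highBlock (hj : j < D.s) :
    ∑ i ∈ Icc 1 j, (D.highBlock i).length = ∑ i ∈ Icc 1 j, D.m i + j := by
  rw [Finset.sum_congr rfl fun i hi => length_highBlock_of_lt
    ((Finset.mem_Icc.mp hi).2.trans_lt hj), Finset.sum_add_distrib, Finset.sum_const,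
    Nat.card_Icc, smul_eq_mul, mul_one, Nat.add_sub_cancel]

variable (D) in
theorem sum_m_add_le_length_highList :
    ∑ i ∈ Icc 1 D.s, D.m i + D.s ≤ D.highList.length + 1 := by
  obtain ⟨n, hn⟩ : ∃ n, D.s = n + 1 := ⟨D.s - 1, by have := D.hs; omega⟩
  have hlast := m_le_length_highBlock (D := D) (i := n + 1)
  rw [highList, hn, List.flatMap_range'_one_succ, List.length_append,
    List.length_flatMap_range'_one, sum_length_highBlock (by omega),
    Finset.sum_Icc_succ_top (by omega)]
  omega

theorem idxOf_pivot_highBlock (hi1 : 1 ≤ i) (hi : i ≤ D.s) {c : α} (hc : c ∈ D.pivot i) :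
    (D.highBlock i).idxOf c = D.m i := by
  rw [highBlock, List.idxOf_append_of_notMem fun h => Finset.notMem_sdiff_of_mem_right
    (Finset.mem_toList.mp h) (pivot_mem_core hi1 hi hc), Finset.length_toList,
    Option.mem_def.mp hc]
  simp [m]

theorem notMem_flatMap_highBlock (hj : j + 1 ≤ D.s) (hb : b ∈ D.highBlock (j + 1)) :
    b ∉ (List.range' 1 j).flatMap D.highBlock := by
  simp only [List.mem_flatMap, List.mem_range'_1, not_exists, not_and]
  intro i hi hbi
  have := (leavesAt_of_mem_highBlock hi.1 (by omega) hbi).eq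
    (leavesAt_of_mem_highBlock (by omega) hj hb) hi.1 (by omega) (by omega) hj
  omega

theorem sum_m_add_le_idxOf_highList (ht1 : 1 ≤ t) (hts : t ≤ D.s) (ha : a ∈ D.S t)
    (hb : b ∈ D.highList) (hab : H.Adj a b) :
    ∑ i ∈ Icc 1 t, D.m i + t ≤ D.highList.idxOf b + 1 := by
  obtain ⟨j, hj1, hj, hbj⟩ := mem_highList.mp hb
  obtain ⟨htj, htj'⟩ := le_of_adj_mem_highBlock hts ha hj1 hj hbj hab
  obtain ⟨j, rfl⟩ : ∃ j', j = j' + 1 := ⟨j - 1, by omega⟩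
  have hidx := List.sum_add_idxOf_le_idxOf_flatMap_range'_one hj (notMem_flatMap_highBlock hj hbj)
  rw [sum_length_highBlock (by omega)] at hidx
  rw [highList]
  have hmono : ∀ n ≤ j, ∑ i ∈ Icc 1 n, D.m i ≤ ∑ i ∈ Icc 1 j, D.m i := fun n hn =>
    Finset.sum_le_sum_of_subset (Finset.Icc_subset_Icc le_rfl hn)
  rcases mem_highBlock.mp hbj with hiso | hpiv
  · have := hmono t (by have := htj' hiso; omega)
    omega
  rw [idxOf_pivot_highBlock hj1 hj hpiv] at hidx
  rcases htj.lt_or_eq with htj | rfl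
  · have := hmono t (by omega)
    omega
  · rw [Finset.sum_Icc_succ_top (by omega)]
    omega

theorem d_pos (hi1 : 1 ≤ i) (hi : i < D.s) : 0 < D.d i := by
  obtain ⟨-, w, hw, huw⟩ := mem_core.mp (D.mem_u i hi1 hi)
  rw [d, if_pos hi, degIn]
  exact Finset.card_pos.mpr ⟨w, Finset.mem_filter.mpr ⟨hw, huw⟩⟩

theorem sum_d_le {Z : ℤ} (hZ : IsLeast {z | ∃ i, 2 ≤ i ∧ i ≤ D.s ∧ z = D.z i} Z) (hZ0 : Z ≤ 0)
    {c : ℕ} (hk : (D.d 1 : ℤ) - Z ≤ c + 1) (ht1 : 1 ≤ t) (hts : t ≤ D.s) :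
    ∑ i ∈ Icc 1 t, D.d i ≤ c + (∑ i ∈ Icc 1 t, D.m i + t) := by
  have hzt : Z ≤ D.z t := by
    rcases ht1.lt_or_eq with ht | rfl
    · exact hZ.2 ⟨t, ht, hts, rfl⟩
    · simpa [z] using hZ0 -- `z 1` is an empty sum
  have hsplit : ∀ f : ℕ → ℕ, ∑ i ∈ Icc 1 t, f i = f 1 + ∑ i ∈ Icc 2 t, f i := fun f => by
    rw [← Finset.add_sum_Ioc_eq_sum_Icc ht1, ← Finset.Icc_add_one_left_eq_Ioc]
    rfl
  have hz : D.z t = ∑ i ∈ Icc 2 t, (D.m i : ℤ) + (t - 1) - ∑ i ∈ Icc 2 t, (D.d i : ℤ) := by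
    rw [z, Finset.sum_sub_distrib, Finset.sum_add_distrib, Finset.sum_const, Nat.card_Icc,
      nsmul_eq_mul, mul_one, show t + 1 - 2 = t - 1 by omega, Nat.cast_sub ht1, Nat.cast_one]
  rw [hsplit D.d, hsplit D.m]
  linarith [(D.m 1).cast_nonneg (α := ℤ)]

theorem length_lowList : D.lowList.length = ∑ i ∈ Icc 1 D.s, D.d i := by
  rw [lowList, List.length_flatMap_range'_one]
  exact Finset.sum_congr rfl fun i hi => length_lowBlock (Finset.mem_Icc.mp hi).1
    (Finset.mem_Icc.mp hi).2

theorem isLowHighSplit {Z : ℤ} (hZ : IsLeast {z | ∃ i, 2 ≤ i ∧ i ≤ D.s ∧ z = D.z i} Z)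
    (hZ0 : Z ≤ 0) {c : ℕ} (hk : (D.d 1 : ℤ) - Z ≤ c + 1) :
    IsLowHighSplit H c D.lowList D.highList where
  nodup := D.nodup_lowList_append_highList
  mem := D.mem_lowList_append_highList
  high_indep _ ha _ hb := not_adj_of_mem_highList ha hb
  idxOf_le a ha b hb hab := by
    obtain ⟨t, ht1, hts, hat⟩ := mem_lowList.mp ha
    have := idxOf_lowList_lt ht1 hts hat
    have := sum_m_add_le_idxOf_highList ht1 hts (leavesAt_of_mem_lowBlock ht1 hat).1 hb hab
    have := sum_d_le hZ hZ0 hk ht1 hts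
    omega
  length_le := by
    have := D.sum_m_add_le_length_highList
    have := sum_d_le hZ hZ0 hk D.hs le_rfl
    rw [length_lowList]
    omega

end DSeq

/-- Let `H` be a graph with `δ(H) ≥ 1` having a d-sequence with minimal partial sum
`Z ≤ 0`, and let `G = H + K_{1,k}`. If `k ≥ d_H - Z`, then `str(G) = |V(G)| + 1`. -/
theorem strength_sum_star {α : Type*} [Fintype α]
    (H : SimpleGraph α) [DecidableRel H.Adj] (hδH : 1 ≤ H.minDegree)
    (DH : DSeq H) (Z : ℤ)
    (hZ : IsLeast {z | ∃ i, 2 ≤ i ∧ i ≤ DH.s ∧ z = DH.z i} Z) (hZ0 : Z ≤ 0)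
    (k : ℕ) (hk : (DH.d 1 : ℤ) - Z ≤ (k : ℤ)) :
    strength (H ⊕g starGraph k) = Fintype.card (α ⊕ Option (Fin k)) + 1 := by
  have hH : ∀ a, ∃ b, H.Adj a b := fun a =>
    (H.degree_pos_iff_exists_adj a).mp (hδH.trans (H.minDegree_le_degree a))
  obtain ⟨i, hi2, his, -⟩ := hZ.1
  have hd1 := DH.d_pos le_rfl (by omega : 1 < DH.s)
  obtain ⟨c, rfl⟩ : ∃ c, k = c + 1 := ⟨k - 1, by omega⟩
  push_cast at hk
  have hsplit := (DH.isLowHighSplit hZ hZ0 hk).sumStar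
  exact strength_eq_card_add_one (exists_adj_sum_starGraph hH c) hsplit.isNumbering
    fun _ _ huv => hsplit.splitNumbering_add_le huv
end

section
/- For every integer δ ≥ 1, there exists a graph G with minimum degree δ(G) = δ and str(G) = |V(G)| + δ(G). In particular, the complete bipartite graph K_{m,n} with n ≥ m ≥ 1 satisfies str(K_{m,n}) = m + n + m. -/
open Finset

lemma aux_exists_ge (m : ℕ) (hm : 1 ≤ m) (T : Finset ℕ) (hcard : m ≤ T.card)
    (hpos : ∀ x ∈ T, 1 ≤ x) : ∃ x ∈ T, m ≤ x := by
  by_contra h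
  push_neg at h
  have hsub : T ⊆ Finset.Icc 1 (m - 1) := fun x hx =>
    Finset.mem_Icc.2 ⟨hpos x hx, by have := h x hx; omega⟩
  have := Finset.card_le_card hsub
  rw [Nat.card_Icc] at this
  omega

section KMN

variable (m n : ℕ)

private lemma hcard_sum : Fintype.card (Fin m ⊕ Fin n) = m + n := by simp

/-- The canonical numbering of `K_{m,n}`. -/
private def fnum : Fin m ⊕ Fin n → ℕ := Sum.elim (fun a => a.1 + 1) (fun b => m + 1 + b.1)

private lemma fnum_isNumbering : IsNumbering (fnum m n) := by
  rw [IsNumbering, hcard_sum]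
  refine ⟨?_, ?_, ?_⟩
  · rintro (a | b) -
    · simp only [fnum, Sum.elim_inl, Set.mem_Icc]
      have := a.2; omega
    · simp only [fnum, Sum.elim_inr, Set.mem_Icc]
      have := b.2; omega
  · rintro (a | b) - (a' | b') - h <;>
      simp only [fnum, Sum.elim_inl, Sum.elim_inr] at h
    · have : a = a' := Fin.ext (by omega)
      rw [this]
    · exact absurd h (by have := a.2; omega)
    · exact absurd h (by have := b.2; omega)
    · have : b = b' := Fin.ext (by omega)
      rw [this]
  · intro k hk
    rw [Set.mem_Icc] at hk
    by_cases hkm : k ≤ m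
    · exact ⟨Sum.inl ⟨k - 1, by omega⟩, Set.mem_univ _, by
        simp only [fnum, Sum.elim_inl]; omega⟩
    · exact ⟨Sum.inr ⟨k - m - 1, by omega⟩, Set.mem_univ _, by
        simp only [fnum, Sum.elim_inr]; omega⟩

variable {m n}

private lemma strOf_bddAbove {g : Fin m ⊕ Fin n → ℕ} (hg : IsNumbering g) :
    ∀ x ∈ {x | ∃ u v, (completeBipartiteGraph (Fin m) (Fin n)).Adj u v ∧ x = g u + g v},
      x ≤ (m + n) + (m + n) := by
  rintro x ⟨u, v, -, rfl⟩
  have h1 := hg.mapsTo (Set.mem_univ u)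
  have h2 := hg.mapsTo (Set.mem_univ v)
  rw [hcard_sum, Set.mem_Icc] at h1 h2
  omega

private lemma strOf_fnum (hm : 1 ≤ m) (hn : 1 ≤ n) :
    strOf (completeBipartiteGraph (Fin m) (Fin n)) (fnum m n) = m + n + m := by
  have hmem : m + n + m ∈
      {x | ∃ u v, (completeBipartiteGraph (Fin m) (Fin n)).Adj u v ∧ x = fnum m n u + fnum m n v} := by
    refine ⟨Sum.inl ⟨m - 1, by omega⟩, Sum.inr ⟨n - 1, by omega⟩, by simp, ?_⟩
    simp only [fnum, Sum.elim_inl, Sum.elim_inr]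
    omega
  refine le_antisymm (csSup_le ⟨_, hmem⟩ ?_) (le_csSup ⟨_, strOf_bddAbove (fnum_isNumbering m n)⟩ hmem)
  rintro x ⟨u, v, hadj, rfl⟩
  rcases u with a | b <;> rcases v with a' | b'
  · simp at hadj
  · simp only [fnum, Sum.elim_inl, Sum.elim_inr]
    have := a.2; have := b'.2; omega
  · simp only [fnum, Sum.elim_inl, Sum.elim_inr]
    have := a'.2; have := b.2; omega
  · simp at hadj

private lemma strOf_lower (hm : 1 ≤ m) (hmn : m ≤ n) {g : Fin m ⊕ Fin n → ℕ}
    (hg : IsNumbering g) :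
    m + n + m ≤ strOf (completeBipartiteGraph (Fin m) (Fin n)) g := by
  have hn : 1 ≤ n := hm.trans hmn
  have hinj : Function.Injective g := fun x y h =>
    hg.injOn (Set.mem_univ x) (Set.mem_univ y) h
  have hpos : ∀ w : Fin m ⊕ Fin n, 1 ≤ g w := by
    intro w
    have := hg.mapsTo (Set.mem_univ w)
    rw [hcard_sum, Set.mem_Icc] at this
    exact this.1
  -- find vertex with label m + n
  obtain ⟨u, -, hu⟩ := hg.surjOn (by rw [hcard_sum]; exact Set.mem_Icc.2 ⟨by omega, le_rfl⟩)
  -- find a neighbor of u with label ≥ m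
  have key : ∃ w, (completeBipartiteGraph (Fin m) (Fin n)).Adj u w ∧ m ≤ g w := by
    rcases u with a | b
    · -- neighbors are all of Fin n
      obtain ⟨x, hxT, hx⟩ := aux_exists_ge n hn
        ((univ : Finset (Fin n)).image fun b => g (Sum.inr b))
        (by rw [Finset.card_image_of_injective _ (fun b b' h => Sum.inr_injective (hinj h))]; simp)
        (by rintro x hx; obtain ⟨b, -, rfl⟩ := Finset.mem_image.1 hx; exact hpos _)
      obtain ⟨b, -, rfl⟩ := Finset.mem_image.1 hxT
      exact ⟨Sum.inr b, by simp, hmn.trans hx⟩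
    · -- neighbors are all of Fin m
      obtain ⟨x, hxT, hx⟩ := aux_exists_ge m hm
        ((univ : Finset (Fin m)).image fun a => g (Sum.inl a))
        (by rw [Finset.card_image_of_injective _ (fun a a' h => Sum.inl_injective (hinj h))]; simp)
        (by rintro x hx; obtain ⟨a, -, rfl⟩ := Finset.mem_image.1 hx; exact hpos _)
      obtain ⟨a, -, rfl⟩ := Finset.mem_image.1 hxT
      exact ⟨Sum.inl a, by simp, hx⟩
  obtain ⟨w, hadj, hw⟩ := key
  have hmem : g u + g w ∈
      {x | ∃ u v, (completeBipartiteGraph (Fin m) (Fin n)).Adj u v ∧ x = g u + g v} :=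
    ⟨u, w, hadj, rfl⟩
  have := le_csSup ⟨_, strOf_bddAbove hg⟩ hmem
  rw [hu] at this
  calc m + n + m ≤ (m + n) + g w := by omega
  _ ≤ _ := this

lemma strength_completeBipartite (hm : 1 ≤ m) (hmn : m ≤ n) :
    strength (completeBipartiteGraph (Fin m) (Fin n)) = m + n + m := by
  have hn : 1 ≤ n := hm.trans hmn
  have hmem : m + n + m ∈
      {x | ∃ f : Fin m ⊕ Fin n → ℕ, IsNumbering f ∧
        strOf (completeBipartiteGraph (Fin m) (Fin n)) f = x} :=
    ⟨fnum m n, fnum_isNumbering m n, strOf_fnum hm hn⟩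
  refine le_antisymm (Nat.sInf_le hmem) (le_csInf ⟨_, hmem⟩ ?_)
  rintro x ⟨g, hg, rfl⟩
  exact strOf_lower hm hmn hg

end KMN


/-- For every `δ ≥ 1` there is a graph `G` with `δ(G) = δ` and `str(G) = |V(G)| + δ(G)`;
in particular `str(K_{m,n}) = (m + n) + m` for `n ≥ m ≥ 1`. -/
theorem exists_graph_minimal_strength :
    (∀ δ : ℕ, 1 ≤ δ →
      ∃ (V : Type) (_ : Fintype V) (G : SimpleGraph V) (_ : DecidableRel G.Adj),
        G.minDegree = δ ∧ strength G = Fintype.card V + δ) ∧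
    (∀ m n : ℕ, 1 ≤ m → m ≤ n →
      strength (completeBipartiteGraph (Fin m) (Fin n)) = m + n + m) := by
  constructor
  · intro δ hδ
    letI inst : DecidableRel (completeBipartiteGraph (Fin δ) (Fin δ)).Adj :=
      fun v w =>
        inferInstanceAs (Decidable (v.isLeft ∧ w.isRight ∨ v.isRight ∧ w.isLeft))
    refine ⟨Fin δ ⊕ Fin δ, inferInstance, completeBipartiteGraph (Fin δ) (Fin δ),
      inst, ?_, ?_⟩
    · have : Nonempty (Fin δ ⊕ Fin δ) := ⟨Sum.inl ⟨0, hδ⟩⟩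
      have hdeg : ∀ v : Fin δ ⊕ Fin δ,
          (completeBipartiteGraph (Fin δ) (Fin δ)).degree v = δ := by
        intro v
        rw [← SimpleGraph.card_neighborFinset_eq_degree]
        rcases v with a | b
        · have : (completeBipartiteGraph (Fin δ) (Fin δ)).neighborFinset (Sum.inl a)
              = (univ : Finset (Fin δ)).map ⟨Sum.inr, Sum.inr_injective⟩ := by
            ext w
            rcases w with a' | b' <;> simp
          rw [this, Finset.card_map, Finset.card_univ, Fintype.card_fin]
        · have : (completeBipartiteGraph (Fin δ) (Fin δ)).neighborFinset (Sum.inr b)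
              = (univ : Finset (Fin δ)).map ⟨Sum.inl, Sum.inl_injective⟩ := by
            ext w
            rcases w with a' | b' <;> simp
          rw [this, Finset.card_map, Finset.card_univ, Fintype.card_fin]
      refine le_antisymm ?_ ?_
      · have h1 := SimpleGraph.minDegree_le_degree (completeBipartiteGraph (Fin δ) (Fin δ))
          (Sum.inl ⟨0, hδ⟩)
        rwa [hdeg] at h1
      · exact SimpleGraph.le_minDegree_of_forall_le_degree _ δ fun v => (hdeg v).ge
    · rw [strength_completeBipartite hδ le_rfl, hcard_sum]
  · intro m n hm hmn
    exact strength_completeBipartite hm hmn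
end

section
/- For every graph H with δ(H) ≥ 1, either str(H) = |V(H)| + δ(H), or H is a proper subgraph of some graph G with δ(G) = δ(H) and str(G) = |V(G)| + δ(G). -/
open Finset

universe u

section Aux

variable {V : Type u} [Fintype V]

/-- The general lower bound `str_f(G) ≥ n + δ(G)` for any numbering `f`. -/
lemma le_strOf_of_numbering (G : SimpleGraph V) [DecidableRel G.Adj]
    (h1 : 1 ≤ G.minDegree) (g : V → ℕ) (hg : IsNumbering g) :
    Fintype.card V + G.minDegree ≤ strOf G g := by
  have hne : Nonempty V := by
    by_contra h
    rw [not_nonempty_iff] at h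
    have : G.minDegree = 0 := by
      simp [SimpleGraph.minDegree, Finset.univ_eq_empty]
    omega
  have hN : 1 ≤ Fintype.card V := Fintype.card_pos
  obtain ⟨u, -, hu⟩ := hg.surjOn (Set.mem_Icc.mpr ⟨hN, le_refl _⟩)
  have hnb : ∃ v ∈ G.neighborFinset u, G.minDegree ≤ g v := by
    by_contra h
    push_neg at h
    have hcard := Finset.card_le_card_of_injOn g
      (fun v hv => Finset.mem_Ico.mpr ⟨(hg.mapsTo (Set.mem_univ v)).1, h v hv⟩)
      (hg.injOn.mono (Set.subset_univ _))
    rw [Nat.card_Ico] at hcard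
    have hdeg : G.minDegree ≤ G.degree u := G.minDegree_le_degree u
    rw [← SimpleGraph.card_neighborFinset_eq_degree] at hdeg
    omega
  obtain ⟨v, hv, hgv⟩ := hnb
  have hadj : G.Adj u v := by rwa [SimpleGraph.mem_neighborFinset] at hv
  have hmem : g u + g v ∈ {n | ∃ u v, G.Adj u v ∧ n = g u + g v} := ⟨u, v, hadj, rfl⟩
  have hbdd : BddAbove {n | ∃ u v, G.Adj u v ∧ n = g u + g v} := by
    refine ⟨2 * Fintype.card V, ?_⟩
    rintro x ⟨a, b, -, rfl⟩
    have ha := (hg.mapsTo (Set.mem_univ a)).2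
    have hb := (hg.mapsTo (Set.mem_univ b)).2
    omega
  have : Fintype.card V + G.minDegree ≤ g u + g v := by omega
  exact this.trans (le_csSup hbdd hmem)

/-- Auxiliary construction: `H` together with a copy of `V` as new vertices, each new vertex
being adjacent exactly to the old vertices satisfying `q`. -/
def auxG (H : SimpleGraph V) (q : V → Prop) : SimpleGraph (V ⊕ V) where
  Adj x y := match x, y with
    | Sum.inl a, Sum.inl b => H.Adj a b
    | Sum.inl a, Sum.inr _ => q a
    | Sum.inr _, Sum.inl b => q b
    | Sum.inr _, Sum.inr _ => False
  symm := ⟨by rintro (a | a) (b | b) h <;> first | exact h.symm | exact h | exact h.elim⟩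
  loopless := ⟨by rintro (a | a) h <;> first | exact H.irrefl h | exact h⟩

@[simp] lemma auxG_adj_inl_inl (H : SimpleGraph V) (q : V → Prop) (a b : V) :
    (auxG H q).Adj (Sum.inl a) (Sum.inl b) ↔ H.Adj a b := Iff.rfl

@[simp] lemma auxG_adj_inl_inr (H : SimpleGraph V) (q : V → Prop) (a b : V) :
    (auxG H q).Adj (Sum.inl a) (Sum.inr b) ↔ q a := Iff.rfl

@[simp] lemma auxG_adj_inr_inl (H : SimpleGraph V) (q : V → Prop) (a b : V) :
    (auxG H q).Adj (Sum.inr a) (Sum.inl b) ↔ q b := Iff.rfl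

@[simp] lemma auxG_adj_inr_inr (H : SimpleGraph V) (q : V → Prop) (a b : V) :
    (auxG H q).Adj (Sum.inr a) (Sum.inr b) ↔ False := Iff.rfl

end Aux

/-- Every graph `H` with `δ(H) ≥ 1` either satisfies `str(H) = |V(H)| + δ(H)`, or is a
proper subgraph of a graph `G` with `δ(G) = δ(H)` and `str(G) = |V(G)| + δ(G)`. -/
theorem strength_eq_or_proper_subgraph {V : Type u} [Fintype V] (H : SimpleGraph V)
    [DecidableRel H.Adj] (hδ : 1 ≤ H.minDegree) :
    strength H = Fintype.card V + H.minDegree ∨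
    ∃ (W : Type u) (_ : Fintype W) (G : SimpleGraph W) (_ : DecidableRel G.Adj) (f : V ↪ W),
      (∀ a b, H.Adj a b → G.Adj (f a) (f b)) ∧
      (Set.range f ≠ Set.univ ∨ ∃ a b, G.Adj (f a) (f b) ∧ ¬ H.Adj a b) ∧
      G.minDegree = H.minDegree ∧
      strength G = Fintype.card W + G.minDegree := by
  right
  classical
  set n := Fintype.card V with hn
  set d := H.minDegree with hd
  have hne : Nonempty V := by
    by_contra h
    rw [not_nonempty_iff] at h
    have : H.minDegree = 0 := by
      simp [SimpleGraph.minDegree, Finset.univ_eq_empty]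
    omega
  have hdn : d < n := by
    obtain ⟨v, hv⟩ := H.exists_minimal_degree_vertex
    calc d = H.degree v := hv
    _ < n := H.degree_lt_card_verts v
  have hn1 : 1 ≤ n := Fintype.card_pos
  let e : V ≃ Fin n := Fintype.equivFin V
  let q : V → Prop := fun a => (e a : ℕ) < d
  let G : SimpleGraph (V ⊕ V) := auxG H q
  letI instDec : DecidableRel G.Adj := Classical.decRel _
  obtain ⟨b0⟩ := hne
  haveI : Nonempty (V ⊕ V) := ⟨Sum.inl b0⟩
  have hcardW : Fintype.card (V ⊕ V) = n + n := by simp [hn]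
  -- the numbering
  let f : V ⊕ V → ℕ := Sum.elim (fun a => (e a : ℕ) + 1) (fun b => n + (e b : ℕ) + 1)
  have hfl : ∀ a : V, f (Sum.inl a) = (e a : ℕ) + 1 := fun a => rfl
  have hfr : ∀ b : V, f (Sum.inr b) = n + (e b : ℕ) + 1 := fun b => rfl
  have hea : ∀ a : V, (e a : ℕ) < n := fun a => (e a).2
  have hf : IsNumbering f := by
    rw [IsNumbering, hcardW]
    refine ⟨?_, ?_, ?_⟩
    · rintro (a | a) -
      · have := hea a; simp only [hfl]; constructor <;> omega
      · have := hea a; simp only [hfr]; constructor <;> omega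
    · rintro (a | a) - (b | b) - hab <;>
        simp only [hfl, hfr, Sum.elim_inl, Sum.elim_inr] at hab
      · have hab' : e a = e b := Fin.ext (by omega)
        rw [e.injective hab']
      · exact absurd hab (by have := hea a; have := hea b; omega)
      · exact absurd hab (by have := hea a; have := hea b; omega)
      · have hab' : e a = e b := Fin.ext (by omega)
        rw [e.injective hab']
    · intro y hy
      rw [Set.mem_Icc] at hy
      by_cases hyn : y ≤ n
      · refine ⟨Sum.inl (e.symm ⟨y - 1, by omega⟩), Set.mem_univ _, ?_⟩
        simp only [hfl]
        rw [e.apply_symm_apply]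
        show y - 1 + 1 = y
        omega
      · refine ⟨Sum.inr (e.symm ⟨y - n - 1, by omega⟩), Set.mem_univ _, ?_⟩
        simp only [hfr]
        rw [e.apply_symm_apply]
        show n + (y - n - 1) + 1 = y
        omega
  -- degrees
  have hcardq : (univ.filter fun a : V => (e a : ℕ) < d).card = d := by
    have h1 : (univ.filter fun a : V => (e a : ℕ) < d).card
        = (univ.filter fun i : Fin n => (i : ℕ) < d).card := by
      apply Finset.card_bij' (fun a _ => e a) (fun i _ => e.symm i) <;> simp
    rw [h1]
    have h2 : (univ.filter fun i : Fin n => (i : ℕ) < d) = Finset.Iio (⟨d, hdn⟩ : Fin n) := by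
      ext i; simp [Fin.lt_def]
    rw [h2, Fin.card_Iio]
  have hdegr : ∀ b : V, G.degree (Sum.inr b) = d := by
    intro b
    have hnbhd : G.neighborFinset (Sum.inr b)
        = (univ.filter fun a : V => (e a : ℕ) < d).map ⟨Sum.inl, Sum.inl_injective⟩ := by
      ext x
      cases x <;> simp [SimpleGraph.mem_neighborFinset, G, q]
    rw [← SimpleGraph.card_neighborFinset_eq_degree, hnbhd, Finset.card_map, hcardq]
  have hdegl : ∀ a : V, d ≤ G.degree (Sum.inl a) := by
    intro a
    have hsub : (H.neighborFinset a).map ⟨Sum.inl, Sum.inl_injective⟩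
        ⊆ G.neighborFinset (Sum.inl a) := by
      intro x hx
      simp only [Finset.mem_map, Function.Embedding.coeFn_mk] at hx
      obtain ⟨c, hc, rfl⟩ := hx
      rw [SimpleGraph.mem_neighborFinset] at hc ⊢
      exact hc
    calc d ≤ H.degree a := H.minDegree_le_degree a
    _ = ((H.neighborFinset a).map ⟨Sum.inl, Sum.inl_injective⟩).card := by
        rw [Finset.card_map, SimpleGraph.card_neighborFinset_eq_degree]
    _ ≤ (G.neighborFinset (Sum.inl a)).card := Finset.card_le_card hsub
    _ = G.degree (Sum.inl a) := SimpleGraph.card_neighborFinset_eq_degree _ _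
  have hminG : G.minDegree = d := by
    apply le_antisymm
    · rw [← hdegr b0]; exact G.minDegree_le_degree (Sum.inr b0)
    · apply G.le_minDegree_of_forall_le_degree
      rintro (a | a)
      · exact hdegl a
      · rw [hdegr a]
  -- strength of G
  have hstrOf : strOf G f ≤ (n + n) + d := by
    apply csSup_le'
    rintro x ⟨u, v, huv, rfl⟩
    rcases u with a | a <;> rcases v with b | b <;>
      simp only [hfl, hfr]
    · have := hea a; have := hea b; omega
    · have hq : (e a : ℕ) < d := huv
      have := hea b; omega
    · have hq : (e b : ℕ) < d := huv
      have := hea a; omega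
    · exact huv.elim
  have hstrength : strength G = Fintype.card (V ⊕ V) + G.minDegree := by
    rw [hcardW, hminG]
    apply le_antisymm
    · calc strength G ≤ strOf G f := Nat.sInf_le ⟨f, hf, rfl⟩
      _ ≤ (n + n) + d := hstrOf
    · refine le_csInf ⟨strOf G f, ⟨f, hf, rfl⟩⟩ ?_
      rintro x ⟨g, hg, rfl⟩
      have := le_strOf_of_numbering G (by omega : 1 ≤ G.minDegree) g hg
      rwa [hcardW, hminG] at this
  refine ⟨V ⊕ V, inferInstance, G, instDec, ⟨Sum.inl, Sum.inl_injective⟩, ?_, ?_, ?_, ?_⟩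
  · intro a b hab; exact hab
  · left
    intro h
    have : Sum.inr b0 ∈ Set.range (Sum.inl : V → V ⊕ V) := by
      rw [show Set.range (fun a => (⟨Sum.inl, Sum.inl_injective⟩ : V ↪ V ⊕ V) a) = Set.range Sum.inl from rfl] at h
      rw [h]; trivial
    obtain ⟨a, ha⟩ := this
    exact Sum.inl_ne_inr ha
  · exact hminG
  · exact hstrength
end

section
/- If G is a graph of order p with independence number α, then str(G) ≥ 2p − 2α + 1. -/
open Finset

/-- The independence number of `G`: the maximum size of a set of pairwise
non-adjacent vertices. -/
noncomputable def indepNum {V : Type*} [Fintype V] (G : SimpleGraph V) : ℕ :=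
  sSup {n | ∃ s : Finset V, (∀ u ∈ s, ∀ v ∈ s, u ≠ v → ¬ G.Adj u v) ∧ n = s.card}

/-- If `G` has order `p` and independence number `α`, then `str(G) ≥ 2p - 2α + 1`. -/
theorem strength_ge_of_indepNum {V : Type*} [Fintype V] (G : SimpleGraph V)
    (hE : ∃ u v, G.Adj u v) :
    2 * Fintype.card V - 2 * indepNum G + 1 ≤ strength G := by
  classical
  set p := Fintype.card V with hp
  -- a numbering exists
  have hnum : ∃ f : V → ℕ, IsNumbering f := by
    refine ⟨fun v => (Fintype.equivFin V v : ℕ) + 1, ?_, ?_, ?_⟩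
    · intro v _
      have := (Fintype.equivFin V v).isLt
      simp only [Set.mem_Icc]
      omega
    · intro a _ b _ h
      have h' : ((Fintype.equivFin V) a : ℕ) + 1 = ((Fintype.equivFin V) b : ℕ) + 1 := h
      exact (Fintype.equivFin V).injective (Fin.ext (by omega))
    · intro m hm
      simp only [Set.mem_Icc] at hm
      refine ⟨(Fintype.equivFin V).symm ⟨m - 1, by omega⟩, Set.mem_univ _, ?_⟩
      simp only [Equiv.apply_symm_apply]
      omega
  have hne : {n | ∃ f : V → ℕ, IsNumbering f ∧ strOf G f = n}.Nonempty := by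
    obtain ⟨f, hf⟩ := hnum
    exact ⟨strOf G f, f, hf, rfl⟩
  obtain ⟨f, hf, hfk⟩ := Nat.sInf_mem hne
  rw [strength, ← hfk]
  -- facts about f
  have hmaps : ∀ v, 1 ≤ f v ∧ f v ≤ p := by
    intro v
    have := hf.mapsTo (Set.mem_univ v)
    simpa [Set.mem_Icc] using this
  have hinj : Function.Injective f := fun a b h =>
    hf.injOn (Set.mem_univ a) (Set.mem_univ b) h
  -- the edge-sum set
  set K := {n | ∃ u v, G.Adj u v ∧ n = f u + f v} with hK
  have hKne : K.Nonempty := by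
    obtain ⟨u, v, huv⟩ := hE
    exact ⟨f u + f v, u, v, huv, rfl⟩
  have hKbdd : BddAbove K := by
    refine ⟨2 * p, fun n hn => ?_⟩
    obtain ⟨u, v, _, rfl⟩ := hn
    have h1 := hmaps u
    have h2 := hmaps v
    omega
  set k := strOf G f with hkdef
  have hkmem : k ∈ K := Nat.sSup_mem hKne hKbdd
  have hle : ∀ n ∈ K, n ≤ k := fun n hn => le_csSup hKbdd hn
  obtain ⟨u0, v0, hadj0, hk0⟩ := hkmem
  have hne0 : f u0 ≠ f v0 := fun h => hadj0.ne (hinj h)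
  set t := (k + 1) / 2 with ht
  set s : Finset V := Finset.univ.filter (fun v => t ≤ f v) with hs
  have hindep : ∀ u ∈ s, ∀ v ∈ s, u ≠ v → ¬ G.Adj u v := by
    intro u hu v hv huv hadj
    simp only [hs, Finset.mem_filter] at hu hv
    have h1 : f u + f v ≤ k := hle _ ⟨u, v, hadj, rfl⟩
    have h2 : f u ≠ f v := fun h => huv (hinj h)
    omega
  have hcard : s.card = (Finset.Icc t p).card := by
    apply Finset.card_nbij f
    · intro v hv
      simp only [hs, Finset.mem_filter] at hv
      have := hmaps v
      simp only [hs, Finset.mem_Icc, Finset.coe_Icc, Set.mem_Icc, Finset.mem_coe, Finset.coe_filter, Finset.mem_filter, Finset.mem_univ, true_and, Set.mem_setOf_eq] at hv ⊢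
      omega
    · exact Set.InjOn.mono (fun x _ => Set.mem_univ x) hf.injOn
    · intro m hm
      simp only [Finset.coe_Icc, Set.mem_Icc] at hm
      have ht1 : 1 ≤ t := by
        have := hmaps u0
        have := hmaps v0
        omega
      obtain ⟨v, -, hv⟩ := hf.surjOn (Set.mem_Icc.mpr ⟨le_trans ht1 hm.1, hm.2⟩)
      refine ⟨v, ?_, hv⟩
      simp only [hs, Finset.coe_filter, Set.mem_setOf_eq, Finset.mem_univ, true_and]
      omega
  have hαbdd : BddAbove {n | ∃ s : Finset V, (∀ u ∈ s, ∀ v ∈ s, u ≠ v → ¬ G.Adj u v) ∧ n = s.card} := by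
    refine ⟨p, fun n hn => ?_⟩
    obtain ⟨s', -, rfl⟩ := hn
    exact Finset.card_le_univ s'
  have hα : s.card ≤ indepNum G := le_csSup hαbdd ⟨s, hindep, rfl⟩
  rw [Nat.card_Icc] at hcard
  have h1 := hmaps u0
  have h2 := hmaps v0
  omega
end

section
/- Let G be the disjoint union of h even cycles C_{2m₁},…,C_{2m_h} (each m_i ≥ 2) and k odd cycles C_{2n₁+1},…,C_{2n_k+1} (each n_j ≥ 1), with h + k ≥ 1, and let p be the order of G. Then str(G) = max{p + 2, p + 1 + k}. -/
open Finset

/-- The disjoint union of the even cycles `C_{2 m 0}, …, C_{2 m (h-1)}` and of the odd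
cycles `C_{2 n 0 + 1}, …, C_{2 n (k-1) + 1}`: within each cycle, consecutive vertices
(cyclically) are adjacent. -/
def cyclesUnion (h k : ℕ) (m : Fin h → ℕ) (n : Fin k → ℕ) :
    SimpleGraph ((Σ i : Fin h, Fin (2 * m i)) ⊕ (Σ j : Fin k, Fin (2 * n j + 1))) where
  Adj x y :=
    match x, y with
    | .inl ⟨i, a⟩, .inl ⟨i', a'⟩ =>
        i = i' ∧ (a : ℕ) ≠ (a' : ℕ) ∧
          (((a : ℕ) + 1) % (2 * m i) = (a' : ℕ) ∨ ((a' : ℕ) + 1) % (2 * m i') = (a : ℕ))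
    | .inr ⟨j, b⟩, .inr ⟨j', b'⟩ =>
        j = j' ∧ (b : ℕ) ≠ (b' : ℕ) ∧
          (((b : ℕ) + 1) % (2 * n j + 1) = (b' : ℕ) ∨ ((b' : ℕ) + 1) % (2 * n j' + 1) = (b : ℕ))
    | _, _ => False
  symm := by
    constructor
    rintro (⟨i, a⟩ | ⟨j, b⟩) (⟨i', a'⟩ | ⟨j', b'⟩) hadj
    · obtain ⟨rfl, hne, hm⟩ := hadj; exact ⟨rfl, hne.symm, hm.symm⟩
    · exact hadj
    · exact hadj
    · obtain ⟨rfl, hne, hm⟩ := hadj; exact ⟨rfl, hne.symm, hm.symm⟩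
  loopless := by
    constructor
    rintro (⟨i, a⟩ | ⟨j, b⟩) hadj
    · exact hadj.2.1 rfl
    · exact hadj.2.1 rfl

namespace CU

lemma sum_split {r : ℕ} (q : Fin r → ℕ) (i : Fin r) :
    (∑ x ∈ Iio i, q x) + q i + (∑ x ∈ Ioi i, q x) = ∑ x, q x := by
  have h1 : insert i (Ioi i) = Ici i := Finset.Ioi_insert i
  have h2 : Iio i ∪ Ici i = univ := by
    ext x; simp only [mem_union, mem_Iio, mem_Ici, mem_univ, iff_true]
    exact lt_or_ge x i
  have h3 : Disjoint (Iio i) (Ici i) := by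
    simp only [Finset.disjoint_left, mem_Iio, mem_Ici]
    exact fun x hx hx' => absurd hx' (not_le.2 hx)
  rw [add_assoc, ← Finset.sum_insert (by simp : i ∉ Ioi i), h1, ← Finset.sum_union h3, h2]

lemma sum_lt_le {r : ℕ} (q : Fin r → ℕ) {i i' : Fin r} (hii : i < i') :
    (∑ x ∈ Iio i, q x) + q i ≤ ∑ x ∈ Iio i', q x := by
  rw [add_comm, ← Finset.sum_insert (by simp : i ∉ Iio i)]
  apply Finset.sum_le_sum_of_subset
  intro x hx
  simp only [mem_insert, mem_Iio] at hx ⊢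
  rcases hx with rfl | hx
  · exact hii
  · exact hx.trans hii

lemma sum_gt_le {r : ℕ} (q : Fin r → ℕ) {i i' : Fin r} (hii : i < i') :
    (∑ x ∈ Ioi i', q x) + q i' ≤ ∑ x ∈ Ioi i, q x := by
  rw [add_comm, ← Finset.sum_insert (by simp : i' ∉ Ioi i')]
  apply Finset.sum_le_sum_of_subset
  intro x hx
  simp only [mem_insert, mem_Ioi] at hx ⊢
  rcases hx with rfl | hx
  · exact hii
  · exact hii.trans hx

lemma sum_Iio_le {r : ℕ} (q : Fin r → ℕ) (i : Fin r) :
    (∑ x ∈ Iio i, q x) + q i ≤ ∑ x, q x := by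
  have := sum_split q i; omega

lemma sum_Ioi_le {r : ℕ} (q : Fin r → ℕ) (i : Fin r) :
    (∑ x ∈ Ioi i, q x) + q i ≤ ∑ x, q x := by
  have := sum_split q i; omega

variable {h k : ℕ} (m : Fin h → ℕ) (n : Fin k → ℕ)

def Me : ℕ := ∑ i, m i
def Ne : ℕ := ∑ j, n j
def al : ℕ := Me m + Ne n
def SE (i : Fin h) : ℕ := ∑ x ∈ Iio i, m x
def NO (j : Fin k) : ℕ := ∑ x ∈ Iio j, n x
def NP (j : Fin k) : ℕ := ∑ x ∈ Iio j, (n x - 1)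
def SO (j : Fin k) : ℕ := Me m + NO n j
def TO (j : Fin k) : ℕ := al m n + 2 * k + ∑ x ∈ Ioi j, (n x - 1)
def TE (i : Fin h) : ℕ := al m n + 2 * k + (∑ j, (n j - 1)) + ∑ x ∈ Ioi i, m x

def fE (i : Fin h) (a : ℕ) : ℕ :=
  if a % 2 = 0 then SE m i + a / 2 + 1 else TE m n i + (m i - a / 2)

def fO (j : Fin k) (b : ℕ) : ℕ :=
  if b % 2 = 0 then
    (if b = 2 * n j then al m n + (2 * k - (j : ℕ)) else SO m n j + b / 2 + 1)
  else
    (if b / 2 + 1 = n j then al m n + (j : ℕ) + 1 else TO m n j + (n j - 1 - b / 2))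

def f0 : ((Σ i : Fin h, Fin (2 * m i)) ⊕ (Σ j : Fin k, Fin (2 * n j + 1))) → ℕ :=
  Sum.elim (fun x => fE m n x.1 x.2) (fun x => fO m n x.1 x.2)

lemma nu_sum (hn : ∀ j, 1 ≤ n j) : (∑ j, (n j - 1)) + k = Ne n := by
  unfold Ne
  have : ∀ j ∈ univ, n j = (n j - 1) + 1 := fun j _ => (Nat.succ_pred_eq_of_pos (hn j)).symm
  rw [Finset.sum_congr rfl this, Finset.sum_add_distrib, Finset.sum_const, card_univ,
    Fintype.card_fin, smul_eq_mul, mul_one]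

lemma nupre (hn : ∀ j, 1 ≤ n j) (j : Fin k) : NP n j + (j : ℕ) = NO n j := by
  unfold NP NO
  have : ∀ x ∈ Iio j, n x = (n x - 1) + 1 := fun x _ => (Nat.succ_pred_eq_of_pos (hn x)).symm
  rw [Finset.sum_congr rfl this, Finset.sum_add_distrib, Finset.sum_const, Fin.card_Iio,
    smul_eq_mul, mul_one]

lemma TE_key (hn : ∀ j, 1 ≤ n j) (i : Fin h) :
    TE m n i + m i + SE m i = 2 * al m n + k := by
  have h1 := sum_split m i
  have h2 := nu_sum n hn
  unfold TE SE al Me Ne at *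
  omega

lemma TO_key (hn : ∀ j, 1 ≤ n j) (j : Fin k) :
    TO m n j + NP n j + (n j - 1) + k = al m n + 2 * k + Ne n := by
  have h1 := sum_split (fun x => n x - 1) j
  have h2 := nu_sum n hn
  unfold TO NP al Me Ne at *
  omega

lemma SO_eq (hn : ∀ j, 1 ≤ n j) (j : Fin k) : SO m n j = Me m + NP n j + (j : ℕ) := by
  unfold SO; rw [← nupre n hn j]; ring

lemma SE_le (i : Fin h) : SE m i + m i ≤ Me m := sum_Iio_le m i
lemma SO_le (j : Fin k) : SO m n j + n j ≤ al m n := by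
  have := sum_Iio_le n j
  unfold SO NO al Ne Me at *
  omega
lemma Me_le_SO (j : Fin k) : Me m ≤ SO m n j := Nat.le_add_right _ _
lemma TO_ge (j : Fin k) : al m n + 2 * k ≤ TO m n j := Nat.le_add_right _ _
lemma NP_le (hn : ∀ j, 1 ≤ n j) (j : Fin k) : NP n j + (n j - 1) + k ≤ Ne n := by
  have h1 := sum_Iio_le (fun x => n x - 1) j
  have h2 := nu_sum n hn
  unfold NP at *
  omega
lemma TE_ge (hn : ∀ j, 1 ≤ n j) (i : Fin h) : al m n + k + Ne n ≤ TE m n i := by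
  have h2 := nu_sum n hn
  unfold TE
  omega
lemma SE_mono {i i' : Fin h} (hii : i < i') : SE m i + m i ≤ SE m i' := sum_lt_le m hii
lemma SO_mono {j j' : Fin k} (hjj : j < j') : SO m n j + n j ≤ SO m n j' := by
  have := sum_lt_le n hjj
  unfold SO NO
  omega
lemma TO_mono {j j' : Fin k} (hjj : j < j') : TO m n j' + (n j' - 1) ≤ TO m n j := by
  have := sum_gt_le (fun x => n x - 1) hjj
  unfold TO
  omega
lemma TE_mono (hn : ∀ j, 1 ≤ n j) {i i' : Fin h} (hii : i < i') :
    TE m n i' + m i' ≤ TE m n i := by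
  have := sum_gt_le m hii
  unfold TE
  omega


lemma fE_even (i : Fin h) (a : ℕ) (hp : a % 2 = 0) :
    fE m n i a = SE m i + a / 2 + 1 := if_pos hp

lemma fE_odd (i : Fin h) (a : ℕ) (hp : a % 2 = 1) :
    fE m n i a = TE m n i + (m i - a / 2) := if_neg (by omega)

lemma fO_cases (hn : ∀ j, 1 ≤ n j) (j : Fin k) (b : ℕ) (hb : b < 2 * n j + 1) :
    (b % 2 = 0 ∧ b < 2 * n j ∧ fO m n j b = SO m n j + b / 2 + 1) ∨
    (b = 2 * n j ∧ fO m n j b = al m n + (2 * k - (j : ℕ))) ∨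
    (b % 2 = 1 ∧ b / 2 + 1 = n j ∧ fO m n j b = al m n + (j : ℕ) + 1) ∨
    (b % 2 = 1 ∧ b / 2 + 1 < n j ∧ fO m n j b = TO m n j + (n j - 1 - b / 2)) := by
  have hnj := hn j
  rcases Nat.mod_two_eq_zero_or_one b with hp | hp
  · by_cases hq : b = 2 * n j
    · exact Or.inr (Or.inl ⟨hq, by unfold fO; rw [if_pos hp, if_pos hq]⟩)
    · exact Or.inl ⟨hp, by omega, by unfold fO; rw [if_pos hp, if_neg hq]⟩
  · by_cases hq : b / 2 + 1 = n j
    · exact Or.inr (Or.inr (Or.inl ⟨hp, hq, by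
        unfold fO; rw [if_neg (by omega), if_pos hq]⟩))
    · refine Or.inr (Or.inr (Or.inr ⟨hp, by omega, by
        unfold fO; rw [if_neg (by omega), if_neg hq]⟩))

lemma fE_lt_absurd (hn : ∀ j, 1 ≤ n j) {i i' : Fin h} (hlt : i < i') {a a' : ℕ}
    (ha : a < 2 * m i) (ha' : a' < 2 * m i')
    (hf : fE m n i a = fE m n i' a') : False := by
  have h1 := SE_le m i
  have h1' := SE_le m i'
  have h2 := SE_mono m hlt
  have h3 := TE_key m n hn i
  have h3' := TE_key m n hn i'
  have hal : al m n = Me m + Ne n := rfl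
  rcases Nat.mod_two_eq_zero_or_one a with hp | hp <;>
    rcases Nat.mod_two_eq_zero_or_one a' with hp' | hp' <;>
    [rw [fE_even m n i a hp, fE_even m n i' a' hp'] at hf;
     rw [fE_even m n i a hp, fE_odd m n i' a' hp'] at hf;
     rw [fE_odd m n i a hp, fE_even m n i' a' hp'] at hf;
     rw [fE_odd m n i a hp, fE_odd m n i' a' hp'] at hf] <;>
    omega

lemma fE_eq_val (hn : ∀ j, 1 ≤ n j) {i : Fin h} {a a' : ℕ}
    (ha : a < 2 * m i) (ha' : a' < 2 * m i)
    (hf : fE m n i a = fE m n i a') : a = a' := by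
  have h1 := SE_le m i
  have h3 := TE_key m n hn i
  have hal : al m n = Me m + Ne n := rfl
  rcases Nat.mod_two_eq_zero_or_one a with hp | hp <;>
    rcases Nat.mod_two_eq_zero_or_one a' with hp' | hp' <;>
    [rw [fE_even m n i a hp, fE_even m n i a' hp'] at hf;
     rw [fE_even m n i a hp, fE_odd m n i a' hp'] at hf;
     rw [fE_odd m n i a hp, fE_even m n i a' hp'] at hf;
     rw [fE_odd m n i a hp, fE_odd m n i a' hp'] at hf] <;>
    omega

lemma fO_lt_absurd (hn : ∀ j, 1 ≤ n j) {j j' : Fin k} (hlt : j < j') {b b' : ℕ}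
    (hb : b < 2 * n j + 1) (hb' : b' < 2 * n j' + 1)
    (hf : fO m n j b = fO m n j' b') : False := by
  have hal : al m n = Me m + Ne n := rfl
  have hnu := nu_sum n hn
  have hjk := j.isLt
  have hjk' := j'.isLt
  have hjj : (j : ℕ) < (j' : ℕ) := hlt
  have hs1 := SO_le m n j
  have hs1' := SO_le m n j'
  have hs2 := Me_le_SO m n j
  have hs2' := Me_le_SO m n j'
  have ht1 := TO_ge m n j
  have ht1' := TO_ge m n j'
  have ht2 := TO_key m n hn j
  have ht2' := TO_key m n hn j'
  have hnp := NP_le n hn j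
  have hnp' := NP_le n hn j'
  have hmo := SO_mono m n hlt
  have hmo' := TO_mono m n hlt
  rcases fO_cases m n hn j b hb with ⟨c1, c2, hv⟩ | ⟨c1, hv⟩ | ⟨c1, c2, hv⟩ | ⟨c1, c2, hv⟩ <;>
    rcases fO_cases m n hn j' b' hb' with ⟨d1, d2, hv'⟩ | ⟨d1, hv'⟩ | ⟨d1, d2, hv'⟩ | ⟨d1, d2, hv'⟩ <;>
    rw [hv, hv'] at hf <;> omega

lemma fO_eq_val (hn : ∀ j, 1 ≤ n j) {j : Fin k} {b b' : ℕ}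
    (hb : b < 2 * n j + 1) (hb' : b' < 2 * n j + 1)
    (hf : fO m n j b = fO m n j b') : b = b' := by
  have hal : al m n = Me m + Ne n := rfl
  have hnu := nu_sum n hn
  have hjk := j.isLt
  have hs1 := SO_le m n j
  have hs2 := Me_le_SO m n j
  have ht1 := TO_ge m n j
  have ht2 := TO_key m n hn j
  have hnp := NP_le n hn j
  rcases fO_cases m n hn j b hb with ⟨c1, c2, hv⟩ | ⟨c1, hv⟩ | ⟨c1, c2, hv⟩ | ⟨c1, c2, hv⟩ <;>
    rcases fO_cases m n hn j b' hb' with ⟨d1, d2, hv'⟩ | ⟨d1, hv'⟩ | ⟨d1, d2, hv'⟩ | ⟨d1, d2, hv'⟩ <;>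
    rw [hv, hv'] at hf <;> omega

lemma fEO_absurd (hn : ∀ j, 1 ≤ n j) {i : Fin h} {j : Fin k} {a b : ℕ}
    (ha : a < 2 * m i) (hb : b < 2 * n j + 1)
    (hf : fE m n i a = fO m n j b) : False := by
  have hal : al m n = Me m + Ne n := rfl
  have hnu := nu_sum n hn
  have hjk := j.isLt
  have h1 := SE_le m i
  have h3 := TE_key m n hn i
  have hs1 := SO_le m n j
  have hs2 := Me_le_SO m n j
  have ht1 := TO_ge m n j
  have ht2 := TO_key m n hn j
  have hnp := NP_le n hn j
  rcases Nat.mod_two_eq_zero_or_one a with hp | hp <;>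
    [rw [fE_even m n i a hp] at hf; rw [fE_odd m n i a hp] at hf] <;>
    rcases fO_cases m n hn j b hb with ⟨d1, d2, hv'⟩ | ⟨d1, hv'⟩ | ⟨d1, d2, hv'⟩ | ⟨d1, d2, hv'⟩ <;>
    rw [hv'] at hf <;> omega

lemma f0_inj (hn : ∀ j, 1 ≤ n j) : Function.Injective (f0 m n) := by
  rintro (⟨i, a⟩ | ⟨j, b⟩) (⟨i', a'⟩ | ⟨j', b'⟩) hf <;>
    simp only [f0, Sum.elim_inl, Sum.elim_inr] at hf
  · rcases lt_trichotomy i i' with hlt | heq | hgt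
    · exact absurd (fE_lt_absurd m n hn hlt a.isLt a'.isLt hf) (by simp)
    · subst heq
      have : (a : ℕ) = (a' : ℕ) := fE_eq_val m n hn a.isLt a'.isLt hf
      rw [Fin.ext this]
    · exact absurd (fE_lt_absurd m n hn hgt a'.isLt a.isLt hf.symm) (by simp)
  · exact absurd (fEO_absurd m n hn a.isLt b'.isLt hf) (by simp)
  · exact absurd (fEO_absurd m n hn a'.isLt b.isLt hf.symm) (by simp)
  · rcases lt_trichotomy j j' with hlt | heq | hgt
    · exact absurd (fO_lt_absurd m n hn hlt b.isLt b'.isLt hf) (by simp)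
    · subst heq
      have : (b : ℕ) = (b' : ℕ) := fO_eq_val m n hn b.isLt b'.isLt hf
      rw [Fin.ext this]
    · exact absurd (fO_lt_absurd m n hn hgt b'.isLt b.isLt hf.symm) (by simp)

lemma f0_mem (hn : ∀ j, 1 ≤ n j) (v : (Σ i : Fin h, Fin (2 * m i)) ⊕ (Σ j : Fin k, Fin (2 * n j + 1))) :
    1 ≤ f0 m n v ∧ f0 m n v ≤ 2 * al m n + k := by
  have hal : al m n = Me m + Ne n := rfl
  have hnu := nu_sum n hn
  rcases v with ⟨i, a⟩ | ⟨j, b⟩ <;>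
    simp only [f0, Sum.elim_inl, Sum.elim_inr]
  · have ha := a.isLt
    have h1 := SE_le m i
    have h3 := TE_key m n hn i
    rcases Nat.mod_two_eq_zero_or_one (a : ℕ) with hp | hp <;>
      [rw [fE_even m n i a hp]; rw [fE_odd m n i a hp]] <;> omega
  · have hb := b.isLt
    have hjk := j.isLt
    have hs1 := SO_le m n j
    have hs2 := Me_le_SO m n j
    have ht1 := TO_ge m n j
    have ht2 := TO_key m n hn j
    have hnp := NP_le n hn j
    rcases fO_cases m n hn j b hb with ⟨d1, d2, hv'⟩ | ⟨d1, hv'⟩ | ⟨d1, d2, hv'⟩ | ⟨d1, d2, hv'⟩ <;>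
      rw [hv'] <;> omega

lemma bound_E (hn : ∀ j, 1 ≤ n j) (i : Fin h) (a a' : ℕ)
    (ha : a < 2 * m i) (ha' : a' < 2 * m i) (hrel : (a + 1) % (2 * m i) = a') :
    fE m n i a + fE m n i a' ≤ 2 * al m n + k + 2 := by
  have h1 := SE_le m i
  have h3 := TE_key m n hn i
  have hsucc : a' = a + 1 ∨ (a + 1 = 2 * m i ∧ a' = 0) := by
    rcases Nat.lt_or_ge (a + 1) (2 * m i) with hlt | hge
    · left; rw [Nat.mod_eq_of_lt hlt] at hrel; omega
    · right
      have he : a + 1 = 2 * m i := by omega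
      rw [he, Nat.mod_self] at hrel; omega
  rcases Nat.mod_two_eq_zero_or_one a with hp | hp <;>
    rcases Nat.mod_two_eq_zero_or_one a' with hp' | hp' <;>
    [rw [fE_even m n i a hp, fE_even m n i a' hp'];
     rw [fE_even m n i a hp, fE_odd m n i a' hp'];
     rw [fE_odd m n i a hp, fE_even m n i a' hp'];
     rw [fE_odd m n i a hp, fE_odd m n i a' hp']] <;>
    omega

lemma bound_O (hn : ∀ j, 1 ≤ n j) (j : Fin k) (b b' : ℕ)
    (hb : b < 2 * n j + 1) (hb' : b' < 2 * n j + 1) (hrel : (b + 1) % (2 * n j + 1) = b') :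
    fO m n j b + fO m n j b' ≤ 2 * al m n + 2 * k + 1 := by
  have hal : al m n = Me m + Ne n := rfl
  have hnu := nu_sum n hn
  have hjk := j.isLt
  have hnj := hn j
  have hs1 := SO_le m n j
  have hs2 := SO_eq m n hn j
  have ht1 := TO_ge m n j
  have ht2 := TO_key m n hn j
  have hnp := NP_le n hn j
  have hsucc : b' = b + 1 ∨ (b = 2 * n j ∧ b' = 0) := by
    rcases Nat.lt_or_ge (b + 1) (2 * n j + 1) with hlt | hge
    · left; rw [Nat.mod_eq_of_lt hlt] at hrel; omega
    · right
      have he : b + 1 = 2 * n j + 1 := by omega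
      rw [he, Nat.mod_self] at hrel; omega
  rcases fO_cases m n hn j b hb with ⟨c1, c2, hv⟩ | ⟨c1, hv⟩ | ⟨c1, c2, hv⟩ | ⟨c1, c2, hv⟩ <;>
    rcases fO_cases m n hn j b' hb' with ⟨d1, d2, hv'⟩ | ⟨d1, hv'⟩ | ⟨d1, d2, hv'⟩ | ⟨d1, d2, hv'⟩ <;>
    rw [hv, hv'] <;> omega

lemma card_V :
    Fintype.card ((Σ i : Fin h, Fin (2 * m i)) ⊕ (Σ j : Fin k, Fin (2 * n j + 1))) =
      2 * al m n + k := by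
  rw [Fintype.card_sum, Fintype.card_sigma, Fintype.card_sigma]
  simp only [Fintype.card_fin]
  rw [Finset.sum_add_distrib, Finset.sum_const, card_univ, Fintype.card_fin, smul_eq_mul, mul_one,
    ← Finset.mul_sum, ← Finset.mul_sum]
  unfold al Me Ne
  ring

lemma f0_numbering (hn : ∀ j, 1 ≤ n j) : IsNumbering (f0 m n) := by
  have hcard := card_V m n
  have hmem := f0_mem m n hn
  have hinj := f0_inj m n hn
  have himg : Finset.image (f0 m n) Finset.univ = Finset.Icc 1 (2 * al m n + k) := by
    apply Finset.eq_of_subset_of_card_le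
    · intro x hx
      rw [Finset.mem_image] at hx
      obtain ⟨v, -, rfl⟩ := hx
      rw [Finset.mem_Icc]
      exact hmem v
    · rw [Finset.card_image_of_injective _ hinj, card_univ, hcard, Nat.card_Icc]
      omega
  refine ⟨fun v _ => ?_, hinj.injOn, fun x hx => ?_⟩
  · rw [hcard, Set.mem_Icc]
    exact hmem v
  · rw [hcard, Set.mem_Icc] at hx
    have : x ∈ Finset.image (f0 m n) Finset.univ := by
      rw [himg, Finset.mem_Icc]; exact hx
    rw [Finset.mem_image] at this
    obtain ⟨v, -, rfl⟩ := this
    exact ⟨v, Set.mem_univ v, rfl⟩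

lemma succ_pred (q a : ℕ) (hq : 3 ≤ q) (ha : a < q) :
    ∃ s t : ℕ, s < q ∧ t < q ∧ s ≠ t ∧ a ≠ s ∧ a ≠ t ∧ (a + 1) % q = s ∧ (t + 1) % q = a := by
  by_cases h0 : a = 0
  · subst h0
    refine ⟨1, q - 1, by omega, by omega, by omega, by omega, by omega, ?_, ?_⟩
    · exact Nat.mod_eq_of_lt (by omega)
    · rw [Nat.sub_add_cancel (by omega), Nat.mod_self]
  · by_cases h1 : a = q - 1
    · refine ⟨0, a - 1, by omega, by omega, by omega, by omega, by omega, ?_, ?_⟩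
      · rw [show a + 1 = q by omega, Nat.mod_self]
      · rw [show a - 1 + 1 = a by omega]; exact Nat.mod_eq_of_lt ha
    · refine ⟨a + 1, a - 1, by omega, by omega, by omega, by omega, by omega, ?_, ?_⟩
      · exact Nat.mod_eq_of_lt (by omega)
      · rw [show a - 1 + 1 = a by omega]; exact Nat.mod_eq_of_lt ha

lemma two_nbrs (hm : ∀ i, 2 ≤ m i) (hn : ∀ j, 1 ≤ n j)
    (u : (Σ i : Fin h, Fin (2 * m i)) ⊕ (Σ j : Fin k, Fin (2 * n j + 1))) :
    ∃ v w, v ≠ w ∧ (cyclesUnion h k m n).Adj u v ∧ (cyclesUnion h k m n).Adj u w := by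
  rcases u with ⟨i, a⟩ | ⟨j, b⟩
  · obtain ⟨s, t, hs, ht, hst, has, hat, hseq, hteq⟩ :=
      succ_pred (2 * m i) (a : ℕ) (by have := hm i; omega) a.isLt
    refine ⟨Sum.inl ⟨i, ⟨s, hs⟩⟩, Sum.inl ⟨i, ⟨t, ht⟩⟩, ?_, ⟨rfl, has, Or.inl hseq⟩,
      ⟨rfl, hat, Or.inr hteq⟩⟩
    intro hcon
    have h1 := Sum.inl_injective hcon
    exact hst (congrArg Fin.val (eq_of_heq (Sigma.ext_iff.mp h1).2))
  · obtain ⟨s, t, hs, ht, hst, has, hat, hseq, hteq⟩ :=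
      succ_pred (2 * n j + 1) (b : ℕ) (by have := hn j; omega) b.isLt
    refine ⟨Sum.inr ⟨j, ⟨s, hs⟩⟩, Sum.inr ⟨j, ⟨t, ht⟩⟩, ?_, ⟨rfl, has, Or.inl hseq⟩,
      ⟨rfl, hat, Or.inr hteq⟩⟩
    intro hcon
    have h1 := Sum.inr_injective hcon
    exact hst (congrArg Fin.val (eq_of_heq (Sigma.ext_iff.mp h1).2))

lemma indep_card {q : ℕ} (hq : 2 ≤ q) (I : Finset (Fin q))
    (hind : ∀ a ∈ I, (⟨((a : ℕ) + 1) % q, Nat.mod_lt _ (by omega)⟩ : Fin q) ∉ I) :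
    2 * I.card ≤ q := by
  set φ : Fin q → Fin q := fun a => ⟨((a : ℕ) + 1) % q, Nat.mod_lt _ (by omega)⟩ with hφ
  have hinj : Function.Injective φ := by
    intro a b hab
    have hav := a.isLt
    have hbv := b.isLt
    have : ((a : ℕ) + 1) % q = ((b : ℕ) + 1) % q := congrArg Fin.val hab
    apply Fin.ext
    rcases Nat.lt_or_ge ((a : ℕ) + 1) q with h1 | h1 <;>
      rcases Nat.lt_or_ge ((b : ℕ) + 1) q with h2 | h2
    · rw [Nat.mod_eq_of_lt h1, Nat.mod_eq_of_lt h2] at this; omega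
    · rw [Nat.mod_eq_of_lt h1, show (b : ℕ) + 1 = q by omega, Nat.mod_self] at this; omega
    · rw [Nat.mod_eq_of_lt h2, show (a : ℕ) + 1 = q by omega, Nat.mod_self] at this; omega
    · omega
  have hdisj : Disjoint I (I.image φ) := by
    rw [Finset.disjoint_right]
    intro x hx
    rw [Finset.mem_image] at hx
    obtain ⟨a, ha, rfl⟩ := hx
    exact hind a ha
  have hcard : I.card + (I.image φ).card ≤ q := by
    rw [← Finset.card_union_of_disjoint hdisj]
    calc (I ∪ I.image φ).card ≤ (Finset.univ : Finset (Fin q)).card :=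
          Finset.card_le_card (Finset.subset_univ _)
      _ = q := by rw [card_univ, Fintype.card_fin]
  rw [Finset.card_image_of_injective _ hinj] at hcard
  omega

lemma mod_succ_ne (q a : ℕ) (hq : 2 ≤ q) (ha : a < q) : (a + 1) % q ≠ a := by
  rcases Nat.lt_or_ge (a + 1) q with h1 | h1
  · rw [Nat.mod_eq_of_lt h1]; omega
  · rw [show a + 1 = q by omega, Nat.mod_self]; omega

lemma no_indep (hm : ∀ i, 2 ≤ m i) (hn : ∀ j, 1 ≤ n j)
    (A : Finset ((Σ i : Fin h, Fin (2 * m i)) ⊕ (Σ j : Fin k, Fin (2 * n j + 1))))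
    (hA : al m n + 1 ≤ A.card) :
    ∃ u ∈ A, ∃ v ∈ A, (cyclesUnion h k m n).Adj u v := by
  by_contra hcon
  push_neg at hcon
  classical
  set AL : Finset (Σ i : Fin h, Fin (2 * m i)) :=
    univ.filter (fun x => Sum.inl x ∈ A) with hAL
  set AR : Finset (Σ j : Fin k, Fin (2 * n j + 1)) :=
    univ.filter (fun x => Sum.inr x ∈ A) with hAR
  have hsub : A ⊆ (AL.image Sum.inl) ∪ (AR.image Sum.inr) := by
    intro v hv
    rcases v with x | x
    · exact Finset.mem_union_left _ (Finset.mem_image.2 ⟨x, by simp [hAL, hv], rfl⟩)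
    · exact Finset.mem_union_right _ (Finset.mem_image.2 ⟨x, by simp [hAR, hv], rfl⟩)
  have hcardsplit : A.card ≤ AL.card + AR.card := by
    calc A.card ≤ ((AL.image Sum.inl) ∪ (AR.image Sum.inr)).card := Finset.card_le_card hsub
      _ ≤ (AL.image Sum.inl).card + (AR.image Sum.inr).card := Finset.card_union_le _ _
      _ ≤ AL.card + AR.card := by gcongr <;> exact Finset.card_image_le
  have hALcard : AL.card ≤ ∑ i, m i := by
    rw [Finset.card_eq_sum_card_fiberwise (fun x _ => Finset.mem_univ x.1)]
    apply Finset.sum_le_sum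
    intro i _
    set I : Finset (Fin (2 * m i)) := univ.filter (fun a => Sum.inl ⟨i, a⟩ ∈ A) with hI
    have hfib : I.card = (AL.filter (fun x => x.1 = i)).card := by
      apply Finset.card_bij (fun a _ => (⟨i, a⟩ : Σ i : Fin h, Fin (2 * m i)))
      · intro a ha
        rw [Finset.mem_filter] at ha ⊢
        exact ⟨by rw [hAL, Finset.mem_filter]; exact ⟨Finset.mem_univ _, ha.2⟩, rfl⟩
      · intro a ha a' ha' heq
        exact eq_of_heq (Sigma.ext_iff.mp heq).2
      · rintro ⟨i', a⟩ hx
        rw [Finset.mem_filter] at hx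
        obtain ⟨hx1, hx2⟩ := hx
        dsimp at hx2
        subst hx2
        rw [hAL, Finset.mem_filter] at hx1
        exact ⟨a, by rw [hI, Finset.mem_filter]; exact ⟨Finset.mem_univ _, hx1.2⟩, rfl⟩
    rw [← hfib]
    have hq : 2 ≤ 2 * m i := by have := hm i; omega
    have := indep_card hq I ?_
    · omega
    · intro a ha hsucc
      rw [hI, Finset.mem_filter] at ha hsucc
      refine hcon _ ha.2 _ hsucc.2 ?_
      exact ⟨rfl, fun hc => mod_succ_ne (2 * m i) (a : ℕ) hq a.isLt hc.symm, Or.inl rfl⟩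
  have hARcard : AR.card ≤ ∑ j, n j := by
    rw [Finset.card_eq_sum_card_fiberwise (fun x _ => Finset.mem_univ x.1)]
    apply Finset.sum_le_sum
    intro j _
    set I : Finset (Fin (2 * n j + 1)) := univ.filter (fun b => Sum.inr ⟨j, b⟩ ∈ A) with hI
    have hfib : I.card = (AR.filter (fun x => x.1 = j)).card := by
      apply Finset.card_bij (fun b _ => (⟨j, b⟩ : Σ j : Fin k, Fin (2 * n j + 1)))
      · intro b hb
        rw [Finset.mem_filter] at hb ⊢
        exact ⟨by rw [hAR, Finset.mem_filter]; exact ⟨Finset.mem_univ _, hb.2⟩, rfl⟩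
      · intro b hb b' hb' heq
        exact eq_of_heq (Sigma.ext_iff.mp heq).2
      · rintro ⟨j', b⟩ hx
        rw [Finset.mem_filter] at hx
        obtain ⟨hx1, hx2⟩ := hx
        dsimp at hx2
        subst hx2
        rw [hAR, Finset.mem_filter] at hx1
        exact ⟨b, by rw [hI, Finset.mem_filter]; exact ⟨Finset.mem_univ _, hx1.2⟩, rfl⟩
    rw [← hfib]
    have hq : 2 ≤ 2 * n j + 1 := by have := hn j; omega
    have := indep_card hq I ?_
    · omega
    · intro b hb hsucc
      rw [hI, Finset.mem_filter] at hb hsucc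
      refine hcon _ hb.2 _ hsucc.2 ?_
      exact ⟨rfl, fun hc => mod_succ_ne (2 * n j + 1) (b : ℕ) hq b.isLt hc.symm, Or.inl rfl⟩
  have : al m n = (∑ i, m i) + ∑ j, n j := rfl
  omega

lemma alk_pos (hm : ∀ i, 2 ≤ m i) (hhk : 1 ≤ h + k) : 1 ≤ al m n + k := by
  by_cases hk : k = 0
  · subst hk
    have hh : 0 < h := by omega
    have h1 : m ⟨0, hh⟩ ≤ Me m :=
      Finset.single_le_sum (f := m) (fun i _ => Nat.zero_le _) (Finset.mem_univ _)
    have h2 := hm ⟨0, hh⟩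
    have : al m n = Me m + Ne n := rfl
    omega
  · omega

lemma edge_bddAbove (f : ((Σ i : Fin h, Fin (2 * m i)) ⊕ (Σ j : Fin k, Fin (2 * n j + 1))) → ℕ)
    (hf : IsNumbering f) :
    BddAbove {x | ∃ u v, (cyclesUnion h k m n).Adj u v ∧ x = f u + f v} := by
  refine ⟨2 * (2 * al m n + k), ?_⟩
  rintro x ⟨u, v, -, rfl⟩
  have h1 := (hf.1 (Set.mem_univ u)).2
  have h2 := (hf.1 (Set.mem_univ v)).2
  rw [card_V] at h1 h2
  omega

lemma lb1 (hm : ∀ i, 2 ≤ m i) (hn : ∀ j, 1 ≤ n j) (hhk : 1 ≤ h + k)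
    (f : ((Σ i : Fin h, Fin (2 * m i)) ⊕ (Σ j : Fin k, Fin (2 * n j + 1))) → ℕ)
    (hf : IsNumbering f) :
    2 * al m n + k + 2 ≤ strOf (cyclesUnion h k m n) f := by
  have hp1 : 1 ≤ 2 * al m n + k := by have := alk_pos m n hm hhk; omega
  obtain ⟨u, -, hu⟩ := hf.2.2 (show (2 * al m n + k) ∈ Set.Icc 1 (Fintype.card _) by
    rw [card_V]; exact ⟨hp1, le_rfl⟩)
  obtain ⟨v, w, hvw, huv, huw⟩ := two_nbrs m n hm hn u
  have hne : f v ≠ f w := fun hc => hvw (hf.2.1 (Set.mem_univ v) (Set.mem_univ w) hc)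
  have h1 := (hf.1 (Set.mem_univ v)).1
  have h2 := (hf.1 (Set.mem_univ w)).1
  have hbdd := edge_bddAbove m n f hf
  have hm1 : (f u + f v) ∈ {x | ∃ u' v', (cyclesUnion h k m n).Adj u' v' ∧ x = f u' + f v'} :=
    ⟨u, v, huv, rfl⟩
  have hm2 : (f u + f w) ∈ {x | ∃ u' v', (cyclesUnion h k m n).Adj u' v' ∧ x = f u' + f v'} :=
    ⟨u, w, huw, rfl⟩
  rcases Nat.lt_or_ge (f v) 2 with hfv | hfv
  · have : 2 ≤ f w := by omega
    calc 2 * al m n + k + 2 = f u + 2 := by omega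
      _ ≤ f u + f w := by omega
      _ ≤ strOf (cyclesUnion h k m n) f := le_csSup hbdd hm2
  · calc 2 * al m n + k + 2 = f u + 2 := by omega
      _ ≤ f u + f v := by omega
      _ ≤ strOf (cyclesUnion h k m n) f := le_csSup hbdd hm1

lemma lb2 (hm : ∀ i, 2 ≤ m i) (hn : ∀ j, 1 ≤ n j) (hhk : 1 ≤ h + k)
    (f : ((Σ i : Fin h, Fin (2 * m i)) ⊕ (Σ j : Fin k, Fin (2 * n j + 1))) → ℕ)
    (hf : IsNumbering f) :
    2 * al m n + 2 * k + 1 ≤ strOf (cyclesUnion h k m n) f := by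
  classical
  have hp1 : 1 ≤ al m n + k := alk_pos m n hm hhk
  set A := univ.filter (fun v => al m n + k ≤ f v) with hA
  have hAcard : A.card = al m n + 1 := by
    have : A.card = (Finset.Icc (al m n + k) (2 * al m n + k)).card := by
      apply Finset.card_bij (fun v _ => f v)
      · intro v hv
        rw [hA, Finset.mem_filter] at hv
        have := (hf.1 (Set.mem_univ v)).2
        rw [card_V] at this
        rw [Finset.mem_Icc]
        exact ⟨hv.2, this⟩
      · intro v hv v' hv' hc
        exact hf.2.1 (Set.mem_univ v) (Set.mem_univ v') hc
      · intro x hx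
        rw [Finset.mem_Icc] at hx
        obtain ⟨v, -, hv⟩ := hf.2.2 (show x ∈ Set.Icc 1 (Fintype.card _) by
          rw [card_V]; exact ⟨by omega, hx.2⟩)
        refine ⟨v, ?_, hv⟩
        rw [hA, Finset.mem_filter]
        exact ⟨Finset.mem_univ _, by omega⟩
    rw [this, Nat.card_Icc]
    omega
  obtain ⟨u, hu, v, hv, huv⟩ := no_indep m n hm hn A (by omega)
  rw [hA, Finset.mem_filter] at hu hv
  have hne : f u ≠ f v := fun hc =>
    (cyclesUnion h k m n).ne_of_adj huv (hf.2.1 (Set.mem_univ u) (Set.mem_univ v) hc)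
  have hmem : (f u + f v) ∈ {x | ∃ u' v', (cyclesUnion h k m n).Adj u' v' ∧ x = f u' + f v'} :=
    ⟨u, v, huv, rfl⟩
  have := le_csSup (edge_bddAbove m n f hf) hmem
  have h1 := hu.2
  have h2 := hv.2
  unfold strOf at *
  omega

end CU


/-- If `G` is the disjoint union of `h` even cycles `C_{2mᵢ}` (`mᵢ ≥ 2`) and `k` odd cycles
`C_{2nⱼ+1}` (`nⱼ ≥ 1`), with `h + k ≥ 1` and order `p`, then
`str(G) = max (p + 2) (p + 1 + k)`. -/
theorem strength_two_regular (h k : ℕ) (hhk : 1 ≤ h + k) (m : Fin h → ℕ) (n : Fin k → ℕ)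
    (hm : ∀ i, 2 ≤ m i) (hn : ∀ j, 1 ≤ n j) :
    strength (cyclesUnion h k m n) =
      max (Fintype.card ((Σ i : Fin h, Fin (2 * m i)) ⊕ (Σ j : Fin k, Fin (2 * n j + 1))) + 2)
        (Fintype.card ((Σ i : Fin h, Fin (2 * m i)) ⊕ (Σ j : Fin k, Fin (2 * n j + 1))) + 1 + k) := by
  have hcard := CU.card_V m n
  have hnum := CU.f0_numbering m n hn
  rw [hcard]
  have hub : strOf (cyclesUnion h k m n) (CU.f0 m n) ≤
      max (2 * CU.al m n + k + 2) (2 * CU.al m n + k + 1 + k) := by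
    apply csSup_le'
    rintro x ⟨u, v, hadj, rfl⟩
    rcases u with ⟨i, a⟩ | ⟨j, b⟩ <;> rcases v with ⟨i', a'⟩ | ⟨j', b'⟩
    · obtain ⟨rfl, hne, hr | hr⟩ := hadj
      · have hb := CU.bound_E m n hn i (a : ℕ) (a' : ℕ) a.isLt a'.isLt hr
        refine le_trans ?_ (le_max_left _ _)
        exact hb
      · have hb := CU.bound_E m n hn i (a' : ℕ) (a : ℕ) a'.isLt a.isLt hr
        refine le_trans ?_ (le_max_left _ _)
        rw [show (CU.f0 m n (Sum.inl ⟨i, a⟩) + CU.f0 m n (Sum.inl ⟨i, a'⟩)) =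
          (CU.f0 m n (Sum.inl ⟨i, a'⟩) + CU.f0 m n (Sum.inl ⟨i, a⟩)) by ring]
        exact hb
    · exact hadj.elim
    · exact hadj.elim
    · obtain ⟨rfl, hne, hr | hr⟩ := hadj
      · have hb := CU.bound_O m n hn j (b : ℕ) (b' : ℕ) b.isLt b'.isLt hr
        refine le_trans ?_ (le_max_right _ _)
        calc CU.f0 m n (Sum.inr ⟨j, b⟩) + CU.f0 m n (Sum.inr ⟨j, b'⟩) ≤
            2 * CU.al m n + 2 * k + 1 := hb
          _ ≤ 2 * CU.al m n + k + 1 + k := by omega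
      · have hb := CU.bound_O m n hn j (b' : ℕ) (b : ℕ) b'.isLt b.isLt hr
        refine le_trans ?_ (le_max_right _ _)
        calc CU.f0 m n (Sum.inr ⟨j, b⟩) + CU.f0 m n (Sum.inr ⟨j, b'⟩)
            = CU.f0 m n (Sum.inr ⟨j, b'⟩) + CU.f0 m n (Sum.inr ⟨j, b⟩) := by ring
          _ ≤ 2 * CU.al m n + 2 * k + 1 := hb
          _ ≤ 2 * CU.al m n + k + 1 + k := by omega
  have hle : strength (cyclesUnion h k m n) ≤
      max (2 * CU.al m n + k + 2) (2 * CU.al m n + k + 1 + k) :=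
    le_trans (Nat.sInf_le ⟨CU.f0 m n, hnum, rfl⟩) hub
  have hge : max (2 * CU.al m n + k + 2) (2 * CU.al m n + k + 1 + k) ≤
      strength (cyclesUnion h k m n) := by
    refine le_csInf ⟨strOf (cyclesUnion h k m n) (CU.f0 m n), ⟨CU.f0 m n, hnum, rfl⟩⟩ ?_
    rintro x ⟨f, hf, rfl⟩
    have h1 := CU.lb1 m n hm hn hhk f hf
    have h2 := CU.lb2 m n hm hn hhk f hf
    exact max_le h1 (by omega)
  exact le_antisymm hle hge
end

section
/- Let n ≥ 3 and let u and v be two distinct vertices of the hypercube Q_n. Then |N[u] ∩ N[v]| equals 0 or 2, where N[w] denotes the closed neighborhood of w. Moreover, for any three distinct vertices u, v, w of Q_n: if at least one of N[u]∩N[v], N[u]∩N[w], N[v]∩N[w] is empty then N[u]∩N[v]∩N[w] is empty, and if all three of these pairwise intersections have size 2 then |N[u]∩N[v]∩N[w]| = 1. -/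
open Finset
open scoped symmDiff

/-- The `n`-dimensional hypercube `Q_n`: vertices are binary vectors of length `n`, two
vertices being adjacent iff they differ in exactly one coordinate. -/
def hypercube (n : ℕ) : SimpleGraph (Fin n → Bool) where
  Adj u v := (Finset.univ.filter fun i => u i ≠ v i).card = 1
  symm := by
    constructor
    intro u v h
    simpa [ne_comm] using h
  loopless := by
    constructor
    intro u h
    simp at h

/-- The closed neighbourhood `N[w]` of a vertex `w` of `Q_n`. -/
def closedNbhd (n : ℕ) (w : Fin n → Bool) : Set (Fin n → Bool) :=
  insert w ((hypercube n).neighborSet w)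

variable {n : ℕ}

/-- coordinates where `u` and `v` differ -/
def dif (u v : Fin n → Bool) : Finset (Fin n) :=
  Finset.univ.filter fun i => u i ≠ v i

lemma mem_dif {u v : Fin n → Bool} {i : Fin n} : i ∈ dif u v ↔ u i ≠ v i := by
  simp [dif]

lemma dif_comm (u v : Fin n → Bool) : dif u v = dif v u := by
  ext i; simp [mem_dif, ne_comm]

lemma dif_eq_empty {u v : Fin n → Bool} : dif u v = ∅ ↔ u = v := by
  simp only [Finset.eq_empty_iff_forall_notMem, mem_dif, not_not]
  constructor
  · intro h; funext i; exact h i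
  · intro h i; rw [h]

lemma dif_symmDiff (u v w : Fin n → Bool) : dif u w = dif u v ∆ dif v w := by
  ext i
  simp only [mem_dif, Finset.mem_symmDiff]
  cases u i <;> cases v i <;> cases w i <;> simp

lemma card_symmDiff' (s t : Finset (Fin n)) :
    (s ∆ t).card + 2 * (s ∩ t).card = s.card + t.card := by
  have h1 : (s \ t).card + (s ∩ t).card = s.card := Finset.card_sdiff_add_card_inter s t
  have h2 : (t \ s).card + (t ∩ s).card = t.card := Finset.card_sdiff_add_card_inter t s
  have h3 : (s ∆ t).card = (s \ t).card + (t \ s).card := by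
    rw [symmDiff_def, Finset.sup_eq_union, Finset.card_union_of_disjoint]
    exact disjoint_sdiff_sdiff
  rw [Finset.inter_comm t s] at h2
  omega

/-- flp coordinate `i` of `u` -/
def flp (u : Fin n → Bool) (i : Fin n) : Fin n → Bool :=
  Function.update u i (!(u i))

lemma dif_flp (u : Fin n → Bool) (i : Fin n) : dif (flp u i) u = {i} := by
  ext j
  simp only [mem_dif, flp, Function.update_apply, Finset.mem_singleton]
  by_cases h : j = i <;> simp [h]

lemma eq_flp_of_dif {x u : Fin n → Bool} {i : Fin n} (h : dif x u = {i}) :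
    x = flp u i := by
  funext j
  by_cases hj : j = i
  · subst hj
    have : x j ≠ u j := mem_dif.1 (h ▸ Finset.mem_singleton_self j)
    simp only [flp, Function.update_self]
    cases hx : x j <;> cases hu : u j <;> simp_all
  · have : ¬ (x j ≠ u j) := fun hx => hj (Finset.mem_singleton.1 (h ▸ mem_dif.2 hx))
    simp only [flp, Function.update_apply, if_neg hj]
    tauto

lemma flp_ne_flp {u : Fin n → Bool} {i j : Fin n} (h : i ≠ j) : flp u i ≠ flp u j := by
  intro he
  have h1 : flp u i i = !(u i) := by simp [flp]
  have h2 : flp u j i = u i := by simp [flp, Function.update_apply, h]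
  rw [he, h2] at h1
  cases u i <;> simp_all

lemma mem_closedNbhd {x w : Fin n → Bool} :
    x ∈ closedNbhd n w ↔ (dif x w).card ≤ 1 := by
  have : x ∈ closedNbhd n w ↔ x = w ∨ (dif w x).card = 1 := by
    simp [closedNbhd, hypercube, SimpleGraph.neighborSet, dif]
  rw [this, dif_comm w x, ← dif_eq_empty (u := x) (v := w)]
  rw [← Finset.card_eq_zero]
  omega

lemma inter_of_dist3 {u v : Fin n → Bool} (h : 3 ≤ (dif u v).card) :
    closedNbhd n u ∩ closedNbhd n v = ∅ := by
  ext x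
  simp only [Set.mem_inter_iff, Set.mem_empty_iff_false, iff_false, not_and]
  intro hu hv
  rw [mem_closedNbhd] at hu hv
  have := dif_symmDiff u x v
  have hsub : dif u x ∆ dif x v ⊆ dif u x ∪ dif x v := fun a ha => by
    rw [Finset.mem_symmDiff] at ha; rw [Finset.mem_union]; tauto
  have hle : (dif u x ∆ dif x v).card ≤ (dif u x).card + (dif x v).card :=
    le_trans (Finset.card_le_card hsub) (Finset.card_union_le _ _)
  rw [← this] at hle
  rw [dif_comm u x] at hle
  omega

lemma inter_of_dist1 {u v : Fin n → Bool} {i : Fin n} (h : dif u v = {i}) :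
    closedNbhd n u ∩ closedNbhd n v = {u, v} := by
  ext x
  simp only [Set.mem_inter_iff, Set.mem_insert_iff, Set.mem_singleton_iff, mem_closedNbhd]
  constructor
  · rintro ⟨hu, hv⟩
    rcases Nat.le_one_iff_eq_zero_or_eq_one.1 hu with h0 | h1
    · left; exact dif_eq_empty.1 (Finset.card_eq_zero.1 h0)
    · obtain ⟨a, ha⟩ := Finset.card_eq_one.1 h1
      have hxv : dif x v = {a} ∆ {i} := by rw [← ha, ← h, ← dif_symmDiff]
      by_cases hai : a = i
      · right
        subst hai
        rw [symmDiff_self] at hxv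
        exact dif_eq_empty.1 hxv
      · exfalso
        have : a ∈ dif x v ∧ i ∈ dif x v := by
          constructor <;> · rw [hxv]; simp [Finset.mem_symmDiff, hai, Ne.symm hai]
        have := Finset.card_le_one.1 hv a this.1 i this.2
        exact hai this
  · rintro (rfl | rfl)
    · refine ⟨by simp [dif_eq_empty.2 rfl], by rw [h]; simp⟩
    · refine ⟨by rw [dif_comm x u, h]; simp, by simp [dif_eq_empty.2 rfl]⟩

lemma key {u v x : Fin n → Bool} {i j a : Fin n} (h : dif u v = {i, j}) (hij : i ≠ j)
    (hx : dif x u = {a}) (hxv : (dif x v).card ≤ 1) : a = i ∨ a = j := by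
  by_contra hc
  push_neg at hc
  have hxv' : dif x v = {a} ∆ {i, j} := by rw [← hx, ← h, ← dif_symmDiff]
  have : a ∈ dif x v ∧ i ∈ dif x v := by
    constructor <;>
    · rw [hxv']; simp [Finset.mem_symmDiff, hc.1, hc.2, Ne.symm hc.1, Ne.symm hc.2]
  exact hc.1 (Finset.card_le_one.1 hxv a this.1 i this.2)

lemma flp_mem_closedNbhd {u v : Fin n → Bool} {i j : Fin n} (h : dif u v = {i, j})
    (hij : i ≠ j) : flp u i ∈ closedNbhd n v := by
  rw [mem_closedNbhd]
  have : dif (flp u i) v = {i} ∆ {i, j} := by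
    rw [← dif_flp u i, ← h, ← dif_symmDiff]
  rw [this]
  have : ({i} : Finset (Fin n)) ∆ {i, j} = {j} := by
    ext a
    simp only [Finset.mem_symmDiff, Finset.mem_singleton, Finset.mem_insert]
    by_cases h1 : a = i <;> by_cases h2 : a = j <;> simp_all
  rw [this]; simp

lemma inter_of_dist2 {u v : Fin n → Bool} {i j : Fin n} (h : dif u v = {i, j})
    (hij : i ≠ j) : closedNbhd n u ∩ closedNbhd n v = {flp u i, flp u j} := by
  ext x
  simp only [Set.mem_inter_iff, Set.mem_insert_iff, Set.mem_singleton_iff]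
  constructor
  · rintro ⟨hu, hv⟩
    rw [mem_closedNbhd] at hu hv
    rcases Nat.le_one_iff_eq_zero_or_eq_one.1 hu with h0 | h1
    · exfalso
      have hxu : x = u := dif_eq_empty.1 (Finset.card_eq_zero.1 h0)
      subst hxu
      have h2 : (dif x v).card = 2 := by
        rw [h, Finset.card_insert_of_notMem (by simp [hij]), Finset.card_singleton]
      omega
    · obtain ⟨a, ha⟩ := Finset.card_eq_one.1 h1
      rcases key h hij ha hv with rfl | rfl
      · left; exact eq_flp_of_dif ha
      · right; exact eq_flp_of_dif ha
  · rintro (rfl | rfl)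
    · exact ⟨mem_closedNbhd.2 (by rw [dif_flp]; simp), flp_mem_closedNbhd h hij⟩
    · refine ⟨mem_closedNbhd.2 (by rw [dif_flp]; simp), ?_⟩
      have h' : dif u v = {j, i} := by rw [h]; exact Finset.pair_comm i j
      exact flp_mem_closedNbhd h' (Ne.symm hij)

lemma triple_center {a b c : Fin n → Bool} {i j : Fin n}
    (h1 : dif a b = {i}) (h2 : dif a c = {j}) (hbc : b ≠ c) :
    closedNbhd n a ∩ closedNbhd n b ∩ closedNbhd n c = {a} := by
  ext x
  simp only [Set.mem_inter_iff, Set.mem_singleton_iff]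
  constructor
  · rintro ⟨⟨ha, hb⟩, hc⟩
    have hxb : x = a ∨ x = b := by
      have he := inter_of_dist1 h1
      have hx : x ∈ ({a, b} : Set (Fin n → Bool)) := he ▸ Set.mem_inter ha hb
      simpa using hx
    have hxc : x = a ∨ x = c := by
      have he := inter_of_dist1 h2
      have hx : x ∈ ({a, c} : Set (Fin n → Bool)) := he ▸ Set.mem_inter ha hc
      simpa using hx
    rcases hxb with rfl | rfl
    · rfl
    · rcases hxc with h | h
      · exact h
      · exact absurd h hbc
  · rintro rfl
    exact ⟨⟨mem_closedNbhd.2 (by simp [dif_eq_empty.2 rfl]),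
        mem_closedNbhd.2 (by rw [h1]; simp)⟩,
      mem_closedNbhd.2 (by rw [h2]; simp)⟩

lemma not_122 {a b c : Fin n → Bool} (h1 : (dif a b).card = 1)
    (h2 : (dif a c).card = 2) (h3 : (dif b c).card = 2) : False := by
  have hs : dif b c = dif b a ∆ dif a c := dif_symmDiff b a c
  have hcard := card_symmDiff' (dif b a) (dif a c)
  rw [← hs] at hcard
  rw [dif_comm b a] at hcard
  omega

lemma pair_of_mem {s : Finset (Fin n)} {i : Fin n} (h : s.card = 2) (hi : i ∈ s) :
    ∃ j, i ≠ j ∧ s = {i, j} := by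
  obtain ⟨a, b, hab, rfl⟩ := Finset.card_eq_two.1 h
  rcases Finset.mem_insert.1 hi with rfl | hb
  · exact ⟨b, hab, rfl⟩
  · rw [Finset.mem_singleton] at hb; subst hb
    exact ⟨a, hab.symm, Finset.pair_comm a i⟩

lemma triple_222 {u v w : Fin n → Bool} (huv : (dif u v).card = 2)
    (huw : (dif u w).card = 2) (hvw : (dif v w).card = 2) :
    ∃ z, closedNbhd n u ∩ closedNbhd n v ∩ closedNbhd n w = {z} := by
  have hs : dif v w = dif v u ∆ dif u w := dif_symmDiff v u w
  have hcard := card_symmDiff' (dif v u) (dif u w)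
  rw [← hs, dif_comm v u] at hcard
  have hi1 : (dif u v ∩ dif u w).card = 1 := by omega
  obtain ⟨i, hi⟩ := Finset.card_eq_one.1 hi1
  have hiv : i ∈ dif u v := (Finset.inter_subset_left (s₂ := dif u w)) (hi ▸ Finset.mem_singleton_self i)
  have hiw : i ∈ dif u w := (Finset.inter_subset_right (s₁ := dif u v)) (hi ▸ Finset.mem_singleton_self i)
  obtain ⟨j, hij, hveq⟩ := pair_of_mem huv hiv
  obtain ⟨k, hik, hweq⟩ := pair_of_mem huw hiw
  have hjk : j ≠ k := by
    rintro rfl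
    have he : dif v w = ∅ := by
      rw [hs, dif_comm v u, hveq, hweq, symmDiff_self]; rfl
    rw [he] at hvw; simp at hvw
  refine ⟨flp u i, ?_⟩
  ext x
  simp only [Set.mem_inter_iff, Set.mem_singleton_iff]
  constructor
  · rintro ⟨⟨hu, hv⟩, hw⟩
    rw [mem_closedNbhd] at hu hv hw
    rcases Nat.le_one_iff_eq_zero_or_eq_one.1 hu with h0 | h1
    · exfalso
      have hxu : x = u := dif_eq_empty.1 (Finset.card_eq_zero.1 h0)
      subst hxu
      omega
    · obtain ⟨a, ha⟩ := Finset.card_eq_one.1 h1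
      have hav := key hveq hij ha hv
      have haw := key hweq hik ha hw
      have : a = i := by
        rcases hav with rfl | rfl
        · rfl
        · rcases haw with h | h
          · exact absurd h.symm hij
          · exact absurd h hjk
      subst this
      exact eq_flp_of_dif ha
  · rintro rfl
    exact ⟨⟨mem_closedNbhd.2 (by rw [dif_flp]; simp), flp_mem_closedNbhd hveq hij⟩,
      flp_mem_closedNbhd hweq hik⟩

/-- In `Q_n` (`n ≥ 3`): for distinct `u, v`, `|N[u] ∩ N[v]|` is `0` or `2`; and for
distinct `u, v, w`, if some pairwise intersection of closed neighbourhoods is empty then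
the triple intersection is empty, while if all pairwise intersections have size `2` then
the triple intersection has size `1`. -/
theorem hypercube_closedNbhd_inter (n : ℕ) (hn : 3 ≤ n) :
    (∀ u v : Fin n → Bool, u ≠ v →
      (closedNbhd n u ∩ closedNbhd n v).ncard = 0 ∨
        (closedNbhd n u ∩ closedNbhd n v).ncard = 2) ∧
    (∀ u v w : Fin n → Bool, u ≠ v → u ≠ w → v ≠ w →
      ((closedNbhd n u ∩ closedNbhd n v = ∅ ∨ closedNbhd n u ∩ closedNbhd n w = ∅ ∨
          closedNbhd n v ∩ closedNbhd n w = ∅) →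
        closedNbhd n u ∩ closedNbhd n v ∩ closedNbhd n w = ∅) ∧
      (((closedNbhd n u ∩ closedNbhd n v).ncard = 2 ∧
          (closedNbhd n u ∩ closedNbhd n w).ncard = 2 ∧
          (closedNbhd n v ∩ closedNbhd n w).ncard = 2) →
        (closedNbhd n u ∩ closedNbhd n v ∩ closedNbhd n w).ncard = 1)) := by
  constructor
  · intro u v huv
    have hne : (dif u v).card ≠ 0 :=
      fun h => huv (dif_eq_empty.1 (Finset.card_eq_zero.1 h))
    by_cases h3 : 3 ≤ (dif u v).card
    · left; rw [inter_of_dist3 h3]; exact Set.ncard_empty _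
    · have : (dif u v).card = 1 ∨ (dif u v).card = 2 := by omega
      rcases this with h | h
      · obtain ⟨i, hi⟩ := Finset.card_eq_one.1 h
        right; rw [inter_of_dist1 hi]; exact Set.ncard_pair huv
      · obtain ⟨a, b, hab, habs⟩ := Finset.card_eq_two.1 h
        right; rw [inter_of_dist2 habs hab]; exact Set.ncard_pair (flp_ne_flp hab)
  · intro u v w huv huw hvw
    constructor
    · intro h
      rw [Set.eq_empty_iff_forall_notMem]
      rcases h with h | h | h <;>
        rw [Set.eq_empty_iff_forall_notMem] at h <;> intro x hx
      · exact h x hx.1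
      · exact h x ⟨hx.1.1, hx.2⟩
      · exact h x ⟨hx.1.2, hx.2⟩
    · rintro ⟨h1, h2, h3⟩
      have d1 : (dif u v).card = 1 ∨ (dif u v).card = 2 := by
        have hne : (dif u v).card ≠ 0 :=
          fun h => huv (dif_eq_empty.1 (Finset.card_eq_zero.1 h))
        by_contra hc; push_neg at hc
        rw [inter_of_dist3 (by omega)] at h1
        rw [Set.ncard_empty] at h1; omega
      have d2 : (dif u w).card = 1 ∨ (dif u w).card = 2 := by
        have hne : (dif u w).card ≠ 0 :=
          fun h => huw (dif_eq_empty.1 (Finset.card_eq_zero.1 h))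
        by_contra hc; push_neg at hc
        rw [inter_of_dist3 (by omega)] at h2
        rw [Set.ncard_empty] at h2; omega
      have d3 : (dif v w).card = 1 ∨ (dif v w).card = 2 := by
        have hne : (dif v w).card ≠ 0 :=
          fun h => hvw (dif_eq_empty.1 (Finset.card_eq_zero.1 h))
        by_contra hc; push_neg at hc
        rw [inter_of_dist3 (by omega)] at h3
        rw [Set.ncard_empty] at h3; omega
      rcases d1 with e1 | e1 <;> rcases d2 with e2 | e2 <;> rcases d3 with e3 | e3
      · obtain ⟨i, hi⟩ := Finset.card_eq_one.1 e1
        obtain ⟨j, hj⟩ := Finset.card_eq_one.1 e2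
        rw [triple_center hi hj hvw]; exact Set.ncard_singleton _
      · obtain ⟨i, hi⟩ := Finset.card_eq_one.1 e1
        obtain ⟨j, hj⟩ := Finset.card_eq_one.1 e2
        rw [triple_center hi hj hvw]; exact Set.ncard_singleton _
      · obtain ⟨i, hi⟩ := Finset.card_eq_one.1 e1
        obtain ⟨j, hj⟩ := Finset.card_eq_one.1 e3
        rw [Set.inter_comm (closedNbhd n u) (closedNbhd n v),
          triple_center (by rw [dif_comm v u]; exact hi) hj huw]
        exact Set.ncard_singleton _
      · exact absurd (not_122 e1 e2 e3) (fun h => h)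
      · obtain ⟨i, hi⟩ := Finset.card_eq_one.1 e2
        obtain ⟨j, hj⟩ := Finset.card_eq_one.1 e3
        rw [Set.inter_comm (closedNbhd n u ∩ closedNbhd n v) (closedNbhd n w),
          ← Set.inter_assoc,
          triple_center (by rw [dif_comm w u]; exact hi) (by rw [dif_comm w v]; exact hj) huv]
        exact Set.ncard_singleton _
      · exact absurd (not_122 e2 e1 (by rw [dif_comm w v]; exact e3)) (fun h => h)
      · exact absurd (not_122 e3 (by rw [dif_comm v u]; exact e1) (by rw [dif_comm w u]; exact e2)) (fun h => h)
      · obtain ⟨z, hz⟩ := triple_222 e1 e2 e3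
        rw [hz]; exact Set.ncard_singleton _
end

section
/- For the n-dimensional hypercube Q_n with n ≥ 3, the quantities x_i = min{|N(S) \ S| : S ⊆ V(Q_n), |S| = i} satisfy x₁ = n, x₂ = 2n − 2, x₃ = 3n − 5 and x₄ = 4n − 9, and for every i ≥ 1 one has x_{i+1} ≥ n + x_i − 2i. -/
open Finset

def outNbrs {V : Type*} (G : SimpleGraph V) (S : Set V) : Set V :=
  {w | w ∉ S ∧ ∃ v ∈ S, G.Adj v w}

noncomputable def xMin {V : Type*} (G : SimpleGraph V) (i : ℕ) : ℕ :=
  sInf {c | ∃ S : Set V, S.ncard = i ∧ c = (outNbrs G S).ncard}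

namespace HC

variable {n : ℕ}

abbrev V (n : ℕ) := Fin n → Bool

def dset (u v : V n) : Finset (Fin n) := Finset.univ.filter fun i => u i ≠ v i

def dst (u v : V n) : ℕ := (dset u v).card

lemma adj_iff {u v : V n} : (hypercube n).Adj u v ↔ dst u v = 1 := Iff.rfl

instance : DecidableRel (hypercube n).Adj := fun _ _ =>
  inferInstanceAs (Decidable (_ = 1))

lemma mem_dset {u v : V n} {i : Fin n} : i ∈ dset u v ↔ u i ≠ v i := by
  simp [dset]

lemma dset_comm (u v : V n) : dset u v = dset v u := by
  ext i; simp [mem_dset, ne_comm]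

lemma dst_comm (u v : V n) : dst u v = dst v u := by rw [dst, dst, dset_comm]

lemma dset_self (u : V n) : dset u u = ∅ := by ext i; simp [mem_dset]

lemma eq_of_dset_eq_empty {u v : V n} (h : dset u v = ∅) : u = v := by
  funext i
  by_contra hne
  have : i ∈ dset u v := mem_dset.2 hne
  simp [h] at this

lemma dset_triangle (u v w : V n) : dset u w = symmDiff (dset u v) (dset v w) := by
  ext i
  simp only [Finset.mem_symmDiff, mem_dset]
  cases h1 : u i <;> cases h2 : v i <;> cases h3 : w i <;> simp

def flip (u : V n) (i : Fin n) : V n := Function.update u i (!(u i))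

lemma flip_apply_self (u : V n) (i : Fin n) : flip u i i = !(u i) := by
  simp [flip]

lemma flip_apply_ne (u : V n) {i j : Fin n} (h : j ≠ i) : flip u i j = u j := by
  simp [flip, Function.update_of_ne h]

lemma dset_flip (u : V n) (i : Fin n) : dset u (flip u i) = {i} := by
  ext j
  simp only [mem_dset, Finset.mem_singleton]
  constructor
  · intro h
    by_contra hne
    rw [flip_apply_ne u hne] at h
    exact h rfl
  · rintro rfl
    rw [flip_apply_self]
    cases u j <;> simp

lemma flip_injective (u : V n) : Function.Injective (flip u) := by
  intro i j h
  by_contra hne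
  have h1 := congrFun h i
  rw [flip_apply_self, flip_apply_ne u hne] at h1
  cases u i <;> simp_all

lemma eq_flip_of_dset_eq {u w : V n} {i : Fin n} (h : dset u w = {i}) : w = flip u i := by
  funext j
  rcases eq_or_ne j i with rfl | hne
  · have hm : u j ≠ w j := mem_dset.1 (by rw [h]; exact Finset.mem_singleton_self j)
    rw [flip_apply_self]
    revert hm; cases u j <;> cases w j <;> simp
  · have : j ∉ dset u w := by rw [h]; simp [hne]
    rw [mem_dset] at this
    push_neg at this
    rw [flip_apply_ne u hne, ← this]

def nb (u : V n) : Finset (V n) :=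
  Finset.univ.filter fun w => (hypercube n).Adj u w

lemma mem_nb {u w : V n} : w ∈ nb u ↔ dst u w = 1 := by
  simp [nb, adj_iff]

lemma nb_eq_image (u : V n) : nb u = Finset.univ.image (flip u) := by
  ext w
  simp only [mem_nb, Finset.mem_image, Finset.mem_univ, true_and]
  constructor
  · intro h
    obtain ⟨i, hi⟩ := Finset.card_eq_one.1 h
    exact ⟨i, (eq_flip_of_dset_eq hi).symm⟩
  · rintro ⟨i, rfl⟩
    rw [dst, dset_flip]; simp

lemma card_nb (u : V n) : (nb u).card = n := by
  rw [nb_eq_image, Finset.card_image_of_injective _ (flip_injective u)]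
  simp

section
variable {α : Type*} [DecidableEq α]

lemma card_symmDiff_aux (s t : Finset α) :
    (symmDiff s t).card + 2 * (s ∩ t).card = s.card + t.card := by
  have h1 : symmDiff s t = (s ∪ t) \ (s ∩ t) := by
    ext x; simp [Finset.mem_symmDiff]; tauto
  have h2 := Finset.card_union_add_card_inter s t
  have h3 : (s ∩ t) ⊆ (s ∪ t) := (Finset.inter_subset_left).trans Finset.subset_union_left
  have h4 := Finset.card_sdiff_of_subset h3
  have h5 := Finset.card_le_card h3
  rw [h1]
  omega

lemma symmDiff_singleton_mem {i : α} {s : Finset α} (h : i ∈ s) :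
    symmDiff {i} s = s.erase i := by
  ext x; simp [Finset.mem_symmDiff]
  constructor
  · rintro (⟨rfl, hx⟩ | ⟨h1, h2⟩)
    · exact absurd h hx
    · exact ⟨h2, h1⟩
  · rintro ⟨h1, h2⟩; right; exact ⟨h2, h1⟩

lemma symmDiff_singleton_not_mem {i : α} {s : Finset α} (h : i ∉ s) :
    symmDiff {i} s = insert i s := by
  ext x; simp [Finset.mem_symmDiff]
  constructor
  · rintro (⟨rfl, _⟩ | ⟨h1, h2⟩)
    · left; rfl
    · right; exact h1
  · rintro (rfl | hx)
    · left; exact ⟨rfl, h⟩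
    · right; exact ⟨hx, fun e => h (e ▸ hx)⟩


end

lemma parity (u v w : V n) : dst u w % 2 = (dst u v + dst v w) % 2 := by
  have h := card_symmDiff_aux (dset u v) (dset v w)
  rw [dst, dset_triangle u v w, dst, dst]
  omega

lemma dset_flip_left (u v : V n) (i : Fin n) :
    dset (flip u i) v = symmDiff ({i} : Finset (Fin n)) (dset u v) := by
  rw [dset_triangle (flip u i) u v, dset_comm (flip u i) u, dset_flip]

lemma dst_flip_mem {u v : V n} {i : Fin n} (h : i ∈ dset u v) :
    dst (flip u i) v = dst u v - 1 := by
  rw [dst, dset_flip_left, symmDiff_singleton_mem h, Finset.card_erase_of_mem h, dst]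

lemma dst_flip_not_mem {u v : V n} {i : Fin n} (h : i ∉ dset u v) :
    dst (flip u i) v = dst u v + 1 := by
  rw [dst, dset_flip_left, symmDiff_singleton_not_mem h, Finset.card_insert_of_notMem h, dst]

lemma dst_pos {u v : V n} (h : u ≠ v) : 0 < dst u v := by
  rcases Nat.eq_zero_or_pos (dst u v) with h0 | h1
  · exact absurd (eq_of_dset_eq_empty (Finset.card_eq_zero.1 h0)) h
  · exact h1

lemma inter_nb_of_dist2 {u v : V n} (h : dst u v = 2) :
    nb u ∩ nb v = (dset u v).image (flip u) := by
  ext w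
  simp only [Finset.mem_inter, mem_nb, Finset.mem_image]
  constructor
  · rintro ⟨h1, h2⟩
    obtain ⟨i, hi⟩ := Finset.card_eq_one.1 h1
    have hw : w = flip u i := eq_flip_of_dset_eq hi
    subst hw
    refine ⟨i, ?_, rfl⟩
    by_contra hmem
    rw [dst_comm, dst_flip_not_mem hmem, h] at h2
    omega
  · rintro ⟨i, hi, rfl⟩
    constructor
    · rw [dst, dset_flip]; simp
    · rw [dst_comm, dst_flip_mem hi, h]

lemma inter_nb_eq_empty {u v : V n} (hne : u ≠ v) (h : dst u v ≠ 2) :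
    nb u ∩ nb v = ∅ := by
  ext w
  simp only [Finset.mem_inter, mem_nb, Finset.notMem_empty, iff_false, not_and]
  intro h1 h2
  obtain ⟨i, hi⟩ := Finset.card_eq_one.1 h1
  have hw : w = flip u i := eq_flip_of_dset_eq hi
  subst hw
  have hp := dst_pos hne
  by_cases hmem : i ∈ dset u v
  · rw [dst_comm, dst_flip_mem hmem] at h2
    omega
  · rw [dst_comm, dst_flip_not_mem hmem] at h2
    have : dst u v = 0 := by omega
    exact absurd (eq_of_dset_eq_empty (Finset.card_eq_zero.1 this)) hne

lemma card_inter_nb_of_dist2 {u v : V n} (h : dst u v = 2) :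
    (nb u ∩ nb v).card = 2 := by
  rw [inter_nb_of_dist2 h, Finset.card_image_of_injective _ (flip_injective u)]
  exact h

lemma card_inter_nb_le_two {u v : V n} (hne : u ≠ v) : (nb u ∩ nb v).card ≤ 2 := by
  by_cases h : dst u v = 2
  · rw [card_inter_nb_of_dist2 h]
  · rw [inter_nb_eq_empty hne h]; simp

lemma card_inter_nb_of_adj {u v : V n} (h : dst u v = 1) : (nb u ∩ nb v).card = 0 := by
  rw [inter_nb_eq_empty (fun e => by simp [e, dst, dset_self] at h) (by omega)]
  simp

lemma triple_inter {u v w : V n} (h1 : dst u v = 2) (h2 : dst u w = 2) :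
    nb u ∩ nb v ∩ nb w = ((dset u v) ∩ (dset u w)).image (flip u) := by
  rw [inter_nb_of_dist2 h1]
  ext x
  simp only [Finset.mem_inter, Finset.mem_image, mem_nb]
  constructor
  · rintro ⟨⟨i, hi, rfl⟩, hx⟩
    refine ⟨i, ⟨hi, ?_⟩, rfl⟩
    by_contra hmem
    rw [dst_comm, dst_flip_not_mem hmem, h2] at hx
    omega
  · rintro ⟨i, ⟨hi1, hi2⟩, rfl⟩
    refine ⟨⟨i, hi1, rfl⟩, ?_⟩
    rw [dst_comm, dst_flip_mem hi2, h2]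

lemma card_dset_inter {u v w : V n} (h1 : dst u v = 2) (h2 : dst u w = 2)
    (h3 : dst v w = 2) : ((dset u v) ∩ (dset u w)).card = 1 := by
  have key := card_symmDiff_aux (dset u v) (dset u w)
  have : dset v w = symmDiff (dset u v) (dset u w) := by
    rw [dset_triangle v u w, dset_comm v u]
  rw [dst] at h1 h2
  rw [dst, this] at h3
  omega

lemma card_triple_inter {u v w : V n} (h1 : dst u v = 2) (h2 : dst u w = 2)
    (h3 : dst v w = 2) : (nb u ∩ nb v ∩ nb w).card = 1 := by
  rw [triple_inter h1 h2, Finset.card_image_of_injective _ (flip_injective u),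
    card_dset_inter h1 h2 h3]

section
variable {α : Type*} [DecidableEq α]

lemma ie2 (A B : Finset α) : ((A ∪ B).card : ℤ) = A.card + B.card - (A ∩ B).card := by
  have := Finset.card_union_add_card_inter A B
  omega

lemma ie3 (A B C : Finset α) : ((A ∪ B ∪ C).card : ℤ) =
    A.card + B.card + C.card - (A ∩ B).card - (A ∩ C).card - (B ∩ C).card
      + (A ∩ B ∩ C).card := by
  have e1 : (A ∪ B) ∩ C = (A ∩ C) ∪ (B ∩ C) := by ext x; simp only [Finset.mem_inter, Finset.mem_union, Finset.mem_sdiff]; tauto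
  have e2 : (A ∩ C) ∩ (B ∩ C) = A ∩ B ∩ C := by ext x; simp only [Finset.mem_inter, Finset.mem_union, Finset.mem_sdiff]; tauto
  have h1 := ie2 (A ∪ B) C
  have h2 := ie2 A B
  have h3 := ie2 (A ∩ C) (B ∩ C)
  rw [e1] at h1; rw [e2] at h3
  linarith

lemma ie4 (A B C D : Finset α) : ((A ∪ B ∪ C ∪ D).card : ℤ) =
    A.card + B.card + C.card + D.card
    - (A ∩ B).card - (A ∩ C).card - (A ∩ D).card
    - (B ∩ C).card - (B ∩ D).card - (C ∩ D).card
    + (A ∩ B ∩ C).card + (A ∩ B ∩ D).card + (A ∩ C ∩ D).card + (B ∩ C ∩ D).card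
    - (A ∩ B ∩ C ∩ D).card := by
  have e1 : (A ∪ B ∪ C) ∩ D = (A ∩ D) ∪ (B ∩ D) ∪ (C ∩ D) := by ext x; simp only [Finset.mem_inter, Finset.mem_union, Finset.mem_sdiff]; tauto
  have e2 : (A ∩ D) ∩ (B ∩ D) = A ∩ B ∩ D := by ext x; simp only [Finset.mem_inter, Finset.mem_union, Finset.mem_sdiff]; tauto
  have e3 : (A ∩ D) ∩ (C ∩ D) = A ∩ C ∩ D := by ext x; simp only [Finset.mem_inter, Finset.mem_union, Finset.mem_sdiff]; tauto
  have e4 : (B ∩ D) ∩ (C ∩ D) = B ∩ C ∩ D := by ext x; simp only [Finset.mem_inter, Finset.mem_union, Finset.mem_sdiff]; tauto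
  have e5 : (A ∩ D) ∩ (B ∩ D) ∩ (C ∩ D) = A ∩ B ∩ C ∩ D := by ext x; simp only [Finset.mem_inter, Finset.mem_union, Finset.mem_sdiff]; tauto
  have h1 := ie2 (A ∪ B ∪ C) D
  have h2 := ie3 A B C
  have h3 := ie3 (A ∩ D) (B ∩ D) (C ∩ D)
  rw [e1] at h1; rw [e5, e2, e3, e4] at h3
  linarith

lemma card_sdiff_int (X S : Finset α) :
    ((X \ S).card : ℤ) = X.card - (X ∩ S).card := by
  have h1 : X \ S = X \ (X ∩ S) := by ext x; simp only [Finset.mem_inter, Finset.mem_union, Finset.mem_sdiff]; tauto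
  have h2 : (X ∩ S).card ≤ X.card := Finset.card_le_card Finset.inter_subset_left
  rw [h1, Finset.card_sdiff_of_subset Finset.inter_subset_left]
  omega


end

def bdF (S : Finset (V n)) : Finset (V n) := (S.biUnion nb) \ S

lemma outNbrs_coe (F : Finset (V n)) :
    outNbrs (hypercube n) ↑F = ↑(bdF F) := by
  ext w
  simp only [outNbrs, Set.mem_setOf_eq, bdF, Finset.coe_sdiff, Set.mem_diff,
    Finset.mem_coe, Finset.mem_biUnion, nb, Finset.mem_filter, Finset.mem_univ,
    true_and]
  tauto

lemma xMin_eq (i : ℕ) : xMin (hypercube n) i =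
    sInf {c | ∃ F : Finset (V n), F.card = i ∧ c = (bdF F).card} := by
  unfold xMin
  congr 1
  ext c
  simp only [Set.mem_setOf_eq]
  constructor
  · rintro ⟨S, hS, rfl⟩
    have hfin : S.Finite := S.toFinite
    refine ⟨hfin.toFinset, ?_, ?_⟩
    · rw [← Set.ncard_eq_toFinset_card S hfin, hS]
    · have h1 : outNbrs (hypercube n) S = ↑(bdF hfin.toFinset) := by
        conv_lhs => rw [← Set.Finite.coe_toFinset hfin]
        rw [outNbrs_coe]
      rw [h1, Set.ncard_coe_finset]
  · rintro ⟨F, hF, rfl⟩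
    exact ⟨↑F, by rw [Set.ncard_coe_finset, hF], by rw [outNbrs_coe, Set.ncard_coe_finset]⟩

lemma card_bdF_le_xMin {i : ℕ} (F : Finset (V n)) (hF : F.card = i) :
    xMin (hypercube n) i ≤ (bdF F).card := by
  rw [xMin_eq]
  exact Nat.sInf_le ⟨F, hF, rfl⟩

lemma bd1_card (a : V n) : ((bdF {a}).card : ℤ) =
    n - ((nb a ∩ {a}).card : ℤ) := by
  have hX : ({a} : Finset (V n)).biUnion nb = nb a := by
    ext x; simp [Finset.mem_biUnion]
  rw [bdF, hX, card_sdiff_int, card_nb]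

lemma bd2_card (a b : V n) : ((bdF {a, b}).card : ℤ) =
    2 * n - (nb a ∩ nb b).card - (((nb a ∪ nb b) ∩ {a, b}).card : ℤ) := by
  have hX : ({a, b} : Finset (V n)).biUnion nb = nb a ∪ nb b := by
    ext x; simp only [Finset.mem_biUnion, Finset.mem_insert, Finset.mem_singleton,
      Finset.mem_union]; constructor
    · rintro ⟨v, (rfl | rfl), hv⟩ <;> tauto
    · rintro (h | h); exacts [⟨a, Or.inl rfl, h⟩, ⟨b, Or.inr rfl, h⟩]
  rw [bdF, hX, card_sdiff_int, ie2, card_nb, card_nb]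
  ring

lemma bd3_card (a b c : V n) : ((bdF {a, b, c}).card : ℤ) =
    3 * n - (nb a ∩ nb b).card - (nb a ∩ nb c).card - (nb b ∩ nb c).card
      + (nb a ∩ nb b ∩ nb c).card
      - (((nb a ∪ nb b ∪ nb c) ∩ {a, b, c}).card : ℤ) := by
  have hX : ({a, b, c} : Finset (V n)).biUnion nb = nb a ∪ nb b ∪ nb c := by
    ext x; simp only [Finset.mem_biUnion, Finset.mem_insert, Finset.mem_singleton,
      Finset.mem_union]; constructor
    · rintro ⟨v, (rfl | rfl | rfl), hv⟩ <;> tauto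
    · rintro ((h | h) | h)
      exacts [⟨a, by tauto, h⟩, ⟨b, by tauto, h⟩, ⟨c, by tauto, h⟩]
  rw [bdF, hX, card_sdiff_int, ie3, card_nb, card_nb, card_nb]
  ring

lemma bd4_card (a b c d : V n) : ((bdF {a, b, c, d}).card : ℤ) =
    4 * n - (nb a ∩ nb b).card - (nb a ∩ nb c).card - (nb a ∩ nb d).card
      - (nb b ∩ nb c).card - (nb b ∩ nb d).card - (nb c ∩ nb d).card
      + (nb a ∩ nb b ∩ nb c).card + (nb a ∩ nb b ∩ nb d).card
      + (nb a ∩ nb c ∩ nb d).card + (nb b ∩ nb c ∩ nb d).card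
      - (nb a ∩ nb b ∩ nb c ∩ nb d).card
      - (((nb a ∪ nb b ∪ nb c ∪ nb d) ∩ {a, b, c, d}).card : ℤ) := by
  have hX : ({a, b, c, d} : Finset (V n)).biUnion nb = nb a ∪ nb b ∪ nb c ∪ nb d := by
    ext x; simp only [Finset.mem_biUnion, Finset.mem_insert, Finset.mem_singleton,
      Finset.mem_union]; constructor
    · rintro ⟨v, (rfl | rfl | rfl | rfl), hv⟩ <;> tauto
    · rintro (((h | h) | h) | h)
      exacts [⟨a, by tauto, h⟩, ⟨b, by tauto, h⟩, ⟨c, by tauto, h⟩, ⟨d, by tauto, h⟩]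
  rw [bdF, hX, card_sdiff_int, ie4, card_nb, card_nb, card_nb, card_nb]
  ring

lemma inter3_empty₂ {α : Type*} [DecidableEq α] {A C : Finset α} (B : Finset α)
    (h : A ∩ C = ∅) : A ∩ B ∩ C = ∅ := by
  ext x
  simp only [Finset.mem_inter, Finset.notMem_empty, iff_false]
  rintro ⟨⟨ha, _⟩, hc⟩
  have : x ∈ A ∩ C := Finset.mem_inter.2 ⟨ha, hc⟩
  simp [h] at this

lemma ne_of_dst {u v : V n} (h : dst u v ≠ 0) : u ≠ v := fun e => by
  subst e; rw [dst, dset_self] at h; simp at h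

def zer : V n := fun _ => false

def ee (k : Fin n) : V n := fun j => decide (j = k)

lemma dset_zer_ee (k : Fin n) : dset zer (ee k) = {k} := by
  ext j
  simp [mem_dset, zer, ee, eq_comm]

lemma dst_zer_ee (k : Fin n) : dst zer (ee k) = 1 := by
  rw [dst, dset_zer_ee]; simp

lemma dset_ee_ee {k l : Fin n} (h : k ≠ l) : dset (ee k) (ee l) = {k, l} := by
  ext j
  simp only [mem_dset, ee, Finset.mem_insert, Finset.mem_singleton]
  rcases eq_or_ne j k with rfl | hk <;> rcases eq_or_ne j l with rfl | hl <;>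
    simp_all

lemma dst_ee_ee {k l : Fin n} (h : k ≠ l) : dst (ee k) (ee l) = 2 := by
  rw [dst, dset_ee_ee h, Finset.card_insert_of_notMem (by simp [h])]
  simp

lemma zer_ne_ee (k : Fin n) : (zer : V n) ≠ ee k :=
  ne_of_dst (by rw [dst_zer_ee]; omega)

lemma ee_ne_ee {k l : Fin n} (h : k ≠ l) : (ee k : V n) ≠ ee l :=
  ne_of_dst (by rw [dst_ee_ee h]; omega)

lemma zer_mem_nb_ee (k : Fin n) : (zer : V n) ∈ nb (ee k) :=
  mem_nb.2 (by rw [dst_comm]; exact dst_zer_ee k)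

lemma ee_mem_nb_zer (k : Fin n) : (ee k : V n) ∈ nb zer :=
  mem_nb.2 (dst_zer_ee k)

lemma pair_zer_empty (k : Fin n) : nb (zer : V n) ∩ nb (ee k) = ∅ :=
  inter_nb_eq_empty (zer_ne_ee k) (by rw [dst_zer_ee]; omega)

lemma bd_S1 : ∃ F : Finset (V n), F.card = 1 ∧ ((bdF F).card : ℤ) = n := by
  refine ⟨{zer}, by simp, ?_⟩
  rw [bd1_card]
  have h : nb (zer : V n) ∩ {zer} = ∅ := by
    ext x
    simp only [Finset.mem_inter, Finset.mem_singleton, Finset.notMem_empty, iff_false]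
    rintro ⟨hx, rfl⟩
    rw [mem_nb, dst, dset_self] at hx
    simp at hx
  rw [h]
  simp

lemma bd_S2 (hn : 1 ≤ n) : ∃ F : Finset (V n), F.card = 2 ∧ ((bdF F).card : ℤ) = 2 * n - 2 := by
  have i0 : Fin n := ⟨0, by omega⟩
  refine ⟨{zer, ee i0}, ?_, ?_⟩
  · rw [Finset.card_insert_of_notMem (by simp [zer_ne_ee i0])]
    simp
  · rw [bd2_card]
    have hsub : ({zer, ee i0} : Finset (V n)) ⊆ nb zer ∪ nb (ee i0) := by
      intro x hx
      simp only [Finset.mem_insert, Finset.mem_singleton] at hx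
      rcases hx with rfl | rfl
      · exact Finset.mem_union.2 (Or.inr (zer_mem_nb_ee i0))
      · exact Finset.mem_union.2 (Or.inl (ee_mem_nb_zer i0))
    rw [Finset.inter_eq_right.2 hsub, pair_zer_empty i0,
      Finset.card_insert_of_notMem (by simp [zer_ne_ee i0])]
    simp

lemma exists_three_fin (hn : 3 ≤ n) :
    ∃ i0 i1 i2 : Fin n, i0 ≠ i1 ∧ i0 ≠ i2 ∧ i1 ≠ i2 :=
  ⟨⟨0, by omega⟩, ⟨1, by omega⟩, ⟨2, by omega⟩, by simp [Fin.ext_iff],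
    by simp [Fin.ext_iff], by simp [Fin.ext_iff]⟩

lemma bd_S3 (hn : 3 ≤ n) : ∃ F : Finset (V n), F.card = 3 ∧ ((bdF F).card : ℤ) = 3 * n - 5 := by
  obtain ⟨i0, i1, _, h01, _, _⟩ := exists_three_fin hn
  refine ⟨{zer, ee i0, ee i1}, ?_, ?_⟩
  · rw [Finset.card_insert_of_notMem (by simp [zer_ne_ee]),
      Finset.card_insert_of_notMem (by simp [ee_ne_ee h01])]
    simp
  · rw [bd3_card]
    have hsub : ({zer, ee i0, ee i1} : Finset (V n)) ⊆ nb zer ∪ nb (ee i0) ∪ nb (ee i1) := by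
      intro x hx
      simp only [Finset.mem_insert, Finset.mem_singleton] at hx
      simp only [Finset.mem_union]
      rcases hx with rfl | rfl | rfl
      · exact Or.inl (Or.inr (zer_mem_nb_ee i0))
      · exact Or.inl (Or.inl (ee_mem_nb_zer i0))
      · exact Or.inl (Or.inl (ee_mem_nb_zer i1))
    rw [Finset.inter_eq_right.2 hsub, pair_zer_empty i0, pair_zer_empty i1,
      card_inter_nb_of_dist2 (dst_ee_ee h01),
      Finset.card_insert_of_notMem (by simp [zer_ne_ee]),
      Finset.card_insert_of_notMem (by simp [ee_ne_ee h01])]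
    simp
    omega

lemma bd_S4 (hn : 3 ≤ n) : ∃ F : Finset (V n), F.card = 4 ∧ ((bdF F).card : ℤ) = 4 * n - 9 := by
  obtain ⟨i0, i1, i2, h01, h02, h12⟩ := exists_three_fin hn
  refine ⟨{zer, ee i0, ee i1, ee i2}, ?_, ?_⟩
  · rw [Finset.card_insert_of_notMem (by simp [zer_ne_ee]),
      Finset.card_insert_of_notMem (by simp [ee_ne_ee h01, ee_ne_ee h02]),
      Finset.card_insert_of_notMem (by simp [ee_ne_ee h12])]
    simp
  · rw [bd4_card]
    have hsub : ({zer, ee i0, ee i1, ee i2} : Finset (V n)) ⊆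
        nb zer ∪ nb (ee i0) ∪ nb (ee i1) ∪ nb (ee i2) := by
      intro x hx
      simp only [Finset.mem_insert, Finset.mem_singleton] at hx
      simp only [Finset.mem_union]
      rcases hx with rfl | rfl | rfl | rfl
      · exact Or.inl (Or.inl (Or.inr (zer_mem_nb_ee i0)))
      · exact Or.inl (Or.inl (Or.inl (ee_mem_nb_zer i0)))
      · exact Or.inl (Or.inl (Or.inl (ee_mem_nb_zer i1)))
      · exact Or.inl (Or.inl (Or.inl (ee_mem_nb_zer i2)))
    rw [Finset.inter_eq_right.2 hsub, pair_zer_empty i0, pair_zer_empty i1, pair_zer_empty i2,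
      card_inter_nb_of_dist2 (dst_ee_ee h01),
      card_inter_nb_of_dist2 (dst_ee_ee h02),
      card_inter_nb_of_dist2 (dst_ee_ee h12),
      card_triple_inter (dst_ee_ee h01) (dst_ee_ee h02) (dst_ee_ee h12),
      Finset.card_insert_of_notMem (by simp [zer_ne_ee]),
      Finset.card_insert_of_notMem (by simp [ee_ne_ee h01, ee_ne_ee h02]),
      Finset.card_insert_of_notMem (by simp [ee_ne_ee h12])]
    simp
    omega

lemma dst_self (u : V n) : dst u u = 0 := by rw [dst, dset_self]; simp

lemma self_not_mem_nb (a : V n) : a ∉ nb a := by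
  rw [mem_nb, dst_self]; omega

lemma q_val {u v : V n} (hne : u ≠ v) :
    ((nb u ∩ nb v).card : ℤ) = if dst u v = 2 then 2 else 0 := by
  by_cases h : dst u v = 2
  · rw [card_inter_nb_of_dist2 h, if_pos h]; norm_num
  · rw [inter_nb_eq_empty hne h, if_neg h]; simp

lemma lower1 (F : Finset (V n)) (hF : F.card = 1) : (n : ℤ) ≤ ((bdF F).card : ℤ) := by
  obtain ⟨a, rfl⟩ := Finset.card_eq_one.1 hF
  rw [bd1_card]
  have h : nb a ∩ {a} = ∅ := by
    ext x
    simp only [Finset.mem_inter, Finset.mem_singleton, Finset.notMem_empty, iff_false]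
    rintro ⟨hx, rfl⟩
    exact self_not_mem_nb x hx
  rw [h]
  simp

lemma lower2 (F : Finset (V n)) (hF : F.card = 2) : (2 * n - 2 : ℤ) ≤ ((bdF F).card : ℤ) := by
  obtain ⟨a, b, hab, rfl⟩ := Finset.card_eq_two.1 hF
  rw [bd2_card]
  by_cases h : dst a b = 1
  · have hq := card_inter_nb_of_adj h
    have hs : (((nb a ∪ nb b) ∩ {a, b}).card : ℤ) ≤ 2 := by
      have h1 : ((nb a ∪ nb b) ∩ {a, b}).card ≤ ({a, b} : Finset (V n)).card :=
        Finset.card_le_card Finset.inter_subset_right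
      have h2 : ({a, b} : Finset (V n)).card ≤ 2 := by
        simpa using Finset.card_insert_le a {b}
      exact_mod_cast h1.trans h2
    rw [hq]
    push_cast
    linarith
  · have hs : (nb a ∪ nb b) ∩ {a, b} = ∅ := by
      ext x
      simp only [Finset.mem_inter, Finset.mem_union, mem_nb, Finset.mem_insert,
        Finset.mem_singleton, Finset.notMem_empty, iff_false]
      rintro ⟨hu | hu, rfl | rfl⟩
      · exact self_not_mem_nb _ (mem_nb.2 hu)
      · exact h hu
      · exact h (by rwa [dst_comm])
      · exact self_not_mem_nb _ (mem_nb.2 hu)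
    have hq : ((nb a ∩ nb b).card : ℤ) ≤ 2 := by
      exact_mod_cast card_inter_nb_le_two hab
    rw [hs]
    simp
    linarith

lemma union_inter_eq_empty₃ {a b c : V n}
    (h : ∀ u ∈ ({a, b, c} : Finset (V n)), ∀ v ∈ ({a, b, c} : Finset (V n)), dst u v ≠ 1) :
    (nb a ∪ nb b ∪ nb c) ∩ {a, b, c} = ∅ := by
  ext x
  simp only [Finset.mem_inter, Finset.mem_union, mem_nb, Finset.notMem_empty, iff_false]
  rintro ⟨(hx | hx) | hx, hm⟩
  · exact h a (by simp) x hm hx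
  · exact h b (by simp) x hm hx
  · exact h c (by simp) x hm hx

lemma t3_nonneg (A B C : Finset (V n)) : (0 : ℤ) ≤ ((A ∩ B ∩ C).card : ℤ) :=
  Int.natCast_nonneg _

lemma card3_le (a b c : V n) : (({a, b, c} : Finset (V n)).card : ℤ) ≤ 3 := by
  have h1 : ({a, b, c} : Finset (V n)).card ≤ ({b, c} : Finset (V n)).card + 1 :=
    Finset.card_insert_le _ _
  have h2 : ({b, c} : Finset (V n)).card ≤ 2 := by simpa using Finset.card_insert_le b {c}
  exact_mod_cast h1.trans (by omega)

lemma H3_adj {a b c : V n} (hab : a ≠ b) (hac : a ≠ c) (hbc : b ≠ c)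
    (h : dst a b = 1) : (3 * n - 5 : ℤ) ≤ ((bdF {a, b, c}).card : ℤ) := by
  rw [bd3_card]
  have hq1 := card_inter_nb_of_adj h
  have hs : (((nb a ∪ nb b ∪ nb c) ∩ {a, b, c}).card : ℤ) ≤ 3 :=
    le_trans (by exact_mod_cast Finset.card_le_card Finset.inter_subset_right) (card3_le a b c)
  have ht := t3_nonneg (nb a) (nb b) (nb c)
  have hpar := parity a c b
  have hq2 := q_val hac
  have hq3 := q_val hbc
  have hsum : ((nb a ∩ nb c).card : ℤ) + ((nb b ∩ nb c).card : ℤ) ≤ 2 := by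
    by_cases h2 : dst a c = 2
    · have h3 : dst b c ≠ 2 := by
        intro h3
        rw [h, h2, dst_comm c b, h3] at hpar
        omega
      rw [hq2, hq3, if_pos h2, if_neg h3]
      omega
    · rw [hq2, hq3, if_neg h2]
      split <;> omega
  rw [hq1]
  push_cast
  linarith

lemma H3_noadj {a b c : V n} (hab : a ≠ b) (hac : a ≠ c) (hbc : b ≠ c)
    (hno : ∀ u ∈ ({a, b, c} : Finset (V n)), ∀ v ∈ ({a, b, c} : Finset (V n)), dst u v ≠ 1) :
    (3 * n - 5 : ℤ) ≤ ((bdF {a, b, c}).card : ℤ) := by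
  rw [bd3_card, union_inter_eq_empty₃ hno]
  have hq1 := q_val hab
  have hq2 := q_val hac
  have hq3 := q_val hbc
  have ht := t3_nonneg (nb a) (nb b) (nb c)
  by_cases h1 : dst a b = 2 <;> by_cases h2 : dst a c = 2 <;> by_cases h3 : dst b c = 2
  · have htt := card_triple_inter h1 h2 h3
    rw [hq1, hq2, hq3, if_pos h1, if_pos h2, if_pos h3, htt]
    simp
    linarith
  all_goals
    rw [hq1, hq2, hq3]
    simp [h1, h2, h3]
    linarith

lemma lower3 (hn : 3 ≤ n) (F : Finset (V n)) (hF : F.card = 3) :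
    (3 * n - 5 : ℤ) ≤ ((bdF F).card : ℤ) := by
  obtain ⟨a, b, c, hab, hac, hbc, rfl⟩ := Finset.card_eq_three.1 hF
  have e1 : ({a, c, b} : Finset (V n)) = {a, b, c} := by ext x; simp; tauto
  have e2 : ({b, c, a} : Finset (V n)) = {a, b, c} := by ext x; simp; tauto
  by_cases h1 : dst a b = 1
  · exact H3_adj hab hac hbc h1
  by_cases h2 : dst a c = 1
  · rw [← e1]; exact H3_adj hac hab hbc.symm h2
  by_cases h3 : dst b c = 1
  · rw [← e2]; exact H3_adj hbc hab.symm hac.symm h3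
  · apply H3_noadj hab hac hbc
    intro u hu v hv
    have sym : ∀ x y : V n, dst x y ≠ 1 → dst y x ≠ 1 := fun x y h e => h (by rwa [dst_comm])
    simp only [Finset.mem_insert, Finset.mem_singleton] at hu hv
    rcases hu with rfl | rfl | rfl <;> rcases hv with rfl | rfl | rfl <;>
      first
        | (rw [dst_self]; omega)
        | exact h1
        | exact h2
        | exact h3
        | exact sym _ _ h1
        | exact sym _ _ h2
        | exact sym _ _ h3

lemma card_eq_four {α : Type*} [DecidableEq α] {F : Finset α} (hF : F.card = 4) :
    ∃ a b c d : α, a ≠ b ∧ a ≠ c ∧ a ≠ d ∧ b ≠ c ∧ b ≠ d ∧ c ≠ d ∧ F = {a, b, c, d} := by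
  obtain ⟨a, ha⟩ := Finset.card_pos.1 (by omega : 0 < F.card)
  have h3 : (F.erase a).card = 3 := by rw [Finset.card_erase_of_mem ha, hF]
  obtain ⟨b, c, d, hbc, hbd, hcd, he⟩ := Finset.card_eq_three.1 h3
  have hna : a ∉ F.erase a := Finset.notMem_erase a F
  rw [he] at hna
  simp only [Finset.mem_insert, Finset.mem_singleton, not_or] at hna
  exact ⟨a, b, c, d, hna.1, hna.2.1, hna.2.2, hbc, hbd, hcd, by
    rw [← Finset.insert_erase ha, he]⟩

lemma inter3_empty_12 {α : Type*} [DecidableEq α] {A B : Finset α} (C : Finset α)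
    (h : A ∩ B = ∅) : A ∩ B ∩ C = ∅ := by rw [h]; simp

lemma inter3_empty_23 {α : Type*} [DecidableEq α] {B C : Finset α} (A : Finset α)
    (h : B ∩ C = ∅) : A ∩ B ∩ C = ∅ := by
  ext x
  simp only [Finset.mem_inter, Finset.notMem_empty, iff_false]
  rintro ⟨⟨_, hb⟩, hc⟩
  have : x ∈ B ∩ C := Finset.mem_inter.2 ⟨hb, hc⟩
  simp [h] at this

lemma inter4_empty_12 {α : Type*} [DecidableEq α] {A B : Finset α} (C D : Finset α)
    (h : A ∩ B = ∅) : A ∩ B ∩ C ∩ D = ∅ := by rw [h]; simp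

lemma inter4_empty_34 {α : Type*} [DecidableEq α] {C D : Finset α} (A B : Finset α)
    (h : C ∩ D = ∅) : A ∩ B ∩ C ∩ D = ∅ := by
  ext x
  simp only [Finset.mem_inter, Finset.notMem_empty, iff_false]
  rintro ⟨⟨⟨_, _⟩, hc⟩, hd⟩
  have : x ∈ C ∩ D := Finset.mem_inter.2 ⟨hc, hd⟩
  simp [h] at this

lemma card4_le (a b c d : V n) : (({a, b, c, d} : Finset (V n)).card : ℤ) ≤ 4 := by
  have h1 : ({a, b, c, d} : Finset (V n)).card ≤ ({b, c, d} : Finset (V n)).card + 1 :=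
    Finset.card_insert_le _ _
  have h2 := card3_le b c d
  have h3 : (({a, b, c, d} : Finset (V n)).card : ℤ) ≤ (({b, c, d} : Finset (V n)).card : ℤ) + 1 := by
    exact_mod_cast h1
  linarith

lemma union_inter_eq_empty₄ {a b c d : V n}
    (h : ∀ u ∈ ({a, b, c, d} : Finset (V n)), ∀ v ∈ ({a, b, c, d} : Finset (V n)), dst u v ≠ 1) :
    (nb a ∪ nb b ∪ nb c ∪ nb d) ∩ {a, b, c, d} = ∅ := by
  ext x
  simp only [Finset.mem_inter, Finset.mem_union, mem_nb, Finset.notMem_empty, iff_false]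
  rintro ⟨((hx | hx) | hx) | hx, hm⟩
  · exact h a (by simp) x hm hx
  · exact h b (by simp) x hm hx
  · exact h c (by simp) x hm hx
  · exact h d (by simp) x hm hx

lemma H4_adj {a b c d : V n} (hab : a ≠ b) (hac : a ≠ c) (had : a ≠ d)
    (hbc : b ≠ c) (hbd : b ≠ d) (hcd : c ≠ d) (h : dst a b = 1) :
    (4 * n - 9 : ℤ) ≤ ((bdF {a, b, c, d}).card : ℤ) := by
  rw [bd4_card]
  have hpair : nb a ∩ nb b = ∅ := inter_nb_eq_empty hab (by omega)
  have hq1 : ((nb a ∩ nb b).card : ℤ) = 0 := by rw [hpair]; simp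
  have ht1 : ((nb a ∩ nb b ∩ nb c).card : ℤ) = 0 := by rw [inter3_empty_12 _ hpair]; simp
  have ht2 : ((nb a ∩ nb b ∩ nb d).card : ℤ) = 0 := by rw [inter3_empty_12 _ hpair]; simp
  have hquad : ((nb a ∩ nb b ∩ nb c ∩ nb d).card : ℤ) = 0 := by
    rw [inter4_empty_12 _ _ hpair]; simp
  have hs : (((nb a ∪ nb b ∪ nb c ∪ nb d) ∩ {a, b, c, d}).card : ℤ) ≤ 4 :=
    le_trans (by exact_mod_cast Finset.card_le_card Finset.inter_subset_right) (card4_le a b c d)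
  have ht3 := t3_nonneg (nb a) (nb c) (nb d)
  have ht4 := t3_nonneg (nb b) (nb c) (nb d)
  -- parity facts
  have hpc := parity a c b   -- dst a b % 2 = (dst a c + dst c b) % 2
  have hpd := parity a d b
  have hqac := q_val hac
  have hqad := q_val had
  have hqbc := q_val hbc
  have hqbd := q_val hbd
  have hqcd := q_val hcd
  by_cases h5 : dst c d = 2
  · by_cases h2 : dst a c = 2
    · -- dst b c ≠ 2 and dst b d ≠ 2  (parity through c, d)
      have hbc2 : dst b c ≠ 2 := by
        intro hx; rw [h, h2, dst_comm c b, hx] at hpc; omega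
      have hbd2 : dst b d ≠ 2 := by
        intro hx
        have hpad := parity a c d
        rw [h2, h5] at hpad
        rw [h, dst_comm d b, hx] at hpd
        omega
      by_cases h3 : dst a d = 2
      · have htt : ((nb a ∩ nb c ∩ nb d).card : ℤ) = 1 := by
          exact_mod_cast card_triple_inter h2 h3 h5
        rw [hq1, ht1, ht2, hquad, htt, hqac, hqad, hqbc, hqbd, hqcd,
          if_pos h2, if_pos h3, if_neg hbc2, if_neg hbd2, if_pos h5]
        linarith
      · rw [hq1, ht1, ht2, hquad, hqac, hqad, hqbc, hqbd, hqcd,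
          if_pos h2, if_neg h3, if_neg hbc2, if_neg hbd2, if_pos h5]
        linarith
    · by_cases h4 : dst b c = 2
      · have had2 : dst a d ≠ 2 := by
          intro hx
          have hpbd := parity b c d
          rw [h4, h5] at hpbd
          rw [h, dst_comm d b, hx] at hpd
          omega
        by_cases h6 : dst b d = 2
        · have htt : ((nb b ∩ nb c ∩ nb d).card : ℤ) = 1 := by
            exact_mod_cast card_triple_inter h4 h6 h5
          rw [hq1, ht1, ht2, hquad, htt, hqac, hqad, hqbc, hqbd, hqcd,
            if_neg h2, if_neg had2, if_pos h4, if_pos h6, if_pos h5]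
          linarith
        · rw [hq1, ht1, ht2, hquad, hqac, hqad, hqbc, hqbd, hqcd,
            if_neg h2, if_neg had2, if_pos h4, if_neg h6, if_pos h5]
          linarith
      · -- q_ac = q_bc = 0
        have hsum : ((nb a ∩ nb d).card : ℤ) + ((nb b ∩ nb d).card : ℤ) ≤ 2 := by
          by_cases h3 : dst a d = 2
          · have : dst b d ≠ 2 := by
              intro hx; rw [h, h3, dst_comm d b, hx] at hpd; omega
            rw [hqad, hqbd, if_pos h3, if_neg this]; omega
          · rw [hqad, hqbd, if_neg h3]; split <;> omega
        rw [hq1, ht1, ht2, hquad, hqac, hqbc, hqcd, if_neg h2, if_neg h4, if_pos h5]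
        linarith
  · -- dst c d ≠ 2 : P2 ≤ 4
    have hsum1 : ((nb a ∩ nb c).card : ℤ) + ((nb b ∩ nb c).card : ℤ) ≤ 2 := by
      by_cases h2 : dst a c = 2
      · have : dst b c ≠ 2 := by
          intro hx; rw [h, h2, dst_comm c b, hx] at hpc; omega
        rw [hqac, hqbc, if_pos h2, if_neg this]; omega
      · rw [hqac, hqbc, if_neg h2]; split <;> omega
    have hsum2 : ((nb a ∩ nb d).card : ℤ) + ((nb b ∩ nb d).card : ℤ) ≤ 2 := by
      by_cases h3 : dst a d = 2
      · have : dst b d ≠ 2 := by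
          intro hx; rw [h, h3, dst_comm d b, hx] at hpd; omega
        rw [hqad, hqbd, if_pos h3, if_neg this]; omega
      · rw [hqad, hqbd, if_neg h3]; split <;> omega
    rw [hq1, ht1, ht2, hquad, hqcd, if_neg h5]
    linarith

lemma q_le {u v : V n} (h : u ≠ v) : ((nb u ∩ nb v).card : ℤ) ≤ 2 := by
  exact_mod_cast card_inter_nb_le_two h

lemma H4_far {a b c d : V n} (hab : a ≠ b) (hac : a ≠ c) (had : a ≠ d)
    (hbc : b ≠ c) (hbd : b ≠ d) (hcd : c ≠ d)
    (hno : ∀ u ∈ ({a, b, c, d} : Finset (V n)), ∀ v ∈ ({a, b, c, d} : Finset (V n)), dst u v ≠ 1)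
    (h5 : dst c d ≠ 2) :
    (4 * n - 9 : ℤ) ≤ ((bdF {a, b, c, d}).card : ℤ) := by
  rw [bd4_card, union_inter_eq_empty₄ hno]
  simp only [Finset.card_empty, Nat.cast_zero]
  have hpcd : nb c ∩ nb d = ∅ := inter_nb_eq_empty hcd h5
  have hqcd : ((nb c ∩ nb d).card : ℤ) = 0 := by rw [hpcd]; simp
  have ht3 : ((nb a ∩ nb c ∩ nb d).card : ℤ) = 0 := by rw [inter3_empty_23 _ hpcd]; simp
  have ht4 : ((nb b ∩ nb c ∩ nb d).card : ℤ) = 0 := by rw [inter3_empty_23 _ hpcd]; simp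
  have hquad : ((nb a ∩ nb b ∩ nb c ∩ nb d).card : ℤ) = 0 := by
    rw [inter4_empty_34 _ _ hpcd]; simp
  have htn1 := t3_nonneg (nb a) (nb b) (nb c)
  have htn2 := t3_nonneg (nb a) (nb b) (nb d)
  rw [hqcd, ht3, ht4, hquad]
  by_cases hall : dst a b = 2 ∧ dst a c = 2 ∧ dst a d = 2 ∧ dst b c = 2 ∧ dst b d = 2
  · obtain ⟨h1, h2, h3, h4, h6⟩ := hall
    have e1 : ((nb a ∩ nb b ∩ nb c).card : ℤ) = 1 := by
      exact_mod_cast card_triple_inter h1 h2 h4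
    have e2 : ((nb a ∩ nb b ∩ nb d).card : ℤ) = 1 := by
      exact_mod_cast card_triple_inter h1 h3 h6
    rw [e1, e2, q_val hab, q_val hac, q_val had, q_val hbc, q_val hbd,
      if_pos h1, if_pos h2, if_pos h3, if_pos h4, if_pos h6]
    linarith
  · have hb1 := q_le hab
    have hb2 := q_le hac
    have hb3 := q_le had
    have hb4 := q_le hbc
    have hb5 := q_le hbd
    rw [not_and_or, not_and_or, not_and_or, not_and_or] at hall
    rcases hall with h | h | h | h | h
    · rw [q_val hab, if_neg h]; linarith
    · rw [q_val hac, if_neg h]; linarith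
    · rw [q_val had, if_neg h]; linarith
    · rw [q_val hbc, if_neg h]; linarith
    · rw [q_val hbd, if_neg h]; linarith

lemma H4_all2 {a b c d : V n} (hab : a ≠ b) (hac : a ≠ c) (had : a ≠ d)
    (hbc : b ≠ c) (hbd : b ≠ d) (hcd : c ≠ d)
    (h1 : dst a b = 2) (h2 : dst a c = 2) (h3 : dst a d = 2)
    (h4 : dst b c = 2) (h6 : dst b d = 2) (h5 : dst c d = 2) :
    (4 * n - 9 : ℤ) ≤ ((bdF {a, b, c, d}).card : ℤ) := by
  have hno : ∀ u ∈ ({a, b, c, d} : Finset (V n)), ∀ v ∈ ({a, b, c, d} : Finset (V n)),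
      dst u v ≠ 1 := by
    intro u hu v hv
    simp only [Finset.mem_insert, Finset.mem_singleton] at hu hv
    rcases hu with rfl | rfl | rfl | rfl <;> rcases hv with rfl | rfl | rfl | rfl <;>
      first
        | (rw [dst_self]; omega)
        | (rw [h1]; omega) | (rw [h2]; omega) | (rw [h3]; omega)
        | (rw [h4]; omega) | (rw [h5]; omega) | (rw [h6]; omega)
        | (rw [dst_comm, h1]; omega) | (rw [dst_comm, h2]; omega)
        | (rw [dst_comm, h3]; omega) | (rw [dst_comm, h4]; omega)
        | (rw [dst_comm, h5]; omega) | (rw [dst_comm, h6]; omega)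
  rw [bd4_card, union_inter_eq_empty₄ hno]
  simp only [Finset.card_empty, Nat.cast_zero]
  have e1 : ((nb a ∩ nb b ∩ nb c).card : ℤ) = 1 := by
    exact_mod_cast card_triple_inter h1 h2 h4
  have e2 : ((nb a ∩ nb b ∩ nb d).card : ℤ) = 1 := by
    exact_mod_cast card_triple_inter h1 h3 h6
  have e3 : ((nb a ∩ nb c ∩ nb d).card : ℤ) = 1 := by
    exact_mod_cast card_triple_inter h2 h3 h5
  have e4 : ((nb b ∩ nb c ∩ nb d).card : ℤ) = 1 := by
    exact_mod_cast card_triple_inter h4 h6 h5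
  have hq : ((nb a ∩ nb b ∩ nb c ∩ nb d).card : ℤ) ≤ 1 := by
    have hsub : nb a ∩ nb b ∩ nb c ∩ nb d ⊆ nb a ∩ nb b ∩ nb c := Finset.inter_subset_left
    have := Finset.card_le_card hsub
    have e1' : (nb a ∩ nb b ∩ nb c).card = 1 := card_triple_inter h1 h2 h4
    omega
  rw [e1, e2, e3, e4, card_inter_nb_of_dist2 h1, card_inter_nb_of_dist2 h2,
    card_inter_nb_of_dist2 h3, card_inter_nb_of_dist2 h4, card_inter_nb_of_dist2 h6,
    card_inter_nb_of_dist2 h5]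
  push_cast
  linarith


section
variable {α : Type*} [DecidableEq α]
lemma perm_acbd (a b c d : α) : ({a, c, b, d} : Finset α) = {a, b, c, d} := by
  ext x; simp; tauto
lemma perm_adbc (a b c d : α) : ({a, d, b, c} : Finset α) = {a, b, c, d} := by
  ext x; simp; tauto
lemma perm_bcad (a b c d : α) : ({b, c, a, d} : Finset α) = {a, b, c, d} := by
  ext x; simp; tauto
lemma perm_bdac (a b c d : α) : ({b, d, a, c} : Finset α) = {a, b, c, d} := by
  ext x; simp; tauto
lemma perm_cdab (a b c d : α) : ({c, d, a, b} : Finset α) = {a, b, c, d} := by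
  ext x; simp; tauto
end

set_option maxHeartbeats 1600000 in
lemma lower4 (F : Finset (V n)) (hF : F.card = 4) :
    (4 * n - 9 : ℤ) ≤ ((bdF F).card : ℤ) := by
  obtain ⟨a, b, c, d, hab, hac, had, hbc, hbd, hcd, rfl⟩ := card_eq_four hF
  have eacbd := perm_acbd a b c d
  have eadbc := perm_adbc a b c d
  have ebcad := perm_bcad a b c d
  have ebdac := perm_bdac a b c d
  have ecdab := perm_cdab a b c d
  by_cases p1 : dst a b = 1
  · exact H4_adj hab hac had hbc hbd hcd p1
  by_cases p2 : dst a c = 1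
  · rw [← eacbd]; exact H4_adj hac hab had hbc.symm hcd hbd p2
  by_cases p3 : dst a d = 1
  · rw [← eadbc]; exact H4_adj had hab hac hbd.symm hcd.symm hbc p3
  by_cases p4 : dst b c = 1
  · rw [← ebcad]; exact H4_adj hbc hab.symm hbd hac.symm hcd had p4
  by_cases p5 : dst b d = 1
  · rw [← ebdac]; exact H4_adj hbd hab.symm hbc had.symm hcd.symm hac p5
  by_cases p6 : dst c d = 1
  · rw [← ecdab]; exact H4_adj hcd hac.symm hbc.symm had.symm hbd.symm hab p6
  have sym : ∀ x y : V n, dst x y ≠ 1 → dst y x ≠ 1 := fun x y h e => h (by rwa [dst_comm])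
  have hno : ∀ u ∈ ({a, b, c, d} : Finset (V n)), ∀ v ∈ ({a, b, c, d} : Finset (V n)),
      dst u v ≠ 1 := by
    intro u hu v hv
    simp only [Finset.mem_insert, Finset.mem_singleton] at hu hv
    rcases hu with rfl | rfl | rfl | rfl <;> rcases hv with rfl | rfl | rfl | rfl <;>
      first
        | (rw [dst_self]; omega)
        | exact p1 | exact p2 | exact p3 | exact p4 | exact p5 | exact p6
        | exact sym _ _ p1 | exact sym _ _ p2 | exact sym _ _ p3
        | exact sym _ _ p4 | exact sym _ _ p5 | exact sym _ _ p6
  by_cases q6 : dst c d = 2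
  swap
  · exact H4_far hab hac had hbc hbd hcd hno q6
  by_cases q5 : dst b d = 2
  swap
  · rw [← eacbd]
    exact H4_far hac hab had hbc.symm hcd hbd
      (fun u hu v hv => hno u (eacbd ▸ hu) v (eacbd ▸ hv)) q5
  by_cases q4 : dst b c = 2
  swap
  · rw [← eadbc]
    exact H4_far had hab hac hbd.symm hcd.symm hbc
      (fun u hu v hv => hno u (eadbc ▸ hu) v (eadbc ▸ hv)) q4
  by_cases q3 : dst a d = 2
  swap
  · rw [← ebcad]
    exact H4_far hbc hab.symm hbd hac.symm hcd had
      (fun u hu v hv => hno u (ebcad ▸ hu) v (ebcad ▸ hv)) q3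
  by_cases q2 : dst a c = 2
  swap
  · rw [← ebdac]
    exact H4_far hbd hab.symm hbc had.symm hcd.symm hac
      (fun u hu v hv => hno u (ebdac ▸ hu) v (ebdac ▸ hv)) q2
  by_cases q1 : dst a b = 2
  swap
  · rw [← ecdab]
    exact H4_far hcd hac.symm hbc.symm had.symm hbd.symm hab
      (fun u hu v hv => hno u (ecdab ▸ hu) v (ecdab ▸ hv)) q1
  · exact H4_all2 hab hac had hbc hbd hcd q1 q2 q3 q4 q5 q6

lemma mem_bdF {F : Finset (V n)} {w : V n} :
    w ∈ bdF F ↔ w ∉ F ∧ ∃ u ∈ F, dst u w = 1 := by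
  simp only [bdF, Finset.mem_sdiff, Finset.mem_biUnion, mem_nb]
  tauto

lemma card_V : Fintype.card (V n) = 2 ^ n := by
  rw [Fintype.card_fun]
  simp

lemma step (S : Finset (V n)) (v : V n) (hv : v ∈ S) :
    ((bdF (S.erase v)).card : ℤ) + n - 2 * ((S.erase v).card : ℤ) ≤ ((bdF S).card : ℤ) := by
  set S' := S.erase v with hS'
  set A := S' ∩ nb v with hA
  set B := S' \ nb v with hB
  have hAB : A.card + B.card = S'.card := Finset.card_inter_add_card_sdiff S' (nb v)
  have hvS' : v ∉ S' := Finset.notMem_erase v S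
  -- X and Y
  set X := bdF S' \ {v} with hX
  set Y := nb v \ (S' ∪ bdF S') with hY
  have hXsub : X ⊆ bdF S := by
    intro w hw
    rw [hX, Finset.mem_sdiff, Finset.mem_singleton] at hw
    obtain ⟨hw1, hw2⟩ := hw
    rw [mem_bdF] at hw1 ⊢
    obtain ⟨hw3, u, hu, hdu⟩ := hw1
    refine ⟨?_, u, Finset.mem_of_mem_erase hu, hdu⟩
    intro hwS
    exact hw3 (Finset.mem_erase.2 ⟨hw2, hwS⟩)
  have hYsub : Y ⊆ bdF S := by
    intro w hw
    rw [hY, Finset.mem_sdiff, Finset.mem_union] at hw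
    obtain ⟨hw1, hw2⟩ := hw
    push_neg at hw2
    have hwv : w ≠ v := by
      rintro rfl
      exact self_not_mem_nb w hw1
    rw [mem_bdF]
    refine ⟨?_, v, hv, mem_nb.1 hw1⟩
    intro hwS
    exact hw2.1 (Finset.mem_erase.2 ⟨hwv, hwS⟩)
  have hdisj : Disjoint X Y := by
    rw [Finset.disjoint_left]
    intro w hwX hwY
    rw [hY, Finset.mem_sdiff, Finset.mem_union] at hwY
    rw [hX, Finset.mem_sdiff] at hwX
    exact hwY.2 (Or.inr hwX.1)
  have hcard : X.card + Y.card ≤ (bdF S).card := by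
    rw [← Finset.card_union_of_disjoint hdisj]
    exact Finset.card_le_card (Finset.union_subset hXsub hYsub)
  -- |Y| ≥ n - |A| - 2|B|
  have hYint : ((Y.card : ℤ)) = n - ((nb v ∩ (S' ∪ bdF S')).card : ℤ) := by
    rw [hY, card_sdiff_int, card_nb]
  have hsplit : ((nb v ∩ (S' ∪ bdF S')).card : ℤ) ≤
      ((nb v ∩ S').card : ℤ) + ((nb v ∩ bdF S').card : ℤ) := by
    have h1 : nb v ∩ (S' ∪ bdF S') = (nb v ∩ S') ∪ (nb v ∩ bdF S') :=
      Finset.inter_union_distrib_left _ _ _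
    rw [h1]
    exact_mod_cast Finset.card_union_le _ _
  have hAcard : (nb v ∩ S').card = A.card := by rw [hA, Finset.inter_comm]
  -- |nb v ∩ bdF S'| ≤ 2 |B|
  have hkey : (nb v ∩ bdF S').card ≤ 2 * B.card := by
    have hsub : nb v ∩ bdF S' ⊆ B.biUnion (fun u => nb v ∩ nb u) := by
      intro w hw
      rw [Finset.mem_inter, mem_bdF] at hw
      obtain ⟨hw1, hw2, u, hu, hdu⟩ := hw
      rw [Finset.mem_biUnion]
      have hwu : w ∈ nb u := mem_nb.2 hdu
      have huv : u ∉ nb v := by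
        intro huv
        have hne : v ≠ u := by
          rintro rfl
          exact self_not_mem_nb v huv
        have : nb v ∩ nb u = ∅ :=
          inter_nb_eq_empty hne (by have := mem_nb.1 huv; omega)
        have : w ∈ (∅ : Finset (V n)) := this ▸ Finset.mem_inter.2 ⟨hw1, hwu⟩
        simp at this
      exact ⟨u, Finset.mem_sdiff.2 ⟨hu, huv⟩, Finset.mem_inter.2 ⟨hw1, hwu⟩⟩
    calc (nb v ∩ bdF S').card ≤ (B.biUnion (fun u => nb v ∩ nb u)).card :=
          Finset.card_le_card hsub
      _ ≤ ∑ u ∈ B, (nb v ∩ nb u).card := Finset.card_biUnion_le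
      _ ≤ ∑ _u ∈ B, 2 := by
          apply Finset.sum_le_sum
          intro u hu
          have huS' : u ∈ S' := (Finset.mem_sdiff.1 hu).1
          have hne : v ≠ u := fun e => hvS' (e ▸ huS')
          exact card_inter_nb_le_two hne
      _ = 2 * B.card := by rw [Finset.sum_const, smul_eq_mul, mul_comm]
  by_cases hvbd : v ∈ bdF S'
  · have hXcard : X.card = (bdF S').card - 1 := by
      rw [hX, Finset.sdiff_singleton_eq_erase, Finset.card_erase_of_mem hvbd]
    have hA1 : 1 ≤ A.card := by
      rw [mem_bdF] at hvbd
      obtain ⟨_, u, hu, hdu⟩ := hvbd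
      have : u ∈ A := Finset.mem_inter.2 ⟨hu, mem_nb.2 (by rwa [dst_comm])⟩
      exact Finset.card_pos.2 ⟨u, this⟩
    have hbd1 : 1 ≤ (bdF S').card := by
      exact Finset.card_pos.2 ⟨v, hvbd⟩
    have h1 : ((X.card : ℤ)) = ((bdF S').card : ℤ) - 1 := by
      rw [hXcard]; omega
    omega
  · have hXcard : X.card = (bdF S').card := by
      rw [hX, Finset.sdiff_singleton_eq_erase, Finset.erase_eq_of_notMem hvbd]
    omega

lemma rec_ineq (hn : 3 ≤ n) (i : ℕ) :
    (n : ℤ) + (xMin (hypercube n) i : ℤ) - 2 * (i : ℤ) ≤ (xMin (hypercube n) (i + 1) : ℤ) := by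
  by_cases hle : i + 1 ≤ 2 ^ n
  · -- attained minimum for i+1
    have hne : {c | ∃ F : Finset (V n), F.card = i + 1 ∧ c = (bdF F).card}.Nonempty := by
      obtain ⟨F, _, hF⟩ := Finset.exists_subset_card_eq
        (show i + 1 ≤ (Finset.univ : Finset (V n)).card by rwa [Finset.card_univ, card_V])
      exact ⟨(bdF F).card, F, hF, rfl⟩
    have hmem := Nat.sInf_mem hne
    rw [← xMin_eq (i + 1)] at hmem
    obtain ⟨S, hScard, hSval⟩ := hmem
    have hSpos : 0 < S.card := by omega
    obtain ⟨v, hv⟩ := Finset.card_pos.1 hSpos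
    have hS'card : (S.erase v).card = i := by
      rw [Finset.card_erase_of_mem hv, hScard]
      omega
    have h1 : xMin (hypercube n) i ≤ (bdF (S.erase v)).card :=
      card_bdF_le_xMin _ hS'card
    have h2 := step S v hv
    rw [hS'card] at h2
    rw [hSval]
    have h1' : ((xMin (hypercube n) i : ℤ)) ≤ ((bdF (S.erase v)).card : ℤ) := by
      exact_mod_cast h1
    omega
  · -- i ≥ 2^n
    push_neg at hle
    have hipow : 2 ^ n ≤ i := by omega
    have hn2 : n < 2 ^ n := Nat.lt_two_pow_self
    have hxi : xMin (hypercube n) i = 0 := by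
      rcases eq_or_lt_of_le hipow with heq | hlt
      · rw [xMin_eq]
        apply Nat.sInf_eq_zero.2
        left
        refine ⟨Finset.univ, by rw [Finset.card_univ, card_V, heq], ?_⟩
        have : bdF (Finset.univ : Finset (V n)) = ∅ :=
          Finset.sdiff_eq_empty_iff_subset.2 (Finset.subset_univ _)
        rw [this]
        simp
      · rw [xMin_eq]
        apply Nat.sInf_eq_zero.2
        right
        rw [Set.eq_empty_iff_forall_notMem]
        rintro c ⟨F, hF, _⟩
        have := Finset.card_le_univ F
        rw [card_V] at this
        omega
    rw [hxi]
    have : (0 : ℤ) ≤ (xMin (hypercube n) (i + 1) : ℤ) := Int.natCast_nonneg _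
    omega

lemma xMin_eq_of (i : ℕ) (k : ℤ)
    (hub : ∃ F : Finset (V n), F.card = i ∧ ((bdF F).card : ℤ) = k)
    (hlb : ∀ F : Finset (V n), F.card = i → k ≤ ((bdF F).card : ℤ)) :
    ((xMin (hypercube n) i : ℤ)) = k := by
  obtain ⟨F, hF, hFk⟩ := hub
  have h1 : xMin (hypercube n) i ≤ (bdF F).card := card_bdF_le_xMin F hF
  have hne : {c | ∃ G : Finset (V n), G.card = i ∧ c = (bdF G).card}.Nonempty :=
    ⟨_, F, hF, rfl⟩
  have hmem := Nat.sInf_mem hne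
  rw [← xMin_eq i] at hmem
  obtain ⟨G, hG, hGval⟩ := hmem
  have h2 := hlb G hG
  rw [← hGval] at h2
  omega

end HC

/-- For `Q_n` (`n ≥ 3`): `x₁ = n`, `x₂ = 2n - 2`, `x₃ = 3n - 5`, `x₄ = 4n - 9`, and
`x_{i+1} ≥ n + x_i - 2i` for every `i ≥ 1`. -/
theorem hypercube_xMin (n : ℕ) (hn : 3 ≤ n) :
    xMin (hypercube n) 1 = n ∧
    xMin (hypercube n) 2 = 2 * n - 2 ∧
    xMin (hypercube n) 3 = 3 * n - 5 ∧
    xMin (hypercube n) 4 = 4 * n - 9 ∧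
    ∀ i : ℕ, 1 ≤ i →
      (n : ℤ) + (xMin (hypercube n) i : ℤ) - 2 * (i : ℤ) ≤
        (xMin (hypercube n) (i + 1) : ℤ) := by
  have h1 := HC.xMin_eq_of 1 (n : ℤ) HC.bd_S1 (fun F hF => HC.lower1 F hF)
  have h2 := HC.xMin_eq_of 2 (2 * n - 2 : ℤ) (HC.bd_S2 (by omega))
    (fun F hF => HC.lower2 F hF)
  have h3 := HC.xMin_eq_of 3 (3 * n - 5 : ℤ) (HC.bd_S3 hn)
    (fun F hF => HC.lower3 hn F hF)
  have h4 := HC.xMin_eq_of 4 (4 * n - 9 : ℤ) (HC.bd_S4 hn)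
    (fun F hF => HC.lower4 F hF)
  refine ⟨by omega, by omega, by omega, by omega, fun i _ => HC.rec_ineq hn i⟩
end
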